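/- arXiv:2201.03100 — 12 statements merged into one kernel-verified Lean document; each statement's English description precedes it below -/
import Mathlib

section
/- Let q be an odd prime power and let X be a Peisert-type graph of type (m,q). Then for every maximum clique C of X (a clique of the largest possible size), the characteristic vector of C in ℚ^(F_{q²}) lies in the ℚ-linear span of the characteristic vectors of the canonical cliques of X. (EKR-module property of Peisert-type graphs.) -/
/-!
View `F_{q²}` as a plane over `F_q`: `S` is the set of nonzero vectors on `m ≤ q` of its `q + 1`
lines through `0`. If a line `L` is not in `S`, distinct elements of a clique lie in distinct
cosets of `L`; so cliques have at most `q` elements, and a maximum clique `C` (of size `q`, since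
`F_q` is a clique) meets every coset of every such line exactly once. For `y ∉ C` the map
`x ↦ line through y - x` is then a bijection from `{x ∈ C | y - x ∉ S}` onto the `q + 1 - m`
missing lines, so `y - x ∈ S` for exactly `m - 1` elements `x ∈ C`. Hence
`∑_{x ∈ C} ∑_{L ⊆ S ∪ {0}} 1_{x + L} = q • 1_C + (m - 1)`, and the constant function is
`q⁻¹ ∑_b 1_{b + L₀}` for any line `L₀`.
-/

open Finset Module
open scoped LinearAlgebra.Projectivization Pointwise

section Transversal

variable {R M : Type*} [Ring R] [AddCommGroup M] [Module R M] (p : Submodule R M)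
  {C : Finset M}

theorem Submodule.injective_mkQ_comp_val (hC : (C : Set M).Pairwise fun x y => x - y ∉ p) :
    Function.Injective (p.mkQ ∘ Subtype.val : C → M ⧸ p) := by
  intro x y hxy
  by_contra hne
  exact hC x.2 y.2 (Subtype.coe_ne_coe.2 hne) ((Submodule.Quotient.eq p).1 hxy)

theorem Submodule.card_le_natCard_quotient [Finite (M ⧸ p)]
    (hC : (C : Set M).Pairwise fun x y => x - y ∉ p) : #C ≤ Nat.card (M ⧸ p) := by
  simpa using Nat.card_le_card_of_injective _ (p.injective_mkQ_comp_val hC)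

theorem Submodule.exists_sub_mem_of_card_eq [Finite (M ⧸ p)]
    (hC : (C : Set M).Pairwise fun x y => x - y ∉ p) (hcard : #C = Nat.card (M ⧸ p)) (y : M) :
    ∃ x ∈ C, y - x ∈ p := by
  have hbij := (p.injective_mkQ_comp_val hC).bijective_of_nat_card_le (by simp [hcard])
  obtain ⟨x, hx⟩ := hbij.2 (p.mkQ y)
  exact ⟨x, x.2, (Submodule.Quotient.eq p).1 hx.symm⟩

end Transversal

theorem sum_indicator_vadd_apply {G : Type*} [AddGroup G] [Fintype G] (s : Set G) (y : G) :
    (∑ b : G, (b +ᵥ s).indicator (1 : G → ℚ)) y = Nat.card s := by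
  classical
  simp only [Finset.sum_apply, Set.indicator_apply, Set.mem_vadd_set_iff_neg_vadd_mem,
    vadd_eq_add, Pi.one_apply, Finset.sum_boole]
  rw [← Fintype.card_subtype, ← Nat.card_eq_fintype_card]
  exact congrArg _ (Nat.card_congr
    (((Equiv.neg G).trans (Equiv.addRight y)).subtypeEquiv fun _ => Iff.rfl))

namespace Projectivization

variable {K V : Type*} [Field K] [AddCommGroup V] [Module K V]

theorem mem_submodule_iff_mk_eq {v : V} (hv : v ≠ 0) (L : ℙ K V) :
    v ∈ L.submodule ↔ mk K v hv = L := by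
  induction L using ind with | h w hw =>
  rw [submodule_mk, Submodule.mem_span_singleton, mk_eq_mk_iff']

def cone (𝓢 : Finset (ℙ K V)) : Set V := {v | v ≠ 0 ∧ ∃ L ∈ 𝓢, v ∈ L.submodule}

variable {𝓢 : Finset (ℙ K V)}

theorem mem_cone_iff {v : V} (hv : v ≠ 0) : v ∈ cone 𝓢 ↔ mk K v hv ∈ 𝓢 := by
  simp only [cone, Set.mem_ofPred_eq, mem_submodule_iff_mk_eq hv]
  exact ⟨fun ⟨_, L, hL, h⟩ => h ▸ hL, fun h => ⟨hv, _, h, rfl⟩⟩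

theorem mem_of_mem_cone_of_mem_submodule {v : V} {L : ℙ K V} (hv : v ∈ cone 𝓢)
    (hL : v ∈ L.submodule) : L ∈ 𝓢 := by
  rw [mem_submodule_iff_mk_eq hv.1] at hL
  exact hL ▸ (mem_cone_iff hv.1).1 hv

theorem neg_mem_cone {v : V} (hv : v ∈ cone 𝓢) : -v ∈ cone 𝓢 := by
  obtain ⟨hv0, L, hL, hvL⟩ := hv
  exact ⟨neg_ne_zero.2 hv0, L, hL, neg_mem hvL⟩

def cayleyGraph (𝓢 : Finset (ℙ K V)) : SimpleGraph V where
  Adj x y := x - y ∈ cone 𝓢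
  symm := ⟨fun x y h => by simpa using neg_mem_cone h⟩
  loopless := ⟨fun x h => h.1 (sub_self x)⟩

open Classical in
theorem card_filter_mem_submodule (𝓢 : Finset (ℙ K V)) (v : V) :
    #{L ∈ 𝓢 | v ∈ L.submodule} =
      if v = 0 then #𝓢 else if v ∈ cone 𝓢 then 1 else 0 := by
  split_ifs with hv0 hv <;> try rw [mem_cone_iff hv0] at hv
  · simp [hv0]
  all_goals
    rw [Finset.filter_congr fun L _ => mem_submodule_iff_mk_eq hv0 L, Finset.filter_eq]
    simp_all

theorem pairwise_sub_notMem_submodule_of_isClique {s : Set V}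
    (hs : (cayleyGraph 𝓢).IsClique s) {L : ℙ K V} (hL : L ∉ 𝓢) :
    s.Pairwise fun x y => x - y ∉ L.submodule :=
  fun _ hx _ hy hne hmem => hL (mem_of_mem_cone_of_mem_submodule (hs hx hy hne) hmem)

theorem isClique_submodule {L : ℙ K V} (hL : L ∈ 𝓢) :
    (cayleyGraph 𝓢).IsClique (L.submodule : Set V) :=
  fun _ hx _ hy hne => ⟨sub_ne_zero.2 hne, L, hL, sub_mem hx hy⟩

open Classical in
theorem sum_indicator_vadd_submodule_apply (C : Finset V) (𝓢 : Finset (ℙ K V)) (y : V) :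
    (∑ x ∈ C, ∑ L ∈ 𝓢, (x +ᵥ (L.submodule : Set V)).indicator (1 : V → ℚ)) y =
      ∑ x ∈ C, (#{L ∈ 𝓢 | y - x ∈ L.submodule} : ℚ) := by
  simp only [Finset.sum_apply, Set.indicator_apply, Set.mem_vadd_set_iff_neg_vadd_mem,
    vadd_eq_add, neg_add_eq_sub, SetLike.mem_coe, Pi.one_apply, Finset.sum_boole]

theorem natCard_submodule (L : ℙ K V) : Nat.card L.submodule = Nat.card K := by
  rw [natCard_eq_pow_finrank (K := K), finrank_submodule, pow_one]

theorem natCard_quotient_submodule (hV : finrank K V = 2) (L : ℙ K V) :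
    Nat.card (V ⧸ L.submodule) = Nat.card K := by
  have := Module.finite_of_finrank_eq_succ hV
  have h := Submodule.finrank_quotient_add_finrank L.submodule
  rw [finrank_submodule, hV] at h
  rw [natCard_eq_pow_finrank (K := K), show finrank K (V ⧸ L.submodule) = 1 by omega, pow_one]

variable [Finite K] {C : Finset V}

theorem finite_quotient_submodule (hV : finrank K V = 2) (L : ℙ K V) :
    Finite (V ⧸ L.submodule) :=
  Nat.finite_of_card_ne_zero (natCard_quotient_submodule hV L ▸ Nat.card_pos.ne')

theorem card_le_of_isClique (hV : finrank K V = 2) (hC : (cayleyGraph 𝓢).IsClique (C : Set V))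
    {L : ℙ K V} (hL : L ∉ 𝓢) : #C ≤ Nat.card K :=
  have := finite_quotient_submodule hV L
  natCard_quotient_submodule hV L ▸
    L.submodule.card_le_natCard_quotient (pairwise_sub_notMem_submodule_of_isClique hC hL)

theorem exists_sub_mem_submodule_of_isClique (hV : finrank K V = 2)
    (hC : (cayleyGraph 𝓢).IsClique (C : Set V)) (hcard : #C = Nat.card K) {L : ℙ K V}
    (hL : L ∉ 𝓢) (y : V) :
    ∃ x ∈ C, y - x ∈ L.submodule :=
  have := finite_quotient_submodule hV L
  L.submodule.exists_sub_mem_of_card_eq (pairwise_sub_notMem_submodule_of_isClique hC hL)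
    (hcard.trans (natCard_quotient_submodule hV L).symm) y

theorem card_eq_of_isMaximumClique [Finite V] (hV : finrank K V = 2) (h𝓢 : #𝓢 ≤ Nat.card K)
    {L₀ : ℙ K V} (hL₀ : L₀ ∈ 𝓢) (hC : (cayleyGraph 𝓢).IsMaximumClique C) :
    #C = Nat.card K := by
  classical
  have := Fintype.ofFinite (ℙ K V)
  obtain ⟨L, hL⟩ : ∃ L, L ∉ 𝓢 := by
    by_contra! hall
    have := card_of_finrank_two K V hV
    rw [Nat.card_eq_fintype_card, ← card_univ, ← eq_univ_of_forall hall] at this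
    omega
  have := Fintype.ofFinite V
  refine le_antisymm (card_le_of_isClique hV hC.isClique hL) ?_
  calc Nat.card K = #(L₀.submodule : Set V).toFinset := by
        rw [Set.toFinset_card, ← Nat.card_eq_fintype_card, SetLike.coe_sort_coe,
          natCard_submodule]
    _ ≤ #C := hC.maximum _ (by simpa using isClique_submodule hL₀)

open Classical in
theorem card_filter_sub_notMem_cone_add_card (hV : finrank K V = 2)
    (hC : (cayleyGraph 𝓢).IsClique (C : Set V)) (hcard : #C = Nat.card K) {y : V}
    (hy : y ∉ C) :
    #{x ∈ C | y - x ∉ cone 𝓢} + #𝓢 = Nat.card K + 1 := by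
  have := Module.finite_of_finrank_eq_succ hV
  have := Module.finite_of_finite K (M := V)
  have := Fintype.ofFinite (ℙ K V)
  have hne : ∀ x ∈ C, y - x ≠ 0 := fun x hx h => hy (sub_eq_zero.1 h ▸ hx)
  rw [← card_of_finrank_two K V hV, Nat.card_eq_fintype_card, ← card_compl_add_card 𝓢]
  congr 1
  refine card_bij (fun x hx => mk K (y - x) (hne x (mem_filter.1 hx).1)) ?_ ?_ ?_
  · intro x hx
    simpa [mem_cone_iff (hne x (mem_filter.1 hx).1)] using (mem_filter.1 hx).2
  · -- if `y - x₁` and `y - x₂` lie on the same missing line, so does `x₁ - x₂`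
    intro x₁ hx₁ x₂ hx₂ h
    by_contra hne₁₂
    obtain ⟨hx₁C, hx₁S⟩ := mem_filter.1 hx₁
    obtain ⟨hx₂C, -⟩ := mem_filter.1 hx₂
    rw [mem_cone_iff (hne x₁ hx₁C)] at hx₁S
    have h₁ := (mem_submodule_iff_mk_eq (K := K) (hne x₁ hx₁C) _).2 rfl
    have h₂ := (mem_submodule_iff_mk_eq (hne x₂ hx₂C) _).2 h.symm
    refine pairwise_sub_notMem_submodule_of_isClique hC hx₁S hx₁C hx₂C hne₁₂ ?_
    simpa using sub_mem h₂ h₁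
  · intro L hL
    obtain ⟨x, hx, hxL⟩ := exists_sub_mem_submodule_of_isClique hV hC hcard (mem_compl.1 hL) y
    have hxS : y - x ∉ cone 𝓢 :=
      fun h => mem_compl.1 hL (mem_of_mem_cone_of_mem_submodule h hxL)
    exact ⟨x, mem_filter.2 ⟨hx, hxS⟩, (mem_submodule_iff_mk_eq _ L).1 hxL⟩

theorem sum_indicator_vadd_submodule_apply_of_isClique [DecidableEq V] (hV : finrank K V = 2)
    (hC : (cayleyGraph 𝓢).IsClique (C : Set V)) (hcard : #C = Nat.card K) (y : V) :
    (∑ x ∈ C, ∑ L ∈ 𝓢, (x +ᵥ (L.submodule : Set V)).indicator (1 : V → ℚ)) y =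
      (if y ∈ C then (Nat.card K : ℚ) else 0) + #𝓢 - 1 := by
  classical
  simp only [sum_indicator_vadd_submodule_apply, card_filter_mem_submodule, sub_eq_zero]
  split_ifs with hy
  · have hcone : ∀ x ∈ C.erase y, y - x ∈ cone 𝓢 :=
      fun x hx => hC hy (mem_of_mem_erase hx) (ne_of_mem_erase hx).symm
    have hcount : (#(C.erase y) : ℚ) + 1 = Nat.card K := by
      exact_mod_cast (card_erase_add_one hy).trans hcard
    rw [← add_sum_erase _ _ hy, sum_congr rfl fun x hx => by
      rw [if_neg (ne_of_mem_erase hx).symm, if_pos (hcone x hx)]]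
    simp only [↓reduceIte, sum_const, nsmul_eq_mul, Nat.cast_one, mul_one]
    linarith
  · have hcount : #{x ∈ C | y - x ∈ cone 𝓢} + 1 = #𝓢 := by
      have h₁ := card_filter_sub_notMem_cone_add_card hV hC hcard hy
      have h₂ := card_filter_add_card_filter_not (s := C) fun x => y - x ∈ cone 𝓢
      omega
    rw [sum_congr rfl fun x hx => by rw [if_neg fun h : y = x => hy (h ▸ hx)]]
    simp only [apply_ite (Nat.cast : ℕ → ℚ), Nat.cast_one, Nat.cast_zero, sum_boole,
      ← hcount]
    push_cast
    ring

theorem indicator_eq_of_isClique [Fintype V] (hV : finrank K V = 2)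
    (hC : (cayleyGraph 𝓢).IsClique (C : Set V)) (hcard : #C = Nat.card K) (L₀ : ℙ K V) :
    (C : Set V).indicator (1 : V → ℚ) = (Nat.card K : ℚ)⁻¹ •
      (∑ x ∈ C, ∑ L ∈ 𝓢, (x +ᵥ (L.submodule : Set V)).indicator 1 -
        ((#𝓢 - 1) / Nat.card K : ℚ) •
          ∑ b : V, (b +ᵥ (L₀.submodule : Set V)).indicator 1) := by
  classical
  have hq : (Nat.card K : ℚ) ≠ 0 := by exact_mod_cast Nat.card_pos.ne'
  funext y
  simp only [Pi.smul_apply, Pi.sub_apply, smul_eq_mul,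
    sum_indicator_vadd_submodule_apply_of_isClique hV hC hcard y, sum_indicator_vadd_apply,
    SetLike.coe_sort_coe, natCard_submodule, Set.indicator_apply, Finset.mem_coe, Pi.one_apply]
  split_ifs <;> field_simp <;> ring

theorem indicator_mem_span_of_isMaximumClique [Fintype V] (hV : finrank K V = 2)
    (h𝓢 : #𝓢 ≤ Nat.card K) {L₀ : ℙ K V} (hL₀ : L₀ ∈ 𝓢)
    (hC : (cayleyGraph 𝓢).IsMaximumClique C) :
    (C : Set V).indicator (1 : V → ℚ) ∈ Submodule.span ℚ
      {f | ∃ L ∈ 𝓢, ∃ b : V, f = (b +ᵥ (L.submodule : Set V)).indicator 1} := by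
  rw [indicator_eq_of_isClique hV hC.isClique (card_eq_of_isMaximumClique hV h𝓢 hL₀ hC) L₀]
  refine Submodule.smul_mem _ _ (sub_mem ?_ (Submodule.smul_mem _ _ ?_))
  · exact sum_mem fun x _ => sum_mem fun L hL => Submodule.subset_span ⟨L, hL, x, rfl⟩
  · exact sum_mem fun b _ => Submodule.subset_span ⟨L₀, hL₀, b, rfl⟩

end Projectivization

namespace Subfield

open Projectivization

variable {F : Type*} [Field F] (K : Subfield F)

theorem finrank_eq_two_of_natCard_eq [Finite F] (h : Nat.card F = Nat.card K ^ 2) :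
    finrank K F = 2 :=
  Nat.pow_right_injective (Finite.one_lt_card (α := K)) <| by
    simp only [← natCard_eq_pow_finrank, h]

theorem vadd_span_singleton_eq (a b : F) :
    b +ᵥ ((K ∙ a : Submodule K F) : Set F) = {x | ∃ k ∈ (K : Set F), x = a * k + b} := by
  ext x
  simp only [Set.mem_vadd_set_iff_neg_vadd_mem, vadd_eq_add, SetLike.mem_coe,
    Submodule.mem_span_singleton, Subfield.smul_def, smul_eq_mul, Set.mem_ofPred_eq]
  constructor
  · rintro ⟨k, hk⟩
    exact ⟨k, k.2, by linear_combination -hk⟩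
  · rintro ⟨k, hk, rfl⟩
    exact ⟨⟨k, hk⟩, by dsimp only; ring⟩

theorem cone_image_mk_eq [DecidableEq (ℙ K F)] {ι : Type*} [Fintype ι] (c : ι → F)
    (hc : ∀ i, c i ≠ 0) :
    cone (univ.image fun i => Projectivization.mk K (c i) (hc i) : Finset (ℙ K F)) =
      ⋃ i, {x | ∃ k ∈ (K : Set F), k ≠ 0 ∧ x = c i * k} := by
  ext x
  simp only [cone, mem_image, mem_univ, true_and, Set.mem_iUnion, exists_exists_eq_and,
    submodule_mk, Submodule.mem_span_singleton, Subfield.smul_def, smul_eq_mul,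
    Set.mem_ofPred_eq, SetLike.mem_coe]
  constructor
  · rintro ⟨hx, i, k, rfl⟩
    exact ⟨i, k, k.2, fun hk => hx (by simp [hk]), mul_comm _ _⟩
  · rintro ⟨i, k, hk, hk0, rfl⟩
    exact ⟨mul_ne_zero (hc i) hk0, i, ⟨k, hk⟩, mul_comm _ _⟩

end Subfield

open Projectivization

theorem stmt_0_general
    (q m : ℕ) (hm : m ≤ q)
    (F : Type) [Field F] [Fintype F] [DecidableEq F]
    (hF : Fintype.card F = q ^ 2)
    (K : Subfield F) (hK : Nat.card K = q)
    (c : Fin m → F) (hc : ∀ i, c i ≠ 0)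
    (S : Set F)
    (hS : S = ⋃ i : Fin m, {x : F | ∃ k ∈ (K : Set F), k ≠ 0 ∧ x = c i * k})
    (hKS : ∀ k : F, k ∈ K → k ≠ 0 → k ∈ S)
    (X : SimpleGraph F)
    (hX : ∀ x y : F, X.Adj x y ↔ x ≠ y ∧ x - y ∈ S)
    (C : Finset F) (hC : X.IsClique (C : Set F))
    (hCmax : ∀ D : Finset F, X.IsClique (D : Set F) → D.card ≤ C.card) :
    (fun x : F => if x ∈ C then (1 : ℚ) else 0) ∈
      Submodule.span ℚ
        {f : F → ℚ | ∃ a ∈ S, ∃ b : F,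
          f = Set.indicator {x : F | ∃ k ∈ (K : Set F), x = a * k + b}
                (fun _ => (1 : ℚ))} := by
  classical
  set 𝓢 : Finset (ℙ K F) := univ.image fun i => mk K (c i) (hc i)
  have hS𝓢 : S = cone 𝓢 := hS.trans (K.cone_image_mk_eq c hc).symm
  have hX𝓢 : X = cayleyGraph 𝓢 := by
    ext x y
    rw [hX, hS𝓢]
    exact ⟨And.right, fun h => ⟨sub_ne_zero.1 h.1, h⟩⟩
  have hV : finrank K F = 2 :=
    K.finrank_eq_two_of_natCard_eq (by rw [Nat.card_eq_fintype_card, hF, hK])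
  have h𝓢 : #𝓢 ≤ Nat.card K :=
    card_image_le.trans (by rwa [card_univ, Fintype.card_fin, hK])
  obtain ⟨-, L₀, hL₀, -⟩ : (1 : F) ∈ cone 𝓢 := hS𝓢 ▸ hKS 1 K.one_mem one_ne_zero
  have hspan := indicator_mem_span_of_isMaximumClique hV h𝓢 hL₀
    (hX𝓢 ▸ ⟨hC, hCmax⟩ : (cayleyGraph 𝓢).IsMaximumClique C)
  convert Submodule.span_mono ?_ hspan using 1
  · ext x
    simp [Set.indicator_apply]
  · rintro f ⟨L, hL, b, rfl⟩
    obtain ⟨i, -, rfl⟩ := mem_image.1 hL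
    refine ⟨c i, hS𝓢 ▸ ⟨hc i, _, hL, Submodule.mem_span_singleton_self _⟩, b, ?_⟩
    rw [submodule_mk, K.vadd_span_singleton_eq]
    rfl

/-- EKR-module property of Peisert-type graphs: the characteristic vector of every
maximum clique lies in the ℚ-span of the characteristic vectors of canonical cliques. -/
theorem stmt_0
    (q m : ℕ) (hqodd : Odd q) (hqpp : IsPrimePow q) (hm : m ≤ q)
    (F : Type) [Field F] [Fintype F] [DecidableEq F]
    (hF : Fintype.card F = q ^ 2)
    (K : Subfield F) (hK : Nat.card K = q)
    (c : Fin m → F) (hc : ∀ i, c i ≠ 0)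
    (hdistinct : ∀ i j : Fin m, i ≠ j → c i / c j ∉ K)
    (S : Set F)
    (hS : S = ⋃ i : Fin m, {x : F | ∃ k ∈ (K : Set F), k ≠ 0 ∧ x = c i * k})
    (hKS : ∀ k : F, k ∈ K → k ≠ 0 → k ∈ S)
    (X : SimpleGraph F)
    (hX : ∀ x y : F, X.Adj x y ↔ x ≠ y ∧ x - y ∈ S)
    (C : Finset F) (hC : X.IsClique (C : Set F))
    (hCmax : ∀ D : Finset F, X.IsClique (D : Set F) → D.card ≤ C.card) :
    (fun x : F => if x ∈ C then (1 : ℚ) else 0) ∈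
      Submodule.span ℚ
        {f : F → ℚ | ∃ a ∈ S, ∃ b : F,
          f = Set.indicator {x : F | ∃ k ∈ (K : Set F), x = a * k + b}
                (fun _ => (1 : ℚ))} :=
  stmt_0_general q m hm F hF K hK c hc S hS hKS X hX C hC hCmax
end

section
/- Let q be an odd prime power and let X be a Peisert-type graph of type (m,q). Then there exists an orthogonal array A : Fin m × Fin (q²) → Fin q and a graph isomorphism φ from the block graph of A to X such that for every subset D of columns, D is a canonical clique of the block graph of A if and only if φ(D) is a canonical clique of X; in particular φ induces a one-to-one correspondence between canonical cliques of the block graph and canonical cliques of X. -/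
/-!
Write `W r = c r • K` for the `m` lines of `F ≅ K²` whose nonzero points form the connection
set `S`. Two distinct lines meet only in `0`, and each has index `q` in `F`, which has `q²`
elements. Labelling the cosets of each `W r` by `Fin q`, the row-`r` entry of the column
`x ∈ F` is the coset `x + W r`; distinct lines being complementary, any two rows determine the
column, so this is an orthogonal array. Two columns share an entry in row `r` exactly when
their difference lies in `W r`, so its block graph is the Cayley graph `X`, and its canonical
cliques (the fibres of a row) are exactly the cosets `b + a K`, `a ∈ S`.
-/

/-- An orthogonal array `OA(m,n)`: any two distinct rows induce a bijection from
columns to pairs of entries. -/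
def IsOrthogonalArray (m n : ℕ) (A : Fin m × Fin (n ^ 2) → Fin n) : Prop :=
  ∀ r s : Fin m, r ≠ s →
    Function.Bijective fun col : Fin (n ^ 2) => (A (r, col), A (s, col))

/-- The block graph of an orthogonal array: distinct columns are adjacent iff they
share an entry in some row. -/
def blockGraph {m n : ℕ} (A : Fin m × Fin (n ^ 2) → Fin n) : SimpleGraph (Fin (n ^ 2)) :=
  SimpleGraph.fromRel fun col col' => ∃ r : Fin m, A (r, col) = A (r, col')

open QuotientAddGroup

section QuotientArray

variable {V : Type*} [AddCommGroup V] {m n : ℕ}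

lemma card_quotient_eq_of_card_eq_sq [Finite V] {W : AddSubgroup V}
    (hV : Nat.card V = n ^ 2) (hW : Nat.card W = n) : Nat.card (V ⧸ W) = n := by
  have hn : 0 < n := by
    have := Nat.card_pos (α := V)
    rw [hV] at this
    exact pos_of_ne_zero (by rintro rfl; simp at this)
  have h := W.card_eq_card_quotient_mul_card_addSubgroup
  rw [hV, hW, sq] at h
  exact (Nat.eq_of_mul_eq_mul_right hn h).symm

def quotientArray (W : Fin m → AddSubgroup V) (e : Fin (n ^ 2) ≃ V)
    (π : ∀ r, V ⧸ W r ≃ Fin n) : Fin m × Fin (n ^ 2) → Fin n :=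
  fun p => π p.1 (e p.2)

variable {W : Fin m → AddSubgroup V} {e : Fin (n ^ 2) ≃ V} {π : ∀ r, V ⧸ W r ≃ Fin n}

lemma quotientArray_eq_iff (r : Fin m) (col col' : Fin (n ^ 2)) :
    quotientArray W e π (r, col) = quotientArray W e π (r, col') ↔ e col - e col' ∈ W r := by
  simp only [quotientArray, (π r).apply_eq_iff_eq, eq_iff_sub_mem]

lemma isOrthogonalArray_quotientArray (hW : ∀ r s, r ≠ s → W r ⊓ W s = ⊥) :
    IsOrthogonalArray m n (quotientArray W e π) := by
  intro r s hrs
  rw [Fintype.bijective_iff_injective_and_card]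
  refine ⟨fun col col' h => ?_, by simp [sq]⟩
  simp only [Prod.mk.injEq, quotientArray_eq_iff] at h
  have hmem : e col - e col' ∈ W r ⊓ W s := ⟨h.1, h.2⟩
  rw [hW r s hrs, AddSubgroup.mem_bot, sub_eq_zero] at hmem
  exact e.injective hmem

lemma blockGraph_quotientArray_adj_iff (col col' : Fin (n ^ 2)) :
    (blockGraph (quotientArray W e π)).Adj col col' ↔
      e col ≠ e col' ∧ ∃ r, e col - e col' ∈ W r := by
  simp only [blockGraph, SimpleGraph.fromRel_adj, quotientArray_eq_iff, e.injective.ne_iff]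
  refine and_congr_right fun _ => ⟨?_, Or.inl⟩
  rintro (h | ⟨r, hr⟩)
  · exact h
  · exact ⟨r, by simpa using (W r).neg_mem hr⟩

def quotientArrayIso {G : SimpleGraph V} (hG : ∀ x y, G.Adj x y ↔ x ≠ y ∧ ∃ r, x - y ∈ W r) :
    blockGraph (quotientArray W e π) ≃g G :=
  ⟨e, fun {col col'} => by rw [hG, blockGraph_quotientArray_adj_iff]⟩

lemma coe_quotientArrayIso {G : SimpleGraph V}
    (hG : ∀ x y, G.Adj x y ↔ x ≠ y ∧ ∃ r, x - y ∈ W r) :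
    ⇑(quotientArrayIso (e := e) (π := π) hG) = e :=
  rfl

lemma image_setOf_quotientArray_eq (r : Fin m) (i : Fin n) :
    e '' {col | quotientArray W e π (r, col) = i} = {x : V | (x : V ⧸ W r) = (π r).symm i} := by
  ext x
  simp only [Set.mem_image, Set.mem_ofPred_eq, quotientArray, Equiv.eq_symm_apply]
  exact ⟨fun ⟨col, hcol, hx⟩ => hx ▸ hcol, fun hx => ⟨e.symm x, by simpa using hx, by simp⟩⟩

lemma exists_eq_setOf_quotientArray_iff (D : Set (Fin (n ^ 2))) :
    (∃ r i, D = {col | quotientArray W e π (r, col) = i}) ↔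
      ∃ r, ∃ b : V ⧸ W r, e '' D = {x : V | (x : V ⧸ W r) = b} := by
  constructor
  · rintro ⟨r, i, rfl⟩
    exact ⟨r, _, image_setOf_quotientArray_eq r i⟩
  · rintro ⟨r, b, hD⟩
    refine ⟨r, π r b, Set.image_injective.mpr e.injective ?_⟩
    rw [hD, image_setOf_quotientArray_eq, Equiv.symm_apply_apply]

end QuotientArray

section Peisert

variable {F : Type*} [Field F] (K : Subfield F)

def lineThrough (a : F) : AddSubgroup F :=
  K.toAddSubgroup.map (AddMonoidHom.mulLeft a)

variable {K}

lemma mem_lineThrough {a x : F} : x ∈ lineThrough K a ↔ ∃ k ∈ K, a * k = x :=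
  AddSubgroup.mem_map

lemma card_lineThrough {a : F} (ha : a ≠ 0) : Nat.card (lineThrough K a) = Nat.card K :=
  (Nat.card_congr
    (K.toAddSubgroup.equivMapOfInjective _ (mul_right_injective₀ ha)).toEquiv).symm

lemma lineThrough_mul {a k : F} (hk : k ∈ K) (hk0 : k ≠ 0) :
    lineThrough K (a * k) = lineThrough K a := by
  ext x
  simp only [mem_lineThrough]
  constructor
  · rintro ⟨l, hl, rfl⟩
    exact ⟨k * l, K.mul_mem hk hl, by ring⟩
  · rintro ⟨l, hl, rfl⟩
    exact ⟨k⁻¹ * l, K.mul_mem (K.inv_mem hk) hl, by field_simp⟩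

lemma lineThrough_inf_eq_bot {a b : F} (hb : b ≠ 0) (hab : a / b ∉ K) :
    lineThrough K a ⊓ lineThrough K b = ⊥ := by
  refine (AddSubgroup.eq_bot_iff_forall _).mpr fun x ⟨hxa, hxb⟩ => ?_
  obtain ⟨k, hk, rfl⟩ := mem_lineThrough.mp hxa
  obtain ⟨l, hl, hkl⟩ := mem_lineThrough.mp hxb
  by_contra hx
  have hk0 : k ≠ 0 := by rintro rfl; simp at hx
  refine hab ?_
  have hdiv : a / b = l / k := by
    rw [div_eq_div_iff hb hk0]
    linear_combination -hkl
  exact hdiv ▸ K.div_mem hl hk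

lemma setOf_mul_add_eq_coset (a b : F) :
    {x | ∃ k ∈ (K : Set F), x = a * k + b} = {x : F | (x : F ⧸ lineThrough K a) = b} := by
  ext x
  simp only [Set.mem_ofPred_eq, eq_iff_sub_mem, mem_lineThrough]
  exact exists_congr fun k => and_congr_right fun _ => by rw [eq_sub_iff_add_eq, eq_comm]

variable {m : ℕ} {c : Fin m → F}

lemma mem_iUnion_mul_iff_mem_lineThrough {x : F} (hx : x ≠ 0) :
    x ∈ ⋃ i, {x : F | ∃ k ∈ (K : Set F), k ≠ 0 ∧ x = c i * k} ↔ ∃ r, x ∈ lineThrough K (c r) := by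
  simp only [Set.mem_iUnion, Set.mem_ofPred_eq, mem_lineThrough]
  refine exists_congr fun r => ⟨fun ⟨k, hk, _, hxk⟩ => ⟨k, hk, hxk.symm⟩, ?_⟩
  rintro ⟨k, hk, rfl⟩
  exact ⟨k, hk, by rintro rfl; simp at hx, rfl⟩

lemma exists_eq_setOf_mul_add_iff (E : Set F) :
    (∃ a ∈ ⋃ i, {x : F | ∃ k ∈ (K : Set F), k ≠ 0 ∧ x = c i * k}, ∃ b : F,
        E = {x | ∃ k ∈ (K : Set F), x = a * k + b}) ↔
      ∃ r, ∃ b : F ⧸ lineThrough K (c r), E = {x : F | (x : F ⧸ lineThrough K (c r)) = b} := by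
  simp only [setOf_mul_add_eq_coset, Set.mem_iUnion, Set.mem_ofPred_eq]
  constructor
  · rintro ⟨_, ⟨r, k, hk, hk0, rfl⟩, b, hE⟩
    exact ⟨r, b, by rwa [lineThrough_mul hk hk0] at hE⟩
  · rintro ⟨r, b, hE⟩
    obtain ⟨b, rfl⟩ := mk_surjective b
    exact ⟨c r, ⟨r, 1, K.one_mem, one_ne_zero, (mul_one _).symm⟩, b, hE⟩

end Peisert

theorem stmt_1_general
    (q m : ℕ)
    (F : Type) [Field F] [Fintype F]
    (hF : Fintype.card F = q ^ 2)
    (K : Subfield F) (hK : Nat.card K = q)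
    (c : Fin m → F) (hc : ∀ i, c i ≠ 0)
    (hdistinct : ∀ i j : Fin m, i ≠ j → c i / c j ∉ K)
    (S : Set F)
    (hS : S = ⋃ i : Fin m, {x : F | ∃ k ∈ (K : Set F), k ≠ 0 ∧ x = c i * k})
    (X : SimpleGraph F)
    (hX : ∀ x y : F, X.Adj x y ↔ x ≠ y ∧ x - y ∈ S) :
    ∃ A : Fin m × Fin (q ^ 2) → Fin q, IsOrthogonalArray m q A ∧
      ∃ φ : blockGraph A ≃g X,
        ∀ D : Set (Fin (q ^ 2)),
          (∃ (r : Fin m) (i : Fin q), D = {col | A (r, col) = i}) ↔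
          (∃ a ∈ S, ∃ b : F, (⇑φ) '' D = {x : F | ∃ k ∈ (K : Set F), x = a * k + b}) := by
  subst hS
  have hcardF : Nat.card F = q ^ 2 := by rw [Nat.card_eq_fintype_card, hF]
  have hcardQ (r : Fin m) : Nat.card (F ⧸ lineThrough K (c r)) = q :=
    card_quotient_eq_of_card_eq_sq hcardF (by rw [card_lineThrough (hc r), hK])
  let e : Fin (q ^ 2) ≃ F := (Finite.equivFinOfCardEq hcardF).symm
  let π (r : Fin m) := Finite.equivFinOfCardEq (hcardQ r)
  have hXW (x y : F) : X.Adj x y ↔ x ≠ y ∧ ∃ r, x - y ∈ lineThrough K (c r) := by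
    rw [hX]
    exact and_congr_right fun hxy => mem_iUnion_mul_iff_mem_lineThrough (sub_ne_zero.mpr hxy)
  refine ⟨quotientArray _ e π,
    isOrthogonalArray_quotientArray fun r s hrs => lineThrough_inf_eq_bot (hc s) (hdistinct r s hrs),
    quotientArrayIso hXW, fun D => ?_⟩
  rw [coe_quotientArrayIso, exists_eq_setOf_quotientArray_iff, exists_eq_setOf_mul_add_iff]

/-- Every Peisert-type graph of type (m,q) is isomorphic to the block graph of an
orthogonal array OA(m,q), with a one-to-one correspondence between canonical cliques. -/
theorem stmt_1
    (q m : ℕ) (hqodd : Odd q) (hqpp : IsPrimePow q) (hm : m ≤ q)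
    (F : Type) [Field F] [Fintype F] [DecidableEq F]
    (hF : Fintype.card F = q ^ 2)
    (K : Subfield F) (hK : Nat.card K = q)
    (c : Fin m → F) (hc : ∀ i, c i ≠ 0)
    (hdistinct : ∀ i j : Fin m, i ≠ j → c i / c j ∉ K)
    (S : Set F)
    (hS : S = ⋃ i : Fin m, {x : F | ∃ k ∈ (K : Set F), k ≠ 0 ∧ x = c i * k})
    (hKS : ∀ k : F, k ∈ K → k ≠ 0 → k ∈ S)
    (X : SimpleGraph F)
    (hX : ∀ x y : F, X.Adj x y ↔ x ≠ y ∧ x - y ∈ S) :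
    ∃ A : Fin m × Fin (q ^ 2) → Fin q, IsOrthogonalArray m q A ∧
      ∃ φ : blockGraph A ≃g X,
        ∀ D : Set (Fin (q ^ 2)),
          (∃ (r : Fin m) (i : Fin q), D = {col | A (r, col) = i}) ↔
          (∃ a ∈ S, ∃ b : F, (⇑φ) '' D = {x : F | ∃ k ∈ (K : Set F), x = a * k + b}) :=
  stmt_1_general q m F hF K hK c hc hdistinct S hS X hX
end

section
/- Let q be an odd prime power and let X be a Peisert-type graph of type (m,q). Then X is a strongly regular graph with parameters (q², m(q−1), (m−1)(m−2)+q−2, m(m−1)). -/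
/-!
Over `K = 𝔽_q` the field `F = 𝔽_{q²}` is a plane, and the cosets `cᵢ K*` are the nonzero
points of `m` distinct lines `ℓᵢ = K ∙ cᵢ` through `0`. For `d = x - y ≠ 0`, the common
neighbours `z` of `x` and `y` correspond to the `s = x - z` with `s ∈ ℓᵢ \ 0` and
`s - d ∈ ℓⱼ \ 0`. For `i ≠ j` the two lines are complementary, so there is exactly one `s` with
`s ∈ ℓᵢ` and `s - d ∈ ℓⱼ`, and it is admissible unless `d ∈ ℓᵢ ∪ ℓⱼ`; for `i = j` there are
`q - 2` choices if `d ∈ ℓᵢ` and none otherwise. Since `d` lies on at most one line, summing over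
`(i, j)` gives `(m - 1)(m - 2) + q - 2` or `m(m - 1)`.
-/

open Finset Module Function

namespace SimpleGraph

variable {G : Type*} [AddCommGroup G] [Fintype G] {X : SimpleGraph G} [DecidableRel X.Adj]
  {S : Set G}

theorem degree_eq_ncard_of_adj_iff_sub_mem (hX : ∀ x y, X.Adj x y ↔ x - y ∈ S) (v : G) :
    X.degree v = S.ncard := by
  have hnbr : X.neighborSet v = (v - ·) '' S := by
    ext w
    simp only [mem_neighborSet, hX, Set.mem_image]
    exact ⟨fun h => ⟨v - w, h, sub_sub_cancel v w⟩, by rintro ⟨s, hs, rfl⟩; simpa using hs⟩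
  rw [← card_neighborSet_eq_degree, Set.fintypeCard_eq_ncard, hnbr,
    Set.ncard_image_of_injective _ sub_right_injective]

theorem card_commonNeighbors_eq_ncard_of_adj_iff_sub_mem (hX : ∀ x y, X.Adj x y ↔ x - y ∈ S)
    (v w : G) :
    Fintype.card (X.commonNeighbors v w) = {s | s ∈ S ∧ s - (v - w) ∈ S}.ncard := by
  have hcommon : X.commonNeighbors v w = (v - ·) '' {s | s ∈ S ∧ s - (v - w) ∈ S} := by
    ext z
    simp only [mem_commonNeighbors, hX, Set.mem_image, Set.mem_ofPred_eq]
    constructor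
    · rintro ⟨hv, hw⟩
      exact ⟨v - z, ⟨hv, by simpa using hw⟩, sub_sub_cancel v z⟩
    · rintro ⟨s, ⟨hs, hsd⟩, rfl⟩
      exact ⟨by simpa using hs, by convert hsd using 1; abel⟩
  rw [Set.fintypeCard_eq_ncard, hcommon, Set.ncard_image_of_injective _ sub_right_injective]

end SimpleGraph

theorem Finset.sum_sum_ite_eq_ite_or {ι : Type*} [Fintype ι] [DecidableEq ι] (p : ι → Prop)
    [DecidablePred p] (a : ℕ) :
    ∑ i, ∑ j, (if i = j then (if p i then a else 0) else if p i ∨ p j then 0 else 1) =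
      a * #{i | p i} + #{i | ¬p i} * (#{i | ¬p i} - 1) := by
  rw [← Fintype.sum_prod_type' (fun i j => if i = j then (if p i then a else 0)
    else if p i ∨ p j then 0 else 1), ← univ_product_univ, ← diag_union_offDiag,
    sum_union (disjoint_diag_offDiag _), sum_diag]
  have hdiag : ∑ i, (if i = i then (if p i then a else 0) else if p i ∨ p i then 0 else 1) =
      a * #{i | p i} := by
    simp only [if_true, sum_ite, sum_const_zero, add_zero, sum_const, smul_eq_mul, mul_comm]
  have hoffDiag : ∑ x ∈ (univ : Finset ι).offDiag,
      (if x.1 = x.2 then (if p x.1 then a else 0) else if p x.1 ∨ p x.2 then 0 else 1) =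
      #(({i | ¬p i} : Finset ι).offDiag) := by
    have hfilter : ({i | ¬p i} : Finset ι).offDiag =
        {x ∈ (univ : Finset ι).offDiag | ¬(p x.1 ∨ p x.2)} := by
      ext x
      simp only [mem_offDiag, mem_filter, mem_univ, true_and, not_or]
      tauto
    rw [hfilter, card_filter]
    refine sum_congr rfl fun x hx => ?_
    rw [if_neg (mem_offDiag.mp hx).2.2, ite_not]
  rw [hdiag, hoffDiag, offDiag_card, Nat.mul_sub_one]

namespace Submodule

variable {K V ι : Type*} [Field K] [AddCommGroup V] [Module K V]

theorem isCompl_of_finrank_eq_one [FiniteDimensional K V] (hV : finrank K V = 2)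
    {P Q : Submodule K V} (hP : finrank K P = 1) (hQ : finrank K Q = 1) (hPQ : P ≠ Q) :
    IsCompl P Q := by
  have hinf : P ⊓ Q = ⊥ := by
    rw [← finrank_eq_zero]
    by_contra h
    have h1 : finrank K ↥(P ⊓ Q) = 1 := by
      have := finrank_mono (inf_le_left : P ⊓ Q ≤ P)
      omega
    exact hPQ ((eq_of_le_of_finrank_eq inf_le_left (h1.trans hP.symm)).symm.trans
      (eq_of_le_of_finrank_eq inf_le_right (h1.trans hQ.symm)))
  have hsup : P ⊔ Q = ⊤ := by
    apply eq_top_of_finrank_eq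
    have := finrank_sup_add_finrank_inf_eq P Q
    rw [hinf, finrank_bot] at this
    omega
  exact ⟨disjoint_iff.mpr hinf, codisjoint_iff.mpr hsup⟩

theorem ncard_eq_of_finrank_eq_one [Finite V] {L : Submodule K V} (hL : finrank K L = 1) :
    (L : Set V).ncard = Nat.card K := by
  rw [← Nat.card_coe_set_eq, SetLike.coe_sort_coe, natCard_eq_pow_finrank (K := K), hL, pow_one]

open scoped Classical in
theorem ncard_setOf_mem_sub_mem_of_finrank_eq_one [Finite V] {L : Submodule K V}
    (hL : finrank K L = 1) {d : V} (hd : d ≠ 0) :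
    {s | (s ∈ L ∧ s ≠ 0) ∧ (s - d ∈ L ∧ s - d ≠ 0)}.ncard =
      if d ∈ L then Nat.card K - 2 else 0 := by
  split_ifs with hdL
  · have hset :
        {s | (s ∈ L ∧ s ≠ 0) ∧ (s - d ∈ L ∧ s - d ≠ 0)} = ((L : Set V) \ {0}) \ {d} := by
      ext s
      simp only [Set.mem_ofPred_eq, Set.mem_sdiff, SetLike.mem_coe, Set.mem_singleton_iff,
        sub_mem_iff_left L hdL, sub_ne_zero]
      tauto
    rw [hset, Set.ncard_sdiff_singleton_of_mem (s := (L : Set V) \ {0}) ⟨hdL, hd⟩,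
      Set.ncard_sdiff_singleton_of_mem L.zero_mem, ncard_eq_of_finrank_eq_one hL]
    omega
  · rw [Set.ncard_eq_zero, Set.eq_empty_iff_forall_notMem]
    rintro s ⟨⟨hs, -⟩, hsd, -⟩
    exact hdL (by simpa using L.sub_mem hs hsd)

open scoped Classical in
theorem ncard_setOf_mem_sub_mem_of_isCompl {P Q : Submodule K V} (hPQ : IsCompl P Q) {d : V} :
    {s | (s ∈ P ∧ s ≠ 0) ∧ (s - d ∈ Q ∧ s - d ≠ 0)}.ncard = if d ∈ P ∨ d ∈ Q then 0 else 1 := by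
  have hPQ0 := disjoint_def.mp hPQ.disjoint
  split_ifs with h
  · convert Set.ncard_empty V
    refine Set.eq_empty_iff_forall_notMem.mpr ?_
    rintro s ⟨⟨hs, hs0⟩, hsd, hsd0⟩
    rcases h with hdP | hdQ
    · exact hsd0 (hPQ0 _ (P.sub_mem hs hdP) hsd)
    · exact hs0 (hPQ0 _ hs (by simpa using Q.add_mem hsd hdQ))
  · rw [not_or] at h
    obtain ⟨y, hy, z, hz, rfl⟩ : ∃ y ∈ P, ∃ z ∈ Q, y + z = d :=
      mem_sup.mp (hPQ.sup_eq_top ▸ mem_top)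
    convert Set.ncard_singleton y
    ext s
    simp only [Set.mem_ofPred_eq, Set.mem_singleton_iff]
    constructor
    · rintro ⟨⟨hs, -⟩, hsd, -⟩
      refine sub_eq_zero.mp (hPQ0 _ (P.sub_mem hs hy) ?_)
      simpa [sub_add_eq_sub_sub, sub_add_cancel] using Q.add_mem hsd hz
    · rintro rfl
      refine ⟨⟨hy, ?_⟩, ?_, ?_⟩
      · rintro rfl
        exact h.2 (by simpa using hz)
      · simpa using hz
      · intro h0
        exact h.1 (by simpa [show z = 0 by simpa using h0] using hy)

variable {L : ι → Submodule K V}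

theorem eq_of_mem_of_mem_of_pairwise_disjoint (hL : Pairwise (Disjoint on L))
    {v : V} (hv : v ≠ 0) {i j : ι} (hi : v ∈ L i) (hj : v ∈ L j) : i = j := by
  by_contra hij
  exact hv (disjoint_def.mp (hL hij) v hi hj)

theorem ncard_setOf_ne_zero_exists_mem [Finite V] [Fintype ι]
    (hL : ∀ i, finrank K (L i) = 1) (hdisj : Pairwise (Disjoint on L)) :
    {v | v ≠ 0 ∧ ∃ i, v ∈ L i}.ncard = Fintype.card ι * (Nat.card K - 1) := by
  have hunion : {v | v ≠ 0 ∧ ∃ i, v ∈ L i} = ⋃ i, (L i : Set V) \ {0} := by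
    ext v
    simp only [Set.mem_ofPred_eq, Set.mem_iUnion, Set.mem_sdiff, SetLike.mem_coe,
      Set.mem_singleton_iff]
    tauto
  have hdisj' : Pairwise (Disjoint on fun i => (L i : Set V) \ {0}) := fun i j hij =>
    Set.disjoint_left.mpr fun v ⟨hvi, hv⟩ ⟨hvj, _⟩ =>
      hij (eq_of_mem_of_mem_of_pairwise_disjoint hdisj hv hvi hvj)
  rw [hunion, Set.ncard_iUnion_of_finite (fun _ => Set.toFinite _) hdisj',
    finsum_eq_sum_of_fintype]
  simp only [Set.ncard_sdiff_singleton_of_mem (zero_mem _), ncard_eq_of_finrank_eq_one (hL _),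
    sum_const, card_univ, smul_eq_mul]

theorem ncard_setOf_mem_sub_mem_eq_sum [Finite V] [Fintype ι]
    (hL : Pairwise (Disjoint on L)) (d : V) :
    {s | (s ≠ 0 ∧ ∃ i, s ∈ L i) ∧ (s - d ≠ 0 ∧ ∃ j, s - d ∈ L j)}.ncard =
      ∑ i, ∑ j, {s | (s ∈ L i ∧ s ≠ 0) ∧ (s - d ∈ L j ∧ s - d ≠ 0)}.ncard := by
  have hunion : {s | (s ≠ 0 ∧ ∃ i, s ∈ L i) ∧ (s - d ≠ 0 ∧ ∃ j, s - d ∈ L j)} =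
      ⋃ x : ι × ι, {s | (s ∈ L x.1 ∧ s ≠ 0) ∧ (s - d ∈ L x.2 ∧ s - d ≠ 0)} := by
    ext s
    simp only [Set.mem_ofPred_eq, Set.mem_iUnion, Prod.exists]
    constructor
    · rintro ⟨⟨hs, i, hi⟩, hsd, j, hj⟩
      exact ⟨i, j, ⟨hi, hs⟩, hj, hsd⟩
    · rintro ⟨i, j, ⟨hi, hs⟩, hj, hsd⟩
      exact ⟨⟨hs, i, hi⟩, hsd, j, hj⟩
  have hdisj : Pairwise (Disjoint on
      fun x : ι × ι => {s | (s ∈ L x.1 ∧ s ≠ 0) ∧ (s - d ∈ L x.2 ∧ s - d ≠ 0)}) := by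
    rintro ⟨i, j⟩ ⟨i', j'⟩ hne
    refine Set.disjoint_left.mpr fun s ⟨⟨hi, hs⟩, hj, hsd⟩ ⟨⟨hi', _⟩, hj', _⟩ => hne ?_
    exact Prod.ext (eq_of_mem_of_mem_of_pairwise_disjoint hL hs hi hi')
      (eq_of_mem_of_mem_of_pairwise_disjoint hL hsd hj hj')
  rw [hunion, Set.ncard_iUnion_of_finite (fun _ => Set.toFinite _) hdisj,
    finsum_eq_sum_of_fintype, Fintype.sum_prod_type]

open scoped Classical in
theorem ncard_setOf_mem_sub_mem [Finite V] [Fintype ι] (hV : finrank K V = 2)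
    (hL : ∀ i, finrank K (L i) = 1) (hLinj : Injective L) {d : V} (hd : d ≠ 0) :
    {s | (s ≠ 0 ∧ ∃ i, s ∈ L i) ∧ (s - d ≠ 0 ∧ ∃ j, s - d ∈ L j)}.ncard =
      (Nat.card K - 2) * #{i | d ∈ L i} + #{i | d ∉ L i} * (#{i | d ∉ L i} - 1) := by
  have hcompl : Pairwise fun i j => IsCompl (L i) (L j) := fun i j hij =>
    isCompl_of_finrank_eq_one hV (hL i) (hL j) (hLinj.ne hij)
  rw [ncard_setOf_mem_sub_mem_eq_sum fun i j hij => (hcompl hij).disjoint,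
    ← Finset.sum_sum_ite_eq_ite_or]
  refine Fintype.sum_congr _ _ fun i => Fintype.sum_congr _ _ fun j => ?_
  by_cases hij : i = j
  · subst hij
    rw [if_pos rfl, ncard_setOf_mem_sub_mem_of_finrank_eq_one (hL i) hd]
  · rw [if_neg hij, ncard_setOf_mem_sub_mem_of_isCompl (hcompl hij)]

end Submodule

theorem SimpleGraph.isSRGWith_of_adj_iff_sub_mem_lines {K V ι : Type*} [Field K] [Finite K]
    [AddCommGroup V] [Module K V] [Fintype V] [Fintype ι] {L : ι → Submodule K V}
    (hV : finrank K V = 2) (hL : ∀ i, finrank K (L i) = 1) (hLinj : Injective L)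
    (X : SimpleGraph V) [DecidableRel X.Adj] (hX : ∀ x y, X.Adj x y ↔ x ≠ y ∧ ∃ i, x - y ∈ L i) :
    X.IsSRGWith (Nat.card K ^ 2) (Fintype.card ι * (Nat.card K - 1))
      ((Fintype.card ι - 1) * (Fintype.card ι - 2) + Nat.card K - 2)
      (Fintype.card ι * (Fintype.card ι - 1)) := by
  classical
  set S : Set V := {v | v ≠ 0 ∧ ∃ i, v ∈ L i}
  have hXS : ∀ x y, X.Adj x y ↔ x - y ∈ S := fun x y => by
    rw [hX, ← sub_ne_zero]
    rfl
  have hdisj : Pairwise (Disjoint on L) := fun i j hij =>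
    (Submodule.isCompl_of_finrank_eq_one hV (hL i) (hL j) (hLinj.ne hij)).disjoint
  have hq : 1 < Nat.card K := Finite.one_lt_card
  refine ⟨?_, fun v => ?_, fun v w hvw => ?_, fun v w hne hvw => ?_⟩
  · rw [← Nat.card_eq_fintype_card, natCard_eq_pow_finrank (K := K), hV]
  · rw [degree_eq_ncard_of_adj_iff_sub_mem hXS,
      Submodule.ncard_setOf_ne_zero_exists_mem hL hdisj]
  · obtain ⟨hd, i₀, hi₀⟩ := (hXS v w).1 hvw
    have hline : #{i | v - w ∈ L i} = 1 := card_eq_one.mpr ⟨i₀, by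
      ext i
      simp only [mem_filter, mem_univ, true_and, mem_singleton]
      exact ⟨fun hi => Submodule.eq_of_mem_of_mem_of_pairwise_disjoint hdisj hd hi hi₀,
        by rintro rfl; exact hi₀⟩⟩
    have hrest := card_filter_add_card_filter_not (s := univ) (v - w ∈ L ·)
    rw [hline, card_univ] at hrest
    rw [(card_commonNeighbors_eq_ncard_of_adj_iff_sub_mem hXS v w).trans
      (Submodule.ncard_setOf_mem_sub_mem hV hL hLinj hd), hline, ← hrest]
    generalize #{i | v - w ∉ L i} = k
    rw [Nat.add_sub_cancel_left, mul_one, show 1 + k - 2 = k - 1 by omega]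
    omega
  · have hd : v - w ≠ 0 := sub_ne_zero.mpr hne
    have hnot : ∀ i, v - w ∉ L i := fun i hi => hvw ((hXS v w).2 ⟨hd, i, hi⟩)
    rw [(card_commonNeighbors_eq_ncard_of_adj_iff_sub_mem hXS v w).trans
      (Submodule.ncard_setOf_mem_sub_mem hV hL hLinj hd), filter_false_of_mem fun i _ => hnot i,
      filter_true_of_mem fun i _ => hnot i, card_empty, mul_zero, zero_add, card_univ]

theorem Subfield.mem_span_singleton_iff {F : Type*} [Field F] (K : Subfield F) (c x : F) :
    x ∈ K ∙ c ↔ ∃ k ∈ K, x = c * k := by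
  simp only [Submodule.mem_span_singleton, Subtype.exists, Subfield.smul_def, smul_eq_mul,
    mul_comm c, eq_comm, exists_prop]

theorem stmt_2_general
    (q m : ℕ)
    (F : Type) [Field F] [Fintype F]
    (hF : Fintype.card F = q ^ 2)
    (K : Subfield F) (hK : Nat.card K = q)
    (c : Fin m → F) (hc : ∀ i, c i ≠ 0)
    (hdistinct : ∀ i j : Fin m, i ≠ j → c i / c j ∉ K)
    (S : Set F)
    (hS : S = ⋃ i : Fin m, {x : F | ∃ k ∈ (K : Set F), k ≠ 0 ∧ x = c i * k})
    (X : SimpleGraph F) [DecidableRel X.Adj]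
    (hX : ∀ x y : F, X.Adj x y ↔ x ≠ y ∧ x - y ∈ S) :
    X.IsSRGWith (q ^ 2) (m * (q - 1)) ((m - 1) * (m - 2) + q - 2) (m * (m - 1)) := by
  have hV : finrank K F = 2 := by
    have hq : 1 < q := hK ▸ Finite.one_lt_card
    refine Nat.pow_right_injective hq (?_ : q ^ finrank K F = q ^ 2)
    rw [← hK, ← natCard_eq_pow_finrank, Nat.card_eq_fintype_card, hF, hK]
  have hLinj : Injective fun i => K ∙ c i := by
    intro i j hij
    simp only at hij
    by_contra hne
    obtain ⟨k, hk, hck⟩ := (K.mem_span_singleton_iff (c j) (c i)).1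
      (hij ▸ Submodule.mem_span_singleton_self (c i))
    exact hdistinct i j hne (by rwa [hck, mul_div_cancel_left₀ _ (hc j)])
  have hXL (x y : F) : X.Adj x y ↔ x ≠ y ∧ ∃ i, x - y ∈ K ∙ c i := by
    simp only [hX, hS, Subfield.mem_span_singleton_iff, Set.mem_iUnion, Set.mem_ofPred_eq,
      SetLike.mem_coe]
    refine and_congr_right fun hxy => exists_congr fun i => exists_congr fun k => ?_
    refine ⟨fun ⟨hk, _, h⟩ => ⟨hk, h⟩, fun ⟨hk, h⟩ => ⟨hk, ?_, h⟩⟩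
    rintro rfl
    exact hxy (sub_eq_zero.mp (by simpa using h))
  have hSRG := SimpleGraph.isSRGWith_of_adj_iff_sub_mem_lines hV
    (fun i => finrank_span_singleton (hc i)) hLinj X hXL
  rwa [Fintype.card_fin, hK] at hSRG

/-- A Peisert-type graph of type (m,q) is strongly regular with parameters
(q², m(q−1), (m−1)(m−2)+q−2, m(m−1)). -/
theorem stmt_2
    (q m : ℕ) (hqodd : Odd q) (hqpp : IsPrimePow q) (hm : m ≤ q)
    (F : Type) [Field F] [Fintype F] [DecidableEq F]
    (hF : Fintype.card F = q ^ 2)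
    (K : Subfield F) (hK : Nat.card K = q)
    (c : Fin m → F) (hc : ∀ i, c i ≠ 0)
    (hdistinct : ∀ i j : Fin m, i ≠ j → c i / c j ∉ K)
    (S : Set F)
    (hS : S = ⋃ i : Fin m, {x : F | ∃ k ∈ (K : Set F), k ≠ 0 ∧ x = c i * k})
    (hKS : ∀ k : F, k ∈ K → k ≠ 0 → k ∈ S)
    (X : SimpleGraph F) [DecidableRel X.Adj]
    (hX : ∀ x y : F, X.Adj x y ↔ x ≠ y ∧ x - y ∈ S) :
    X.IsSRGWith (q ^ 2) (m * (q - 1)) ((m - 1) * (m - 2) + q - 2) (m * (m - 1)) :=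
  stmt_2_general q m F hF K hK c hc hdistinct S hS X hX
end

section
/- Let q be an odd prime power and let X be a Peisert-type graph of type (m,q). Then the characteristic polynomial of the adjacency matrix of X over ℚ equals (T − m(q−1)) · (T − (q−m))^(m(q−1)) · (T + m)^((q−1)(q+1−m)); equivalently, the eigenvalues of X are m(q−1) with multiplicity 1, q−m with multiplicity m(q−1), and −m with multiplicity (q−1)(q+1−m) = q² − 1 − m(q−1). -/
/-!
The set `S ∪ {0}` is the union of the `m` lines `K ∙ cᵢ` of the plane `F ≅ K²`, and any two
of them are complementary subgroups. For the Cayley matrix `Mᵢ` of a line this gives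
`Mᵢ² = q Mᵢ` and `Mᵢ Mⱼ = J` for `i ≠ j`, so for the adjacency matrix `A` the sum
`B = ∑ Mᵢ = A + m` satisfies `B² = q B + m(m-1) J` and `B J = mq J`. Hence
`(A - m(q-1)) (A - (q-m)) (A + m) = 0`: every eigenvalue of the real symmetric matrix `A` is
`m(q-1)`, `q-m` or `-m`, and the multiplicities are forced by the size `q²`, `tr A = 0` and
`tr A² = q² m(q-1)`.
-/

open Polynomial

lemma SimpleGraph.map_adjMatrix {V : Type*} (Γ : SimpleGraph V) [DecidableRel Γ.Adj]
    {R S : Type*} [NonAssocSemiring R] [NonAssocSemiring S] (f : R →+* S) :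
    (Γ.adjMatrix R).map f = Γ.adjMatrix S := by
  ext x y
  by_cases h : Γ.Adj x y <;> simp [h]

section CayleyMatrix

variable {G : Type*} [AddCommGroup G] (R : Type*) [CommRing R]

noncomputable def cayleyMatrix (T : Set G) : Matrix G G R :=
  Matrix.of fun x y => T.indicator 1 (x - y)

variable {R}

lemma cayleyMatrix_apply (T : Set G) (x y : G) :
    cayleyMatrix R T x y = T.indicator 1 (x - y) := rfl

lemma SimpleGraph.adjMatrix_eq_cayleyMatrix (Γ : SimpleGraph G) [DecidableRel Γ.Adj] {S : Set G}
    (hΓ : ∀ x y, Γ.Adj x y ↔ x ≠ y ∧ x - y ∈ S) :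
    Γ.adjMatrix R = cayleyMatrix R (S \ {0}) := by
  classical
  ext x y
  simp [cayleyMatrix_apply, Set.indicator_apply, hΓ, sub_eq_zero, and_comm]

open Function in
lemma cayleyMatrix_iUnion {ι : Type*} [Fintype ι] {T : ι → Set G}
    (hT : Pairwise (Disjoint on T)) :
    cayleyMatrix R (⋃ i, T i) = ∑ i, cayleyMatrix R (T i) := by
  ext x y
  have := Finset.indicator_biUnion Finset.univ T (f := (1 : G → R)) fun i _ j _ hij => hT hij
  simp only [Finset.mem_univ, Set.iUnion_true] at this
  simp [cayleyMatrix_apply, Matrix.sum_apply, this]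

lemma cayleyMatrix_diff_zero [DecidableEq G] {T : Set G} (h0 : (0 : G) ∈ T) :
    cayleyMatrix R (T \ {0}) = cayleyMatrix R T - 1 := by
  classical
  ext x y
  by_cases hxy : x = y
  · simp [hxy, cayleyMatrix_apply, h0]
  · simp [cayleyMatrix_apply, Matrix.one_apply_ne hxy, Set.indicator_apply, sub_eq_zero, hxy]

variable [Fintype G]

lemma cayleyMatrix_mul_apply (T U : Set G) (x y : G) :
    (cayleyMatrix R T * cayleyMatrix R U) x y = Nat.card {z // x - z ∈ T ∧ z - y ∈ U} := by
  classical
  simp only [Matrix.mul_apply, cayleyMatrix_apply, Set.indicator_apply, Pi.one_apply,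
    mul_ite, mul_one, mul_zero, ← ite_and, Finset.sum_boole, Nat.card_eq_fintype_card,
    Fintype.card_subtype]
  simp only [and_comm]

lemma cayleyMatrix_mul_self (H : AddSubgroup G) :
    cayleyMatrix R H * cayleyMatrix R H = (Nat.card H : R) • cayleyMatrix R (H : Set G) := by
  ext x y
  rw [cayleyMatrix_mul_apply, Matrix.smul_apply, cayleyMatrix_apply, smul_eq_mul]
  by_cases hxy : x - y ∈ H
  · have e : {z // x - z ∈ H ∧ z - y ∈ H} ≃ H :=
      { toFun := fun z => ⟨z.1 - y, z.2.2⟩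
        invFun := fun h => ⟨h + y, by
          rw [show x - (h + y) = x - y - h by abel]; exact H.sub_mem hxy h.2, by simp⟩
        left_inv := fun z => by simp
        right_inv := fun h => by simp }
    simp [Nat.card_congr e, Set.indicator_of_mem (show x - y ∈ (H : Set G) from hxy)]
  · have : IsEmpty {z // x - z ∈ (H : Set G) ∧ z - y ∈ (H : Set G)} :=
      ⟨fun z => hxy (by simpa using H.add_mem z.2.1 z.2.2)⟩
    simp [Set.indicator_of_notMem (show x - y ∉ (H : Set G) from hxy)]

lemma cayleyMatrix_mul_of_isComplement' {H₁ H₂ : AddSubgroup G} (h : H₁.IsComplement' H₂) :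
    cayleyMatrix R H₁ * cayleyMatrix R (H₂ : Set G) = Matrix.of fun _ _ => 1 := by
  ext x y
  suffices Nat.card {z // x - z ∈ (H₁ : Set G) ∧ z - y ∈ (H₂ : Set G)} = 1 by
    rw [cayleyMatrix_mul_apply, this, Nat.cast_one, Matrix.of_apply]
  rw [Nat.card_eq_one_iff_unique]
  obtain ⟨⟨a, b⟩, hab, huniq⟩ := h.existsUnique (x - y)
  refine ⟨⟨fun z w => ?_⟩, ⟨⟨x - a, by simp, by
    rw [sub_right_comm, ← eq_sub_of_add_eq' hab]; exact b.2⟩⟩⟩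
  have hz := huniq (⟨_, z.2.1⟩, ⟨_, z.2.2⟩) (by simp)
  have hw := huniq (⟨_, w.2.1⟩, ⟨_, w.2.2⟩) (by simp)
  ext
  simpa using congrArg (fun p : H₁ × H₂ => (p.1 : G)) (hz.trans hw.symm)

lemma cayleyMatrix_mul_ones (H : AddSubgroup G) :
    cayleyMatrix R (H : Set G) * (Matrix.of fun _ _ => 1) =
      (Nat.card H : R) • Matrix.of fun _ _ => 1 := by
  ext x y
  have e : {z // x - z ∈ (H : Set G) ∧ z - y ∈ Set.univ} ≃ H :=
    { toFun := fun z => ⟨x - z.1, z.2.1⟩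
      invFun := fun h => ⟨x - h, by simp, trivial⟩
      left_inv := fun z => by simp
      right_inv := fun h => by simp }
  have := cayleyMatrix_mul_apply (R := R) H Set.univ x y
  rw [Nat.card_congr e] at this
  simpa [cayleyMatrix, Set.indicator_univ] using this

section
variable {ι : Type*} [Fintype ι] {L : ι → AddSubgroup G} {q : ℕ}

lemma sum_cayleyMatrix_mul_ones (hq : ∀ i, Nat.card (L i) = q) :
    (∑ i, cayleyMatrix R (L i : Set G)) * (Matrix.of fun _ _ => 1) =
      ((Fintype.card ι : R) * q) • Matrix.of fun _ _ => 1 := by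
  simp only [Finset.sum_mul, cayleyMatrix_mul_ones, hq, Finset.sum_const, Finset.card_univ,
    ← Nat.cast_smul_eq_nsmul R, smul_smul]

lemma sum_cayleyMatrix_sub_mul_ones [DecidableEq G] (hq : ∀ i, Nat.card (L i) = q) :
    (∑ i, cayleyMatrix R (L i : Set G) - (Fintype.card ι : R) • 1) * (Matrix.of fun _ _ => 1) =
      ((Fintype.card ι : R) * (q - 1)) • Matrix.of fun _ _ => 1 := by
  rw [sub_mul, sum_cayleyMatrix_mul_ones hq, smul_mul_assoc, one_mul, ← sub_smul, mul_sub,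
    mul_one]

variable [DecidableEq ι]

lemma sum_cayleyMatrix_mul_self (hL : Pairwise fun i j => (L i).IsComplement' (L j))
    (hq : ∀ i, Nat.card (L i) = q) :
    (∑ i, cayleyMatrix R (L i : Set G)) * ∑ i, cayleyMatrix R (L i : Set G) =
      (q : R) • ∑ i, cayleyMatrix R (L i : Set G) +
        ((Fintype.card ι : R) * (Fintype.card ι - 1)) • Matrix.of fun _ _ => 1 := by
  have hrow : ∀ i, ∑ j, cayleyMatrix R (L i : Set G) * cayleyMatrix R (L j : Set G) =
      (q : R) • cayleyMatrix R (L i : Set G) +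
        ((Fintype.card ι : R) - 1) • Matrix.of fun _ _ => 1 := by
    intro i
    rw [← Finset.add_sum_erase _ _ (Finset.mem_univ i), cayleyMatrix_mul_self, hq,
      Finset.sum_congr rfl fun j hj =>
        cayleyMatrix_mul_of_isComplement' (hL (Finset.ne_of_mem_erase hj).symm),
      Finset.sum_const, Finset.card_erase_of_mem (Finset.mem_univ i), Finset.card_univ,
      ← Nat.cast_smul_eq_nsmul R, Nat.cast_sub (Fintype.card_pos_iff.2 ⟨i⟩), Nat.cast_one]
  rw [Finset.sum_mul_sum, Finset.sum_congr rfl fun i _ => hrow i, Finset.sum_add_distrib,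
    ← Finset.smul_sum, Finset.sum_const, Finset.card_univ, ← Nat.cast_smul_eq_nsmul R,
    smul_smul]

lemma sum_cayleyMatrix_sub_quadratic [DecidableEq G]
    (hL : Pairwise fun i j => (L i).IsComplement' (L j)) (hq : ∀ i, Nat.card (L i) = q) :
    (∑ i, cayleyMatrix R (L i : Set G) - (Fintype.card ι : R) • 1 -
          ((q : R) - Fintype.card ι) • 1) *
        (∑ i, cayleyMatrix R (L i : Set G) - (Fintype.card ι : R) • 1 -
          (-Fintype.card ι : R) • 1) =
      ((Fintype.card ι : R) * (Fintype.card ι - 1)) • Matrix.of fun _ _ => 1 := by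
  set B := ∑ i, cayleyMatrix R (L i : Set G)
  rw [show B - (Fintype.card ι : R) • 1 - ((q : R) - Fintype.card ι) • 1 = B - (q : R) • 1
      by module,
    show B - (Fintype.card ι : R) • 1 - (-Fintype.card ι : R) • 1 = B by module,
    sub_mul, sum_cayleyMatrix_mul_self hL hq, smul_mul_assoc, one_mul, add_sub_cancel_left]

end

end CayleyMatrix

section SpectrumFromPowerSums

variable {K : Type*} [Field K] [CharZero K] [DecidableEq K] {ι : Type*} {ev : ι → K}

lemma Finset.prod_X_sub_C_eq_of_two_values {E : Finset ι} {k r : K} {a : ℕ}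
    (hval : ∀ i ∈ E, ev i = k ∨ ev i = r) (hcard : E.card = a + 1)
    (hsum : ∑ i ∈ E, ev i = k + a * r) :
    ∏ i ∈ E, (X - C (ev i)) = (X - C k) * (X - C r) ^ a := by
  by_cases hkr : k = r
  · subst hkr
    rw [Finset.prod_eq_pow_card fun i hi => by rcases hval i hi with h | h <;> rw [h], hcard,
      pow_succ']
  set Ek := E.filter (ev · = k)
  set Er := E.filter fun i => ¬ev i = k
  have hEk : ∀ i ∈ Ek, ev i = k := fun i hi => (Finset.mem_filter.1 hi).2
  have hEr : ∀ i ∈ Er, ev i = r := fun i hi =>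
    ((hval i (Finset.mem_filter.1 hi).1).resolve_left (Finset.mem_filter.1 hi).2)
  have hcards : Ek.card + Er.card = a + 1 := by
    rw [Finset.card_filter_add_card_filter_not, hcard]
  have hsplit : (Ek.card : K) * k + Er.card * r = k + a * r := by
    rw [← hsum, ← Finset.sum_filter_add_sum_filter_not E (ev · = k),
      Finset.sum_eq_card_nsmul hEk, Finset.sum_eq_card_nsmul hEr, nsmul_eq_mul, nsmul_eq_mul]
  have hk1 : Ek.card = 1 := by
    have hcardsK : (Ek.card : K) + Er.card = a + 1 := by exact_mod_cast hcards
    have : ((Ek.card : K) - 1) * (k - r) = 0 := by linear_combination hsplit - r * hcardsK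
    exact_mod_cast sub_eq_zero.1 ((mul_eq_zero.1 this).resolve_right (sub_ne_zero.2 hkr))
  have hr : Er.card = a := by omega
  rw [← Finset.prod_filter_mul_prod_filter_not E (ev · = k), Finset.prod_eq_pow_card fun i hi => by rw [hEk i hi],
    Finset.prod_eq_pow_card fun i hi => by rw [hEr i hi], hk1, hr, pow_one]

variable [Fintype ι]

lemma prod_X_sub_C_eq_of_three_values {k r s : K} {a b : ℕ} (hsk : s ≠ k) (hsr : s ≠ r)
    (hval : ∀ i, (ev i - k) * (ev i - r) * (ev i - s) = 0)
    (hcard : Fintype.card ι = 1 + a + b)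
    (hsum : ∑ i, ev i = k + a * r + b * s)
    (hsumsq : ∑ i, ev i ^ 2 = k ^ 2 + a * r ^ 2 + b * s ^ 2) :
    ∏ i, (X - C (ev i)) = (X - C k) * (X - C r) ^ a * (X - C s) ^ b := by
  set Es := Finset.univ.filter (ev · = s)
  have hEs : ∀ i ∈ Es, ev i = s := fun i hi => (Finset.mem_filter.1 hi).2
  have hval' : ∀ i, ev i ≠ s → ev i = k ∨ ev i = r := fun i hi => by
    have := hval i
    simp only [mul_eq_zero, sub_eq_zero] at this
    tauto
  -- only the indices with `ev i = s` contribute to `∑ (ev i - k) * (ev i - r)`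
  have hcount : (Es.card : K) * ((s - k) * (s - r)) = b * ((s - k) * (s - r)) := by
    calc (Es.card : K) * ((s - k) * (s - r))
        = ∑ i, (ev i - k) * (ev i - r) := by
          rw [← Finset.sum_filter_add_sum_filter_not Finset.univ (ev · = s),
            Finset.sum_eq_card_nsmul fun i hi => by rw [hEs i hi],
            Finset.sum_eq_zero fun i hi => ?_, add_zero, nsmul_eq_mul]
          rcases hval' i (Finset.mem_filter.1 hi).2 with h | h <;> rw [h] <;> ring
      _ = ∑ i, (ev i ^ 2 - (k + r) * ev i + k * r) := Finset.sum_congr rfl fun i _ => by ring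
      _ = ∑ i, ev i ^ 2 - (k + r) * ∑ i, ev i + Fintype.card ι * (k * r) := by
          rw [Finset.sum_add_distrib, Finset.sum_sub_distrib, ← Finset.mul_sum, Finset.sum_const,
            Finset.card_univ, nsmul_eq_mul]
      _ = b * ((s - k) * (s - r)) := by
          rw [hsumsq, hsum, hcard]
          push_cast
          ring
  have hb : Es.card = b := by
    exact_mod_cast mul_right_cancel₀ (mul_ne_zero (sub_ne_zero.2 hsk) (sub_ne_zero.2 hsr)) hcount
  have hrest : ∏ i ∈ Finset.univ.filter fun i => ¬ev i = s, (X - C (ev i)) =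
      (X - C k) * (X - C r) ^ a := by
    refine Finset.prod_X_sub_C_eq_of_two_values
      (fun i hi => hval' i (Finset.mem_filter.1 hi).2) ?_ ?_
    · have := Finset.card_filter_add_card_filter_not (s := Finset.univ) (ev · = s)
      rw [Finset.card_univ, hcard, hb] at this
      omega
    · have := Finset.sum_filter_add_sum_filter_not Finset.univ (ev · = s) ev
      rw [Finset.sum_eq_card_nsmul hEs, hb, nsmul_eq_mul, hsum] at this
      linear_combination this
  rw [← Finset.prod_filter_not_mul_prod_filter Finset.univ (ev · = s), hrest,
    Finset.prod_eq_pow_card fun i hi => by rw [hEs i hi], hb]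

end SpectrumFromPowerSums

namespace Matrix.IsHermitian

variable {𝕜 : Type*} [RCLike 𝕜] {n : Type*} [Fintype n] [DecidableEq n] {A : Matrix n n 𝕜}

lemma aeval_eq (hA : A.IsHermitian) (p : 𝕜[X]) :
    aeval A p = Unitary.conjStarAlgAut 𝕜 _ hA.eigenvectorUnitary
      (diagonal fun i => p.eval (hA.eigenvalues i : 𝕜)) := by
  conv_lhs => rw [hA.spectral_theorem]
  rw [← StarAlgEquiv.coe_toAlgEquiv, aeval_algEquiv, AlgHom.comp_apply,
    show diagonal (RCLike.ofReal ∘ hA.eigenvalues) =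
      diagonalAlgHom 𝕜 (RCLike.ofReal ∘ hA.eigenvalues) from rfl,
    aeval_algHom_apply, aeval_pi_apply]
  rfl

lemma trace_aeval (hA : A.IsHermitian) (p : 𝕜[X]) :
    (aeval A p).trace = ∑ i, p.eval (hA.eigenvalues i : 𝕜) := by
  rw [hA.aeval_eq, Unitary.conjStarAlgAut_apply, trace_mul_cycle, Unitary.coe_star_mul_self,
    one_mul, trace_diagonal]

lemma eval_eigenvalues_eq_zero_of_aeval_eq_zero (hA : A.IsHermitian) {p : 𝕜[X]}
    (hp : aeval A p = 0) (i : n) : p.eval (hA.eigenvalues i : 𝕜) = 0 := by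
  rw [hA.aeval_eq, map_eq_zero_iff _ (EquivLike.injective _)] at hp
  simpa using congrFun (congrFun hp i) i

end Matrix.IsHermitian

lemma Matrix.IsHermitian.charpoly_eq_of_sub_mul_sub_eq_smul_ones {n : Type*} [Fintype n]
    [DecidableEq n] {A : Matrix n n ℝ} (hA : A.IsHermitian) {k r s μ : ℝ} {a b : ℕ}
    (htr : A.trace = 0)
    (hk : A * (Matrix.of fun _ _ => 1) = k • Matrix.of fun _ _ => 1)
    (hrs : (A - r • 1) * (A - s • 1) = μ • Matrix.of fun _ _ => 1)
    (hsk : s ≠ k) (hsr : s ≠ r) (hcard : Fintype.card n = 1 + a + b)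
    (hsum : k + a * r + b * s = 0)
    (hsumsq : k ^ 2 + a * r ^ 2 + b * s ^ 2 = Fintype.card n * (μ - r * s)) :
    A.charpoly = (X - C k) * (X - C r) ^ a * (X - C s) ^ b := by
  have hroot : aeval A ((X - C k) * ((X - C r) * (X - C s))) = 0 := by
    simp only [map_mul, map_sub, aeval_X, aeval_C, Algebra.algebraMap_eq_smul_one]
    rw [hrs, mul_smul_comm, sub_mul, hk, smul_mul_assoc, one_mul, sub_self, smul_zero]
  have hsq : A ^ 2 = μ • (Matrix.of fun _ _ => 1) + (r + s) • A - (r * s) • 1 := by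
    rw [← hrs, sq]
    simp only [sub_mul, mul_sub, smul_mul_assoc, mul_smul_comm, one_mul, mul_one]
    module
  rw [hA.charpoly_eq]
  simp only [RCLike.ofReal_real_eq_id, id]
  refine prod_X_sub_C_eq_of_three_values hsk hsr (fun i => ?_) hcard ?_ ?_
  · simpa [mul_assoc] using hA.eval_eigenvalues_eq_zero_of_aeval_eq_zero hroot i
  · rw [hsum, ← htr, hA.trace_eq_sum_eigenvalues]
    simp
  · have := hA.trace_aeval (X ^ 2)
    simp only [map_pow, aeval_X, eval_pow, eval_X, RCLike.ofReal_real_eq_id, id] at this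
    rw [hsumsq, ← this, hsq]
    have htrJ : (Matrix.of fun _ _ => 1 : Matrix n n ℝ).trace = Fintype.card n := by
      simp [Matrix.trace]
    rw [Matrix.trace_sub, Matrix.trace_add, Matrix.trace_smul, Matrix.trace_smul, Matrix.trace_smul,
      htr, htrJ, Matrix.trace_one, smul_eq_mul, smul_eq_mul, smul_eq_mul]
    ring

section PeisertLines

variable {F : Type*} [Field F] {K : Subfield F}

lemma Subfield.disjoint_span_singleton {c d : F} (hcd : c / d ∉ K) :
    Disjoint (K ∙ c).toAddSubgroup (K ∙ d).toAddSubgroup := by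
  rw [AddSubgroup.disjoint_def]
  intro x hxc hxd
  obtain ⟨a, rfl⟩ := Submodule.mem_span_singleton.1 hxc
  obtain ⟨b, hb⟩ := Submodule.mem_span_singleton.1 hxd
  by_contra hx
  have ha : (a : F) ≠ 0 := fun h => hx (by simp [Subfield.smul_def, h])
  have hd : d ≠ 0 := fun h => hx (by simp [← hb, h])
  refine hcd ?_
  have : c / d = b / a := by
    rw [div_eq_div_iff hd ha]
    simpa [Subfield.smul_def, mul_comm] using hb.symm
  exact this ▸ K.div_mem b.2 a.2

lemma Subfield.card_span_singleton {c : F} (hc : c ≠ 0) : Nat.card (K ∙ c) = Nat.card K :=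
  (Nat.card_congr (LinearEquiv.toSpanNonzeroSingleton K F c hc).toEquiv).symm

lemma Subfield.isComplement'_span_singleton [Finite F] (hF : Nat.card F = Nat.card K ^ 2)
    {c d : F} (hc : c ≠ 0) (hd : d ≠ 0) (hcd : c / d ∉ K) :
    (K ∙ c).toAddSubgroup.IsComplement' (K ∙ d).toAddSubgroup :=
  (Nat.bijective_iff_injective_and_card _).2
    ⟨AddSubgroup.add_injective_of_disjoint (Subfield.disjoint_span_singleton hcd), by
      rw [Nat.card_prod, hF, sq]
      exact congrArg₂ _ (Subfield.card_span_singleton hc) (Subfield.card_span_singleton hd)⟩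

open Function in
lemma SimpleGraph.adjMatrix_eq_sum_cayleyMatrix_span_singleton_sub [Fintype F] [DecidableEq F]
    (R : Type*) [CommRing R] {ι : Type*} [Fintype ι] {c : ι → F}
    (hdistinct : ∀ i j, i ≠ j → c i / c j ∉ K) {S : Set F}
    (hS : S = ⋃ i, {x : F | ∃ k ∈ (K : Set F), k ≠ 0 ∧ x = c i * k})
    (Γ : SimpleGraph F) [DecidableRel Γ.Adj]
    (hΓ : ∀ x y : F, Γ.Adj x y ↔ x ≠ y ∧ x - y ∈ S) :
    Γ.adjMatrix R =
      ∑ i, cayleyMatrix R ((K ∙ c i).toAddSubgroup : Set F) - (Fintype.card ι : R) • 1 := by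
  have hS0 : S \ {0} = ⋃ i, ((K ∙ c i).toAddSubgroup : Set F) \ {0} := by
    subst hS
    ext x
    simp only [Set.mem_sdiff, Set.mem_iUnion, Set.mem_ofPred_eq, SetLike.mem_coe,
      Submodule.mem_toAddSubgroup, Submodule.mem_span_singleton, Subfield.smul_def,
      Set.mem_singleton_iff]
    constructor
    · rintro ⟨⟨i, k, hk, hk0, rfl⟩, hx⟩
      exact ⟨i, ⟨⟨k, hk⟩, mul_comm _ _⟩, hx⟩
    · rintro ⟨i, ⟨k, rfl⟩, hx⟩
      exact ⟨⟨i, k, k.2, fun h => hx (by simp [h]), mul_comm _ _⟩, hx⟩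
  have hdisj : Pairwise (Disjoint on fun i => ((K ∙ c i).toAddSubgroup : Set F) \ {0}) :=
    fun i j hij => Set.disjoint_left.2 fun x hi hj =>
      hi.2 <| AddSubgroup.disjoint_def.1
        (Subfield.disjoint_span_singleton (hdistinct i j hij)) hi.1 hj.1
  rw [Γ.adjMatrix_eq_cayleyMatrix hΓ, hS0, cayleyMatrix_iUnion hdisj,
    Finset.sum_congr rfl fun i _ => cayleyMatrix_diff_zero (zero_mem _), Finset.sum_sub_distrib,
    Finset.sum_const, Finset.card_univ, Nat.cast_smul_eq_nsmul]

end PeisertLines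

lemma SimpleGraph.charpoly_adjMatrix_real_of_span_singleton {F : Type*} [Field F] [Fintype F]
    [DecidableEq F] {q m : ℕ} (hm0 : m ≠ 0) (hm : m ≤ q) (hF : Fintype.card F = q ^ 2)
    {K : Subfield F} (hK : Nat.card K = q) {c : Fin m → F} (hc : ∀ i, c i ≠ 0)
    (hdistinct : ∀ i j, i ≠ j → c i / c j ∉ K) {S : Set F}
    (hS : S = ⋃ i, {x : F | ∃ k ∈ (K : Set F), k ≠ 0 ∧ x = c i * k})
    (Γ : SimpleGraph F) [DecidableRel Γ.Adj]
    (hΓ : ∀ x y : F, Γ.Adj x y ↔ x ≠ y ∧ x - y ∈ S) :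
    (Γ.adjMatrix ℝ).charpoly =
      (X - C ((m : ℝ) * (q - 1))) * (X - C ((q : ℝ) - m)) ^ (m * (q - 1)) *
        (X - C (-m : ℝ)) ^ ((q - 1) * (q + 1 - m)) := by
  have hq : 1 ≤ q := hK ▸ Nat.card_pos
  have hL : Pairwise fun i j => (K ∙ c i).toAddSubgroup.IsComplement' (K ∙ c j).toAddSubgroup :=
    fun i j hij => Subfield.isComplement'_span_singleton
      (by rw [Nat.card_eq_fintype_card, hF, hK]) (hc i) (hc j) (hdistinct i j hij)
  have hLq : ∀ i, Nat.card (K ∙ c i).toAddSubgroup = q := fun i =>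
    (Subfield.card_span_singleton (hc i)).trans hK
  have hA := Γ.adjMatrix_eq_sum_cayleyMatrix_span_singleton_sub ℝ hdistinct hS hΓ
  rw [Fintype.card_fin] at hA
  have hk : Γ.adjMatrix ℝ * (Matrix.of fun _ _ => 1) =
      ((m : ℝ) * (q - 1)) • Matrix.of fun _ _ => 1 := by
    simpa [hA] using sum_cayleyMatrix_sub_mul_ones (R := ℝ) hLq
  have hrs : (Γ.adjMatrix ℝ - ((q : ℝ) - m) • 1) * (Γ.adjMatrix ℝ - (-m : ℝ) • 1) =
      ((m : ℝ) * (m - 1)) • Matrix.of fun _ _ => 1 := by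
    simpa [hA] using sum_cayleyMatrix_sub_quadratic (R := ℝ) hL hLq
  have hm' : (1 : ℝ) ≤ m := by exact_mod_cast Nat.one_le_iff_ne_zero.2 hm0
  have hq' : (1 : ℝ) ≤ q := by exact_mod_cast hq
  have hq1 : ((q - 1 : ℕ) : ℝ) = q - 1 := by push_cast [Nat.cast_sub hq]; ring
  have hqm : ((q + 1 - m : ℕ) : ℝ) = q + 1 - m := by
    push_cast [Nat.cast_sub (hm.trans q.le_succ)]; ring
  exact (Γ.isHermitian_adjMatrix (R := ℝ)).charpoly_eq_of_sub_mul_sub_eq_smul_ones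
    (Γ.trace_adjMatrix (α := ℝ)) hk hrs
    (by nlinarith) (by linarith) (by rw [hF]; zify [hq, hm.trans q.le_succ]; ring)
    (by push_cast [hq1, hqm]; ring) (by rw [hF]; push_cast [hq1, hqm]; ring)

theorem stmt_3_general
    (q m : ℕ) (hm : m ≤ q)
    (F : Type) [Field F] [Fintype F] [DecidableEq F]
    (hF : Fintype.card F = q ^ 2)
    (K : Subfield F) (hK : Nat.card K = q)
    (c : Fin m → F) (hc : ∀ i, c i ≠ 0)
    (hdistinct : ∀ i j : Fin m, i ≠ j → c i / c j ∉ K)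
    (S : Set F)
    (hS : S = ⋃ i : Fin m, {x : F | ∃ k ∈ (K : Set F), k ≠ 0 ∧ x = c i * k})
    (hKS : ∀ k : F, k ∈ K → k ≠ 0 → k ∈ S)
    (X : SimpleGraph F) [DecidableRel X.Adj]
    (hX : ∀ x y : F, X.Adj x y ↔ x ≠ y ∧ x - y ∈ S) :
    (X.adjMatrix ℚ).charpoly =
      (Polynomial.X - Polynomial.C ((m : ℚ) * ((q : ℚ) - 1))) *
        (Polynomial.X - Polynomial.C ((q : ℚ) - (m : ℚ))) ^ (m * (q - 1)) *
        (Polynomial.X + Polynomial.C (m : ℚ)) ^ ((q - 1) * (q + 1 - m)) := by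
  have hm0 : m ≠ 0 := by
    rintro rfl
    simpa [hS] using hKS 1 K.one_mem one_ne_zero
  apply map_injective (algebraMap ℚ ℝ) (algebraMap ℚ ℝ).injective
  rw [← Matrix.charpoly_map, X.map_adjMatrix,
    X.charpoly_adjMatrix_real_of_span_singleton hm0 hm hF hK hc hdistinct hS hX]
  simp

/-- The characteristic polynomial (equivalently, the spectrum) of a Peisert-type
graph of type (m,q): eigenvalues m(q−1), q−m, −m with multiplicities
1, m(q−1), (q−1)(q+1−m). -/
theorem stmt_3
    (q m : ℕ) (hqodd : Odd q) (hqpp : IsPrimePow q) (hm : m ≤ q)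
    (F : Type) [Field F] [Fintype F] [DecidableEq F]
    (hF : Fintype.card F = q ^ 2)
    (K : Subfield F) (hK : Nat.card K = q)
    (c : Fin m → F) (hc : ∀ i, c i ≠ 0)
    (hdistinct : ∀ i j : Fin m, i ≠ j → c i / c j ∉ K)
    (S : Set F)
    (hS : S = ⋃ i : Fin m, {x : F | ∃ k ∈ (K : Set F), k ≠ 0 ∧ x = c i * k})
    (hKS : ∀ k : F, k ∈ K → k ≠ 0 → k ∈ S)
    (X : SimpleGraph F) [DecidableRel X.Adj]
    (hX : ∀ x y : F, X.Adj x y ↔ x ≠ y ∧ x - y ∈ S) :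
    (X.adjMatrix ℚ).charpoly =
      (Polynomial.X - Polynomial.C ((m : ℚ) * ((q : ℚ) - 1))) *
        (Polynomial.X - Polynomial.C ((q : ℚ) - (m : ℚ))) ^ (m * (q - 1)) *
        (Polynomial.X + Polynomial.C (m : ℚ)) ^ ((q - 1) * (q + 1 - m)) :=
  stmt_3_general q m hm F hF K hK c hc hdistinct S hS hKS X hX
end

section
/- Let q be an odd prime power and let X be a Peisert-type graph of type (m,q), with Laplacian matrix L = D − M over ℚ (D the diagonal matrix of vertex degrees and M the adjacency matrix), rows and columns indexed by Fin (q²) via a fixed bijection with F_{q²}. Then X is weakly Hadamard diagonalizable: there exists an invertible matrix P of size q² × q² over ℚ all of whose entries lie in {−1, 0, 1}, such that any two columns of P with indices i and j satisfying j ≥ i + 2 are orthogonal (their standard dot product is zero), and P⁻¹ L P is a diagonal matrix. -/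
/-!
View `F = 𝔽_{q²}` as a plane over `K = 𝔽_q`: it has `q + 1` lines through `0`, and the `q`
translates of each line partition `F`. The Laplacian of the Cayley graph sends `f` to
`u ↦ ∑ᵢ ∑_{k ∈ K} (f u - f (u - cᵢ k))`. Translating by `cᵢ K` preserves each translate of a
line `ℓ` when `cᵢ ∈ ℓ`, and otherwise `u - cᵢ K` meets every translate of `ℓ` exactly once; so
the constant vector and the differences of indicators of consecutive translates of a line are
eigenvectors, `1 + (q + 1)(q - 1) = q²` of them, with entries in `{-1, 0, 1}`. Two such
differences are orthogonal when their four translates are pairwise disjoint (same line) or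
because translates of different lines meet in exactly one point. Pairing the columns against
single indicators gives a lower triangular matrix with nonzero diagonal, hence invertibility.
-/

open Finset

namespace PeisertType

open scoped Classical

def colLine (q n : ℕ) : ℕ := (n - 1) / (q - 1)

def colShift (q n : ℕ) : ℕ := (n - 1) % (q - 1)

lemma colLine_le {q n : ℕ} (hq : 1 < q) (hn : n < q ^ 2) : colLine q n ≤ q := by
  obtain ⟨t, rfl⟩ : ∃ t, q = t + 2 := ⟨q - 2, by omega⟩
  refine Nat.lt_succ_iff.1 (Nat.div_lt_of_lt_mul ?_)
  rw [show t + 2 - 1 = t + 1 by omega, Nat.succ_eq_add_one]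
  ring_nf at hn ⊢
  omega

lemma colShift_add_one_lt {q : ℕ} (hq : 1 < q) (n : ℕ) : colShift q n + 1 < q := by
  have := Nat.mod_lt (n - 1) (show 0 < q - 1 by omega)
  unfold colShift; omega

lemma colShift_eq_of_colLine_eq {q n n' : ℕ} (hn : n ≠ 0) (hnn : n ≤ n')
    (h : colLine q n = colLine q n') : colShift q n' = colShift q n + (n' - n) := by
  have e := Nat.div_add_mod (n - 1) (q - 1)
  have e' := Nat.div_add_mod (n' - 1) (q - 1)
  unfold colLine at h; unfold colShift
  rw [← h] at e'
  omega

section Lines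

variable {F : Type*} [Field F] (K : Subfield F)

def OnLine (v t z : F) : Prop := (z - t) / v ∈ K

noncomputable def lineInd (v t z : F) : ℚ := if OnLine K v t z then 1 else 0

/-- The `q + 1` lines `K • dir a` (`a ≤ q`) through `0` of the `K`-plane `F`, and for each of
them `q` distinct parallel translates `shift a r + K • dir a` (`r < q`). -/
structure LineFrame (q : ℕ) where
  dir : ℕ → F
  shift : ℕ → ℕ → F
  dir_ne_zero : ∀ a, dir a ≠ 0
  dir_div_dir_notMem : ∀ a ≤ q, ∀ a' ≤ q, a ≠ a' → dir a / dir a' ∉ K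
  shift_sub_shift_div_notMem :
    ∀ a, ∀ r < q, ∀ r' < q, r ≠ r' → (shift a r - shift a r') / dir a ∉ K

variable {K}

lemma onLine_iff {v t z : F} (hv : v ≠ 0) : OnLine K v t z ↔ ∃ k ∈ K, z = t + v * k := by
  refine ⟨fun h => ⟨_, h, by field_simp; ring⟩, ?_⟩
  rintro ⟨k, hk, rfl⟩
  simpa [OnLine, hv] using hk

lemma onLine_sub_mul_iff {v t z c k : F} (hcv : c / v ∈ K) (hk : k ∈ K) :
    OnLine K v t (z - c * k) ↔ OnLine K v t z := by
  have hmem := K.mul_mem hcv hk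
  rw [OnLine, OnLine, show (z - c * k - t) / v = (z - t) / v - c / v * k by ring]
  exact ⟨fun h => by simpa using K.add_mem h hmem, fun h => K.sub_mem h hmem⟩

lemma not_onLine_of_onLine {v t t' z : F} (htt : (t - t') / v ∉ K) (h : OnLine K v t z) :
    ¬ OnLine K v t' z := fun h' =>
  htt (by convert K.sub_mem h' h using 1; ring)

lemma lineInd_mul_lineInd_of_notMem {v t t' : F} (htt : (t - t') / v ∉ K) (z : F) :
    lineInd K v t z * lineInd K v t' z = 0 := by
  unfold lineInd
  split_ifs with h h' <;> simp_all [not_onLine_of_onLine htt]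

lemma eq_of_add_div_add_mem {x u u' : F} (hx : x ∉ K) (hu : u ∈ K) (hu' : u' ∈ K)
    (h : (x + u) / (x + u') ∈ K) : u = u' := by
  have hne : x + u' ≠ 0 := fun h0 => hx (by
    rw [eq_neg_of_add_eq_zero_left h0]; exact K.neg_mem hu')
  set l := (x + u) / (x + u')
  have hl : l * (x + u') = x + u := div_mul_cancel₀ _ hne
  by_cases hl1 : l = 1
  · rw [hl1, one_mul] at hl
    exact (add_left_cancel hl).symm
  · refine absurd ?_ hx
    rw [show x = (u - l * u') / (l - 1) by
      rw [eq_div_iff (sub_ne_zero.2 hl1)]; linear_combination hl]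
    exact K.div_mem (K.sub_mem hu (K.mul_mem h hu')) (K.sub_mem h K.one_mem)

lemma mul_notMem_of_mem {d y : F} (hd : d ∈ K) (hd0 : d ≠ 0) (hy : y ∉ K) : d * y ∉ K :=
  fun h => hy (by simpa [hd0] using K.mul_mem (K.inv_mem hd) h)

namespace LineFrame

variable {q : ℕ} (L : LineFrame K q)

noncomputable def ind (a r : ℕ) (z : F) : ℚ := lineInd K (L.dir a) (L.shift a r) z

/-- For `1 ≤ n < q ^ 2`, `n ↦ (colLine q n, colShift q n)` runs through all pairs of a line
`a ≤ q` and a pair `r, r + 1` of consecutive translates (`r < q - 1`). -/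
noncomputable def column (n : ℕ) (z : F) : ℚ :=
  if n = 0 then 1
  else L.ind (colLine q n) (colShift q n) z - L.ind (colLine q n) (colShift q n + 1) z

noncomputable def row (n : ℕ) (z : F) : ℚ :=
  if n = 0 then 1 else L.ind (colLine q n) (colShift q n) z

lemma column_of_ne_zero {n : ℕ} (hn : n ≠ 0) (z : F) :
    L.column n z =
      L.ind (colLine q n) (colShift q n) z - L.ind (colLine q n) (colShift q n + 1) z :=
  if_neg hn

lemma column_eq_neg_one_or_zero_or_one (n : ℕ) (z : F) :
    L.column n z = -1 ∨ L.column n z = 0 ∨ L.column n z = 1 := by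
  unfold column ind lineInd
  split_ifs <;> norm_num

lemma ind_mul_ind {a r r' : ℕ} (hr : r < q) (hr' : r' < q) (hrr : r ≠ r') (z : F) :
    L.ind a r z * L.ind a r' z = 0 :=
  lineInd_mul_lineInd_of_notMem (L.shift_sub_shift_div_notMem a r hr r' hr' hrr) z

lemma ind_mul_self (a r : ℕ) (z : F) : L.ind a r z * L.ind a r z = L.ind a r z := by
  unfold ind lineInd; split_ifs <;> norm_num

end LineFrame

end Lines

section Counting

variable {F : Type*} [Field F] [Fintype F] {K : Subfield F}

lemma sum_lineInd {v : F} (hv : v ≠ 0) (t : F) :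
    ∑ z, lineInd K v t z = Fintype.card K := by
  let e : {z // OnLine K v t z} ≃ K :=
    { toFun z := ⟨(z - t) / v, z.2⟩
      invFun k := ⟨t + v * k, (onLine_iff hv).2 ⟨k, k.2, rfl⟩⟩
      left_inv z := by ext; field_simp; ring
      right_inv k := by ext; field_simp; ring }
  simp only [lineInd, sum_boole, ← Fintype.card_subtype, Fintype.card_congr e]

lemma bijective_mul_add_mul (hF : Fintype.card F = Fintype.card K ^ 2) {u v : F}
    (hv : v ≠ 0) (huv : u / v ∉ K) :
    Function.Bijective fun p : K × K => u * p.1 + v * p.2 := by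
  rw [Fintype.bijective_iff_injective_and_card, Fintype.card_prod, hF, sq]
  refine ⟨fun ⟨α, β⟩ ⟨α', β'⟩ h => ?_, rfl⟩
  simp only at h
  by_cases hαα : (α : F) = α'
  · have hββ : (β : F) = β' := mul_left_cancel₀ hv (by linear_combination h - u * hαα)
    exact Prod.ext (Subtype.ext hαα) (Subtype.ext hββ)
  · have huv' : u / v = (β' - β) / (α - α') := by
      rw [div_eq_div_iff hv (sub_ne_zero.mpr hαα)]
      linear_combination h
    exact absurd (K.div_mem (K.sub_mem β'.2 β.2) (K.sub_mem α.2 α'.2)) (huv' ▸ huv)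

lemma existsUnique_onLine_and_onLine (hF : Fintype.card F = Fintype.card K ^ 2) {v v' : F}
    (hv : v ≠ 0) (hv' : v' ≠ 0) (hvv : v / v' ∉ K) (t t' : F) :
    ∃! z, OnLine K v t z ∧ OnLine K v' t' z := by
  obtain ⟨⟨α, β⟩, hp, huniq⟩ := (bijective_mul_add_mul hF hv' hvv).existsUnique (t' - t)
  refine ⟨t + v * α, ⟨(onLine_iff hv).2 ⟨α, α.2, rfl⟩,
    (onLine_iff hv').2 ⟨-β, K.neg_mem β.2, by linear_combination hp⟩⟩, ?_⟩
  rintro z ⟨h, h'⟩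
  obtain ⟨α', hα', rfl⟩ := (onLine_iff hv).1 h
  obtain ⟨β', hβ', hz⟩ := (onLine_iff hv').1 h'
  have := huniq (⟨α', hα'⟩, ⟨-β', K.neg_mem hβ'⟩) (by simp only; linear_combination hz)
  rw [show α' = α from congrArg (fun p : K × K => (p.1 : F)) this]

lemma existsUnique_onLine_sub_mul (hF : Fintype.card F = Fintype.card K ^ 2) {v c : F}
    (hv : v ≠ 0) (hcv : c / v ∉ K) (t z : F) : ∃! k : K, OnLine K v t (z - c * k) := by
  obtain ⟨⟨α, β⟩, hp, huniq⟩ := (bijective_mul_add_mul hF hv hcv).existsUnique (z - t)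
  refine ⟨α, (onLine_iff hv).2 ⟨β, β.2, by linear_combination -hp⟩, fun k hk => ?_⟩
  obtain ⟨β', hβ', hz⟩ := (onLine_iff hv).1 hk
  have := huniq (k, ⟨β', hβ'⟩) (by simp only; linear_combination -hz)
  rw [Prod.ext_iff] at this
  exact this.1

lemma sum_lineInd_mul_lineInd (hF : Fintype.card F = Fintype.card K ^ 2) {v v' : F}
    (hv : v ≠ 0) (hv' : v' ≠ 0) (hvv : v / v' ∉ K) (t t' : F) :
    ∑ z, lineInd K v t z * lineInd K v' t' z = 1 := by
  simp only [lineInd, ite_zero_mul_ite_zero, mul_one, sum_boole,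
    (Fintype.existsUnique_iff_card_one _).1 (existsUnique_onLine_and_onLine hF hv hv' hvv t t'),
    Nat.cast_one]

lemma sum_lineInd_sub_mul (hF : Fintype.card F = Fintype.card K ^ 2) {v c : F} (hv : v ≠ 0)
    (hcv : c / v ∉ K) (t z : F) : ∑ k : K, lineInd K v t (z - c * k) = 1 := by
  simp only [lineInd, sum_boole,
    (Fintype.existsUnique_iff_card_one _).1 (existsUnique_onLine_sub_mul hF hv hcv t z),
    Nat.cast_one]

lemma nonempty_lineFrame {q : ℕ} (hK : Fintype.card K = q) (hF : Fintype.card F = q ^ 2) :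
    Nonempty (LineFrame K q) := by
  have hq : 1 < q := hK ▸ Fintype.one_lt_card
  obtain ⟨ζ, hζ⟩ : ∃ ζ : F, ζ ∉ K := by
    by_contra! hall
    have := Fintype.card_le_of_injective (fun z : F => (⟨z, hall z⟩ : K))
      fun _ _ h => congrArg Subtype.val h
    rw [hF, hK] at this
    nlinarith
  let f := (Fintype.equivFinOfCardEq hK).symm
  let κ : ℕ → F := fun r => if h : r < q then f ⟨r, h⟩ else 0
  have hκ (r : ℕ) : κ r ∈ K := by
    by_cases h : r < q <;> simp [κ, h]
  have hκinj {r r' : ℕ} (hr : r < q) (hr' : r' < q) (h : κ r = κ r') : r = r' := by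
    simpa [κ, hr, hr', Subtype.ext_iff] using h
  have hζu {u : F} (hu : u ∈ K) : ζ + u ∉ K := fun h => hζ ((add_mem_cancel_right hu).1 h)
  have hζu0 {u : F} (hu : u ∈ K) : ζ + u ≠ 0 := fun h => hζu hu (h ▸ K.zero_mem)
  -- `{1, ζ}` is a `K`-basis: the lines are `K` and `K (ζ + k)`, translated along `ζ` resp. `1`.
  refine ⟨⟨fun a => if a = 0 then 1 else ζ + κ (a - 1),
    fun a r => κ r * if a = 0 then ζ else 1, fun a => ?_, fun a ha a' ha' haa => ?_,
    fun a r hr r' hr' hrr => ?_⟩⟩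
  · split_ifs
    exacts [one_ne_zero, hζu0 (hκ _)]
  · rcases eq_or_ne a 0 with rfl | ha0 <;> rcases eq_or_ne a' 0 with rfl | ha0'
    · exact absurd rfl haa
    · simpa [ha0', inv_mem_iff] using hζu (hκ (a' - 1))
    · simpa [ha0] using hζu (hκ (a - 1))
    · simp only [ha0, ha0', if_false]
      exact fun h => haa (by
        have := hκinj (by omega) (by omega) (eq_of_add_div_add_mem hζ (hκ _) (hκ _) h)
        omega)
  · have hd : κ r - κ r' ≠ 0 := sub_ne_zero.2 fun h => hrr (hκinj hr hr' h)
    rw [← sub_mul, mul_div_assoc]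
    refine mul_notMem_of_mem (K.sub_mem (hκ r) (hκ r')) hd ?_
    split_ifs
    · simpa using hζ
    · simpa [inv_mem_iff] using hζu (hκ (a - 1))

namespace LineFrame

variable {q : ℕ} (L : LineFrame K q)

lemma sum_ind (a r : ℕ) : ∑ z, L.ind a r z = Fintype.card K :=
  sum_lineInd (L.dir_ne_zero a) _

lemma sum_ind_mul_ind (hF : Fintype.card F = Fintype.card K ^ 2) {a a' : ℕ} (ha : a ≤ q)
    (ha' : a' ≤ q) (haa : a ≠ a') (r r' : ℕ) : ∑ z, L.ind a r z * L.ind a' r' z = 1 :=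
  sum_lineInd_mul_lineInd hF (L.dir_ne_zero a) (L.dir_ne_zero a')
    (L.dir_div_dir_notMem a ha a' ha' haa) _ _

lemma sum_column {n : ℕ} (hn : n ≠ 0) : ∑ z, L.column n z = 0 := by
  simp only [L.column_of_ne_zero hn, sum_sub_distrib, sum_ind, sub_self]

lemma sum_ind_mul_column (hF : Fintype.card F = Fintype.card K ^ 2) (hq : 1 < q) {a r n : ℕ}
    (ha : a ≤ q) (hr : r < q) (hn : n ≠ 0) (hn' : n < q ^ 2)
    (h : a = colLine q n → r ≠ colShift q n ∧ r ≠ colShift q n + 1) :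
    ∑ z, L.ind a r z * L.column n z = 0 := by
  have hj := colShift_add_one_lt hq n
  simp only [L.column_of_ne_zero hn, mul_sub, sum_sub_distrib]
  by_cases haa : a = colLine q n
  · obtain ⟨h1, h2⟩ := h haa
    subst haa
    simp only [L.ind_mul_ind hr (by omega) h1, L.ind_mul_ind hr hj h2, sum_const_zero, sub_self]
  · rw [L.sum_ind_mul_ind hF ha (colLine_le hq hn') haa,
      L.sum_ind_mul_ind hF ha (colLine_le hq hn') haa, sub_self]

lemma sum_column_mul_column (hF : Fintype.card F = Fintype.card K ^ 2) (hq : 1 < q)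
    {n n' : ℕ} (hnn : n + 2 ≤ n') (hn' : n' < q ^ 2) :
    ∑ z, L.column n z * L.column n' z = 0 := by
  rcases eq_or_ne n 0 with rfl | hn
  · simpa [column] using L.sum_column (n := n') (by omega)
  have ha := colLine_le hq (n := n) (by omega)
  have hj := colShift_add_one_lt hq n
  have hshift (haa : colLine q n = colLine q n') :=
    colShift_eq_of_colLine_eq hn (by omega) haa
  simp only [L.column_of_ne_zero hn, sub_mul, sum_sub_distrib]
  rw [L.sum_ind_mul_column hF hq ha (by omega) (by omega) hn' fun haa => ?_,
    L.sum_ind_mul_column hF hq ha hj (by omega) hn' fun haa => ?_, sub_self]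
  all_goals have := hshift haa; omega

lemma sum_row_mul_column (hF : Fintype.card F = Fintype.card K ^ 2) (hq : 1 < q)
    {n n' : ℕ} (hnn : n < n') (hn' : n' < q ^ 2) : ∑ z, L.row n z * L.column n' z = 0 := by
  rcases eq_or_ne n 0 with rfl | hn
  · simpa [row] using L.sum_column (n := n') (by omega)
  have hj := colShift_add_one_lt hq n
  simp only [row, if_neg hn]
  exact L.sum_ind_mul_column hF hq (colLine_le hq (by omega)) (by omega) (by omega) hn'
    fun haa => by have := colShift_eq_of_colLine_eq hn hnn.le haa; omega

lemma sum_row_mul_column_self_ne_zero (hq : 1 < q) (n : ℕ) :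
    ∑ z, L.row n z * L.column n z ≠ 0 := by
  rcases eq_or_ne n 0 with rfl | hn
  · simp [row, column]
  have hj := colShift_add_one_lt hq n
  simp only [row, if_neg hn, L.column_of_ne_zero hn, mul_sub, L.ind_mul_self,
    L.ind_mul_ind (by omega : colShift q n < q) hj (by omega), sub_zero, sum_ind]
  exact_mod_cast Fintype.card_ne_zero

noncomputable def translationEigenvalue (n : ℕ) (c : F) : ℚ :=
  if n ≠ 0 ∧ c / L.dir (colLine q n) ∉ K then Fintype.card K else 0

lemma sum_column_sub_column_sub_mul (hF : Fintype.card F = Fintype.card K ^ 2) (n : ℕ)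
    (c u : F) :
    ∑ k : K, (L.column n u - L.column n (u - c * k)) =
      L.translationEigenvalue n c * L.column n u := by
  unfold translationEigenvalue
  rcases eq_or_ne n 0 with rfl | hn
  · simp [column]
  by_cases hcv : c / L.dir (colLine q n) ∈ K
  · simp only [L.column_of_ne_zero hn, ind, lineInd, onLine_sub_mul_iff hcv (Subtype.prop _),
      sub_self, sum_const_zero]
    simp [hcv]
  · rw [if_pos ⟨hn, hcv⟩, sum_sub_distrib, sum_const, card_univ, nsmul_eq_mul]
    simp only [L.column_of_ne_zero hn, sum_sub_distrib, ind,
      sum_lineInd_sub_mul hF (L.dir_ne_zero _) hcv, sub_self, sub_zero]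

noncomputable def toMatrix (e : Fin (q ^ 2) ≃ F) : Matrix (Fin (q ^ 2)) (Fin (q ^ 2)) ℚ :=
  Matrix.of fun x n => L.column n (e x)

lemma isUnit_toMatrix (hF : Fintype.card F = Fintype.card K ^ 2) (hq : 1 < q)
    (e : Fin (q ^ 2) ≃ F) : IsUnit (L.toMatrix e) := by
  let R : Matrix (Fin (q ^ 2)) (Fin (q ^ 2)) ℚ := Matrix.of fun n x => L.row n (e x)
  have hRP (n n' : Fin (q ^ 2)) : (R * L.toMatrix e) n n' = ∑ z, L.row n z * L.column n' z :=
    e.sum_comp fun z => L.row n z * L.column n' z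
  have htri : (R * L.toMatrix e).IsLowerTriangular := fun n n' h =>
    (hRP n n').trans (L.sum_row_mul_column hF hq h n'.isLt)
  have hdet : (R * L.toMatrix e).det ≠ 0 := by
    rw [Matrix.det_of_isLowerTriangular _ htri]
    exact prod_ne_zero_iff.2 fun n _ => hRP n n ▸ L.sum_row_mul_column_self_ne_zero hq n
  rw [Matrix.det_mul] at hdet
  exact (Matrix.isUnit_iff_isUnit_det _).2 (isUnit_iff_ne_zero.2 (right_ne_zero_of_mul hdet))

end LineFrame

end Counting

section Cayley

open Matrix

variable {F : Type*} [Field F] [Fintype F] [DecidableEq F] {K : Subfield F} {m : ℕ}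
  {c : Fin m → F} {S : Set F} {X : SimpleGraph F} [DecidableRel X.Adj]

lemma lapMatrix_mulVec_apply_eq_sum (hc : ∀ i, c i ≠ 0)
    (hdistinct : ∀ i j : Fin m, i ≠ j → c i / c j ∉ K)
    (hS : S = ⋃ i : Fin m, {x : F | ∃ k ∈ (K : Set F), k ≠ 0 ∧ x = c i * k})
    (hX : ∀ x y : F, X.Adj x y ↔ x ≠ y ∧ x - y ∈ S) (f : F → ℚ) (u : F) :
    (X.lapMatrix ℚ *ᵥ f) u = ∑ i, ∑ k : K, (f u - f (u - c i * k)) := by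
  let g : Fin m × K → F := fun p => u - c p.1 * p.2
  let T : Finset (Fin m × K) := univ.filter fun p => (p.2 : F) ≠ 0
  have hN : X.neighborFinset u = T.image g := by
    ext z
    simp only [SimpleGraph.mem_neighborFinset, hX, hS, Set.mem_iUnion, Set.mem_ofPred_eq,
      mem_image, mem_filter, mem_univ, true_and, g, T]
    constructor
    · rintro ⟨-, i, k, hk, hk0, hz⟩
      exact ⟨(i, ⟨k, hk⟩), hk0, by linear_combination hz⟩
    · rintro ⟨⟨i, k⟩, hk0, rfl⟩
      exact ⟨fun h => mul_ne_zero (hc i) hk0 (by linear_combination h), i, k, k.2, hk0, by ring⟩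
  have hg : Set.InjOn g T := by
    rintro ⟨i, k⟩ hk ⟨i', k'⟩ hk' h
    simp only [coe_filter, mem_univ, true_and, Set.mem_ofPred_eq, g, T] at hk hk' h
    have hik : c i * k = c i' * k' := by linear_combination -h
    obtain rfl : i = i' := by
      by_contra hii
      refine hdistinct i i' hii ?_
      rw [show c i / c i' = k' / k by
        rw [div_eq_div_iff (hc i') hk]; linear_combination hik]
      exact K.div_mem k'.2 k.2
    exact Prod.ext rfl (Subtype.ext (mul_left_cancel₀ (hc i) hik))
  rw [SimpleGraph.lapMatrix_mulVec_apply, ← SimpleGraph.card_neighborFinset_eq_degree,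
    ← nsmul_eq_mul, ← sum_const, ← sum_sub_distrib, hN, sum_image hg,
    sum_filter_of_ne fun p _ hp => ?_, Fintype.sum_prod_type]
  contrapose! hp
  simp [g, hp]

lemma LineFrame.lapMatrix_submatrix_mul_toMatrix {q : ℕ} (L : LineFrame K q)
    (hF : Fintype.card F = Fintype.card K ^ 2) (hc : ∀ i, c i ≠ 0)
    (hdistinct : ∀ i j : Fin m, i ≠ j → c i / c j ∉ K)
    (hS : S = ⋃ i : Fin m, {x : F | ∃ k ∈ (K : Set F), k ≠ 0 ∧ x = c i * k})
    (hX : ∀ x y : F, X.Adj x y ↔ x ≠ y ∧ x - y ∈ S) (e : Fin (q ^ 2) ≃ F) :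
    (X.lapMatrix ℚ).submatrix e e * L.toMatrix e =
      L.toMatrix e * diagonal fun n : Fin (q ^ 2) => ∑ i, L.translationEigenvalue n (c i) := by
  ext x n
  have := lapMatrix_mulVec_apply_eq_sum hc hdistinct hS hX (L.column n) (e x)
  rw [mulVec, dotProduct] at this
  rw [mul_diagonal, mul_apply]
  simp only [submatrix_apply, toMatrix, of_apply]
  rw [e.sum_comp fun z => X.lapMatrix ℚ (e x) z * L.column n z, this]
  simp only [L.sum_column_sub_column_sub_mul hF]
  rw [← sum_mul, mul_comm]

end Cayley

end PeisertType

theorem stmt_4_general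
    (q m : ℕ)
    (F : Type) [Field F] [Fintype F] [DecidableEq F]
    (hF : Fintype.card F = q ^ 2)
    (K : Subfield F) (hK : Nat.card K = q)
    (c : Fin m → F) (hc : ∀ i, c i ≠ 0)
    (hdistinct : ∀ i j : Fin m, i ≠ j → c i / c j ∉ K)
    (S : Set F)
    (hS : S = ⋃ i : Fin m, {x : F | ∃ k ∈ (K : Set F), k ≠ 0 ∧ x = c i * k})
    (X : SimpleGraph F) [DecidableRel X.Adj]
    (hX : ∀ x y : F, X.Adj x y ↔ x ≠ y ∧ x - y ∈ S)
    (e : Fin (q ^ 2) ≃ F) :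
    ∃ P : Matrix (Fin (q ^ 2)) (Fin (q ^ 2)) ℚ,
      IsUnit P ∧
      (∀ i j : Fin (q ^ 2), P i j = -1 ∨ P i j = 0 ∨ P i j = 1) ∧
      (∀ i j : Fin (q ^ 2), (i : ℕ) + 2 ≤ (j : ℕ) → ∑ k, P k i * P k j = 0) ∧
      ∃ d : Fin (q ^ 2) → ℚ,
        P⁻¹ * ((X.lapMatrix ℚ).submatrix e e) * P = Matrix.diagonal d := by
  classical
  rw [Nat.card_eq_fintype_card] at hK
  have hq : 1 < q := hK ▸ Fintype.one_lt_card
  have hFK : Fintype.card F = Fintype.card K ^ 2 := hK ▸ hF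
  obtain ⟨L⟩ := PeisertType.nonempty_lineFrame hK hF
  have hP := L.isUnit_toMatrix hFK hq e
  refine ⟨L.toMatrix e, hP, fun x n => L.column_eq_neg_one_or_zero_or_one n (e x),
    fun i j hij => ?_, fun n => ∑ i, L.translationEigenvalue n (c i), ?_⟩
  · exact (e.sum_comp fun z => L.column i z * L.column j z).trans
      (L.sum_column_mul_column hFK hq hij j.isLt)
  · rw [Matrix.mul_assoc, L.lapMatrix_submatrix_mul_toMatrix hFK hc hdistinct hS hX e,
      Matrix.nonsing_inv_mul_cancel_left _ _ ((Matrix.isUnit_iff_isUnit_det _).1 hP)]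

/-- Peisert-type graphs are weakly Hadamard diagonalizable: the Laplacian (indexed by
`Fin (q²)` via any fixed bijection with `F_{q²}`) is diagonalized by an invertible
matrix with entries in {−1,0,1} whose non-consecutive columns are orthogonal. -/
theorem stmt_4
    (q m : ℕ) (hqodd : Odd q) (hqpp : IsPrimePow q) (hm : m ≤ q)
    (F : Type) [Field F] [Fintype F] [DecidableEq F]
    (hF : Fintype.card F = q ^ 2)
    (K : Subfield F) (hK : Nat.card K = q)
    (c : Fin m → F) (hc : ∀ i, c i ≠ 0)
    (hdistinct : ∀ i j : Fin m, i ≠ j → c i / c j ∉ K)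
    (S : Set F)
    (hS : S = ⋃ i : Fin m, {x : F | ∃ k ∈ (K : Set F), k ≠ 0 ∧ x = c i * k})
    (hKS : ∀ k : F, k ∈ K → k ≠ 0 → k ∈ S)
    (X : SimpleGraph F) [DecidableRel X.Adj]
    (hX : ∀ x y : F, X.Adj x y ↔ x ≠ y ∧ x - y ∈ S)
    (e : Fin (q ^ 2) ≃ F) :
    ∃ P : Matrix (Fin (q ^ 2)) (Fin (q ^ 2)) ℚ,
      IsUnit P ∧
      (∀ i j : Fin (q ^ 2), P i j = -1 ∨ P i j = 0 ∨ P i j = 1) ∧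
      (∀ i j : Fin (q ^ 2), (i : ℕ) + 2 ≤ (j : ℕ) → ∑ k, P k i * P k j = 0) ∧
      ∃ d : Fin (q ^ 2) → ℚ,
        P⁻¹ * ((X.lapMatrix ℚ).submatrix e e) * P = Matrix.diagonal d :=
  stmt_4_general q m F hF K hK c hc hdistinct S hS X hX e
end

section
/- Let q be an odd prime power and let X be a Peisert-type graph of type (m,q). Then the clique number of X equals q and the chromatic number of X equals q. -/
/-!
Every nonzero element of the subfield `K` lies in `S`, so `K` is a clique of size `q`.
Since `S` has at most `m (q - 1) < q² - 1` elements, some `d ≠ 0` lies outside `S`; as `S` is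
closed under multiplication by `K*`, no nonzero element of the line `K d` lies in `S`.
Hence each of the `q` cosets of `K d` is independent, which colours `X` with `q` colours.
-/

open SimpleGraph

section CayleyGraph

variable {G : Type*} [AddCommGroup G] {S : Set G} {X : SimpleGraph G}

theorem isClique_of_forall_mem (hX : ∀ x y, X.Adj x y ↔ x ≠ y ∧ x - y ∈ S)
    (K : AddSubgroup G) (hKS : ∀ k ∈ K, k ≠ 0 → k ∈ S) : X.IsClique (K : Set G) :=
  fun x hx y hy hxy => (hX x y).2 ⟨hxy, hKS _ (K.sub_mem hx hy) (sub_ne_zero.2 hxy)⟩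

theorem colorable_index_of_forall_notMem (hX : ∀ x y, X.Adj x y ↔ x ≠ y ∧ x - y ∈ S)
    (L : AddSubgroup G) [L.FiniteIndex] (hL : ∀ x ∈ L, x ≠ 0 → x ∉ S) :
    X.Colorable L.index := by
  have : Fintype (G ⧸ L) := Fintype.ofFinite _
  let C : X.Coloring (G ⧸ L) := Coloring.mk (↑) fun {x y} hadj hxy => by
    obtain ⟨hne, hmem⟩ := (hX x y).1 hadj
    have hL' : x - y ∈ L := by
      simpa [neg_add_eq_sub] using L.neg_mem (QuotientAddGroup.eq.1 hxy)
    exact hL _ hL' (sub_ne_zero.2 hne) hmem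
  rw [AddSubgroup.index, Nat.card_eq_fintype_card]
  exact C.colorable

end CayleyGraph

theorem SimpleGraph.cliqueNum_eq_and_chromaticNumber_eq {V : Type*} [Finite V]
    {X : SimpleGraph V} {s : Finset V} {n : ℕ} (hs : X.IsNClique n s) (hn : X.Colorable n) :
    X.cliqueNum = n ∧ X.chromaticNumber = n := by
  refine ⟨le_antisymm ?_ ?_, le_antisymm hn.chromaticNumber_le ?_⟩
  · obtain ⟨t, ht⟩ := X.exists_isNClique_cliqueNum
    exact ht.card_eq ▸ ht.isClique.card_le_of_colorable hn
  · exact hs.card_eq ▸ hs.isClique.card_le_cliqueNum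
  · exact hs.card_eq ▸ hs.isClique.card_le_chromaticNumber

section PeisertSet

variable {F : Type*} [Field F] {ι : Type*}

def peisertSet (K : Subfield F) (c : ι → F) : Set F :=
  ⋃ i, {x : F | ∃ k ∈ (K : Set F), k ≠ 0 ∧ x = c i * k}

variable {K : Subfield F} {c : ι → F}

theorem mul_mem_peisertSet {s k : F} (hs : s ∈ peisertSet K c) (hk : k ∈ K) (hk0 : k ≠ 0) :
    s * k ∈ peisertSet K c := by
  obtain ⟨_, ⟨i, rfl⟩, k', hk', hk'0, rfl⟩ := hs
  exact Set.mem_iUnion.2 ⟨i, k' * k, K.mul_mem hk' hk, mul_ne_zero hk'0 hk0, mul_assoc _ _ _⟩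

theorem ncard_peisertSet_le [Finite F] [Fintype ι] :
    (peisertSet K c).ncard ≤ Fintype.card ι * (Nat.card K - 1) := by
  have hcoset (i : ι) : {x : F | ∃ k ∈ (K : Set F), k ≠ 0 ∧ x = c i * k} =
      (c i * ·) '' ((K : Set F) \ {0}) := by
    ext x
    simp [eq_comm, and_assoc]
  calc (peisertSet K c).ncard
      ≤ ∑ i : ι, {x : F | ∃ k ∈ (K : Set F), k ≠ 0 ∧ x = c i * k}.ncard :=
        Set.ncard_iUnion_le_of_fintype _
    _ ≤ ∑ _i : ι, (Nat.card K - 1) := Finset.sum_le_sum fun i _ => by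
        rw [hcoset, ← SetLike.coe_sort_coe, Nat.card_coe_set_eq,
          ← Set.ncard_sdiff_singleton_of_mem K.zero_mem]
        exact Set.ncard_image_le
    _ = Fintype.card ι * (Nat.card K - 1) := by simp

theorem exists_ne_zero_notMem_peisertSet [Finite F] [Fintype ι] {q : ℕ}
    (hF : Nat.card F = q ^ 2) (hK : Nat.card K = q) (hι : Fintype.card ι ≤ q) :
    ∃ d : F, d ≠ 0 ∧ d ∉ peisertSet K c := by
  subst hK
  by_contra! h
  have hq : 2 ≤ Nat.card K := Finite.one_lt_card
  have hcover : (Set.univ : Set F) ⊆ peisertSet K c ∪ {0} := fun x _ => by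
    by_cases hx : x = 0
    exacts [Or.inr hx, Or.inl (h x hx)]
  have : Nat.card K ^ 2 ≤ Nat.card K * (Nat.card K - 1) + 1 :=
    calc Nat.card K ^ 2 = (Set.univ : Set F).ncard := by rw [Set.ncard_univ, hF]
      _ ≤ (peisertSet K c ∪ {0}).ncard := Set.ncard_le_ncard hcover
      _ ≤ (peisertSet K c).ncard + 1 := Set.ncard_union_le _ _ |>.trans_eq (by simp)
      _ ≤ Nat.card K * (Nat.card K - 1) + 1 := by
        gcongr
        exact ncard_peisertSet_le.trans (Nat.mul_le_mul_right _ hι)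
  obtain ⟨r, hr⟩ : ∃ r, Nat.card K = r + 2 := ⟨Nat.card K - 2, by omega⟩
  rw [hr, show r + 2 - 1 = r + 1 by omega] at this
  nlinarith

end PeisertSet

section SpanSingleton

variable {F : Type*} [Field F] {K : Subfield F} {S : Set F}

theorem notMem_of_mem_span_singleton (hS : ∀ s ∈ S, ∀ k ∈ K, k ≠ 0 → s * k ∈ S) {d : F}
    (hd : d ∉ S) : ∀ x ∈ K ∙ d, x ≠ 0 → x ∉ S := by
  rintro _ hx hx0 hxS
  obtain ⟨k, rfl⟩ := Submodule.mem_span_singleton.1 hx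
  rw [Subfield.smul_def, smul_eq_mul] at hx0 hxS
  have hk0 : (k : F) ≠ 0 := left_ne_zero_of_mul hx0
  have hd_eq : (k : F) * d * (k : F)⁻¹ = d := by field_simp
  exact hd (hd_eq ▸ hS _ hxS _ (K.inv_mem k.2) (inv_ne_zero hk0))

theorem nat_card_span_singleton {d : F} (hd : d ≠ 0) : Nat.card (K ∙ d) = Nat.card K :=
  (Nat.card_congr (LinearEquiv.toSpanNonzeroSingleton K F d hd).toEquiv).symm

end SpanSingleton

theorem stmt_5_general
    (q m : ℕ) (hm : m ≤ q)
    (F : Type) [Field F] [Fintype F]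
    (hF : Fintype.card F = q ^ 2)
    (K : Subfield F) (hK : Nat.card K = q)
    (c : Fin m → F)
    (S : Set F)
    (hS : S = ⋃ i : Fin m, {x : F | ∃ k ∈ (K : Set F), k ≠ 0 ∧ x = c i * k})
    (hKS : ∀ k : F, k ∈ K → k ≠ 0 → k ∈ S)
    (X : SimpleGraph F)
    (hX : ∀ x y : F, X.Adj x y ↔ x ≠ y ∧ x - y ∈ S) :
    X.cliqueNum = q ∧ X.chromaticNumber = (q : ℕ∞) := by
  classical
  change S = peisertSet K c at hS
  subst hS
  obtain ⟨d, hd0, hdS⟩ := exists_ne_zero_notMem_peisertSet (c := c)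
    (Nat.card_eq_fintype_card.trans hF) hK (by simpa using hm)
  have hclique : X.IsNClique q (K : Set F).toFinset := by
    refine ⟨by simpa using isClique_of_forall_mem hX K.toAddSubgroup hKS, ?_⟩
    rw [← Set.ncard_eq_toFinset_card', ← Nat.card_coe_set_eq, SetLike.coe_sort_coe, hK]
  let L := (K ∙ d).toAddSubgroup
  have hindex : L.index = q := by
    have hq : 0 < q := hK ▸ Nat.card_pos
    have h := L.index_mul_card
    rw [show Nat.card L = q from hK ▸ nat_card_span_singleton hd0, Nat.card_eq_fintype_card, hF,
      sq] at h
    exact Nat.eq_of_mul_eq_mul_right hq h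
  have hcol : X.Colorable q := hindex ▸ colorable_index_of_forall_notMem hX L
    (notMem_of_mem_span_singleton (fun _ hs _ => mul_mem_peisertSet hs) hdS)
  exact cliqueNum_eq_and_chromaticNumber_eq hclique hcol

/-- A Peisert-type graph of order q² has clique number q and chromatic number q. -/
theorem stmt_5
    (q m : ℕ) (hqodd : Odd q) (hqpp : IsPrimePow q) (hm : m ≤ q)
    (F : Type) [Field F] [Fintype F] [DecidableEq F]
    (hF : Fintype.card F = q ^ 2)
    (K : Subfield F) (hK : Nat.card K = q)
    (c : Fin m → F) (hc : ∀ i, c i ≠ 0)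
    (hdistinct : ∀ i j : Fin m, i ≠ j → c i / c j ∉ K)
    (S : Set F)
    (hS : S = ⋃ i : Fin m, {x : F | ∃ k ∈ (K : Set F), k ≠ 0 ∧ x = c i * k})
    (hKS : ∀ k : F, k ∈ K → k ≠ 0 → k ∈ S)
    (X : SimpleGraph F)
    (hX : ∀ x y : F, X.Adj x y ↔ x ≠ y ∧ x - y ∈ S) :
    X.cliqueNum = q ∧ X.chromaticNumber = (q : ℕ∞) :=
  stmt_5_general q m hm F hF K hK c S hS hKS X hX
end

section
/- Let q be an odd prime power, let X be a Peisert-type graph of type (m,q), and suppose q > (m−1)². Then X has the strict-EKR property: every clique of size q in X is a canonical clique, i.e., equals aF_q + b for some a ∈ S and b ∈ F_{q²}. -/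
/-!
Fix a point `p` of a clique `C` of size `q`. Every other point of `C` lies on one of the `m`
lines `p + c i • K` through `p`. If `C` is contained in none of them, then each such line misses a
point `p'` of `C`, and then it meets `C` in at most `m - 1` points: the points of `C` on it lie on
lines through `p'` in the remaining `m - 1` directions, and two `K`-lines in directions whose
quotient is not in `K` meet at most once. Counting over the lines through `p` gives
`q ≤ 1 + m (m - 2) = (m - 1)²`. So `C` lies in one line through `p`, and equals it as both have
`q` points.
-/

open Finset

section KLine

variable {F : Type*} [Field F] (K : Subfield F)

def kLine (a b : F) : Set F := {x | ∃ k ∈ (K : Set F), x = a * k + b}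

variable {K}

theorem mem_kLine_self (a b : F) : b ∈ kLine K a b :=
  ⟨0, K.zero_mem, by ring⟩

theorem mem_kLine_symm {a x y : F} (h : x ∈ kLine K a y) : y ∈ kLine K a x := by
  obtain ⟨k, hk, rfl⟩ := h
  exact ⟨-k, K.neg_mem hk, by ring⟩

theorem mem_kLine_trans {a x y z : F} (hxy : x ∈ kLine K a y) (hyz : y ∈ kLine K a z) :
    x ∈ kLine K a z := by
  obtain ⟨k, hk, rfl⟩ := hxy
  obtain ⟨l, hl, rfl⟩ := hyz
  exact ⟨k + l, K.add_mem hk hl, by ring⟩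

theorem ncard_kLine {a : F} (ha : a ≠ 0) (b : F) : (kLine K a b).ncard = Nat.card K := by
  have hinj : Function.Injective (fun k : F => a * k + b) := fun _ _ h =>
    mul_left_cancel₀ ha (add_right_cancel h)
  have himage : kLine K a b = (fun k : F => a * k + b) '' K := by
    ext x; simp only [kLine, Set.mem_ofPred_eq, Set.mem_image, eq_comm, SetLike.mem_coe]
  rw [himage, Set.ncard_image_of_injective _ hinj]
  exact (Nat.card_coe_set_eq (K : Set F)).symm

theorem kLine_inter_subsingleton {a a' : F} (h : a / a' ∉ K) (b b' : F) :
    (kLine K a b ∩ kLine K a' b').Subsingleton := by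
  rintro _ ⟨⟨k, hk, rfl⟩, ⟨k', hk', hx⟩⟩ _ ⟨⟨l, hl, rfl⟩, ⟨l', hl', hy⟩⟩
  have ha' : a' ≠ 0 := by rintro rfl; simp [K.zero_mem] at h
  by_contra hne
  have hkl : k - l ≠ 0 := fun h0 => hne (by rw [sub_eq_zero.1 h0])
  have hquot : a / a' = (k' - l') / (k - l) := by
    field_simp
    linear_combination hx - hy
  exact h (hquot ▸ K.div_mem (K.sub_mem hk' hl') (K.sub_mem hk hl))

end KLine

section Clique

variable {F : Type*} [Field F] {K : Subfield F} {ι : Type*} [Fintype ι] {c : ι → F}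
  {C : Finset F}

open scoped Classical in
theorem card_filter_mem_kLine_le
    (hdistinct : ∀ i j : ι, i ≠ j → c i / c j ∉ K)
    (hjoin : ∀ x ∈ C, ∀ y ∈ C, x ≠ y → ∃ i, x ∈ kLine K (c i) y)
    {j : ι} {e p' : F} (hp'C : p' ∈ C) (hp' : p' ∉ kLine K (c j) e) :
    #{x ∈ C | x ∈ kLine K (c j) e} ≤ Fintype.card ι - 1 := by
  set T := {x ∈ C | x ∈ kLine K (c j) e}
  have hcover : T ⊆ (univ.erase j).biUnion fun i => {x ∈ T | x ∈ kLine K (c i) p'} := by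
    intro x hxT
    obtain ⟨hxC, hxL⟩ := mem_filter.1 hxT
    have hxp' : x ≠ p' := by rintro rfl; exact hp' hxL
    obtain ⟨i, hi⟩ := hjoin x hxC p' hp'C hxp'
    have hij : i ≠ j := by
      rintro rfl
      exact hp' (mem_kLine_trans (mem_kLine_symm hi) hxL)
    exact mem_biUnion.2 ⟨i, mem_erase.2 ⟨hij, mem_univ i⟩, mem_filter.2 ⟨hxT, hi⟩⟩
  have hle_one : ∀ i ∈ univ.erase j, #{x ∈ T | x ∈ kLine K (c i) p'} ≤ 1 := by
    intro i hi
    refine card_le_one.2 fun x hx y hy => ?_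
    rw [mem_filter] at hx hy
    exact kLine_inter_subsingleton (hdistinct i j (ne_of_mem_erase hi)) p' e
      ⟨hx.2, (mem_filter.1 hx.1).2⟩ ⟨hy.2, (mem_filter.1 hy.1).2⟩
  calc #T ≤ ∑ i ∈ univ.erase j, #{x ∈ T | x ∈ kLine K (c i) p'} :=
        (card_le_card hcover).trans card_biUnion_le
    _ ≤ ∑ _i ∈ univ.erase j, 1 := sum_le_sum hle_one
    _ = Fintype.card ι - 1 := by simp [card_erase_of_mem (mem_univ j)]

open scoped Classical in
theorem card_le_sq_of_forall_not_subset_kLine [Nonempty ι]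
    (hdistinct : ∀ i j : ι, i ≠ j → c i / c j ∉ K)
    (hjoin : ∀ x ∈ C, ∀ y ∈ C, x ≠ y → ∃ i, x ∈ kLine K (c i) y)
    {p : F} (hp : p ∈ C) (hnot : ∀ i, ¬ (C : Set F) ⊆ kLine K (c i) p) :
    #C ≤ (Fintype.card ι - 1) ^ 2 := by
  set n := Fintype.card ι
  set T : ι → Finset F := fun i => {x ∈ C | x ∈ kLine K (c i) p}
  have hpT : ∀ i, p ∈ T i := fun i => mem_filter.2 ⟨hp, mem_kLine_self _ _⟩
  have hT : ∀ i, #(T i) ≤ n - 1 := fun i => by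
    obtain ⟨p', hp'C, hp'⟩ := Set.not_subset.1 (hnot i)
    exact card_filter_mem_kLine_le hdistinct hjoin hp'C hp'
  have hcover : C ⊆ insert p (univ.biUnion fun i => (T i).erase p) := by
    intro x hx
    by_cases hxp : x = p
    · rw [hxp]; exact mem_insert_self p _
    · obtain ⟨i, hi⟩ := hjoin x hx p hp hxp
      exact mem_insert_of_mem <|
        mem_biUnion.2 ⟨i, mem_univ i, mem_erase.2 ⟨hxp, mem_filter.2 ⟨hx, hi⟩⟩⟩
  have hn : 2 ≤ n := by
    obtain ⟨i⟩ := ‹Nonempty ι›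
    have := card_pos.2 ⟨p, hpT i⟩
    have := hT i
    omega
  have herase : ∀ i, #((T i).erase p) ≤ n - 2 := fun i => by
    rw [card_erase_of_mem (hpT i)]; have := hT i; omega
  obtain ⟨k, hk⟩ : ∃ k, n = k + 2 := ⟨n - 2, by omega⟩
  calc #C ≤ #(univ.biUnion fun i => (T i).erase p) + 1 :=
        (card_le_card hcover).trans (card_insert_le _ _)
    _ ≤ ∑ i, #((T i).erase p) + 1 := by gcongr; exact card_biUnion_le
    _ ≤ ∑ _i : ι, (n - 2) + 1 := by gcongr with i; exact herase i
    _ = (n - 1) ^ 2 := by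
      rw [sum_const, card_univ, smul_eq_mul]
      change n * (n - 2) + 1 = (n - 1) ^ 2
      rw [hk, show k + 2 - 1 = k + 1 by omega, show k + 2 - 2 = k by omega]
      ring

end Clique

theorem stmt_6_general
    (q m : ℕ)
    (hbig : (m - 1) ^ 2 < q)
    (F : Type) [Field F] [Fintype F]
    (K : Subfield F) (hK : Nat.card K = q)
    (c : Fin m → F) (hc : ∀ i, c i ≠ 0)
    (hdistinct : ∀ i j : Fin m, i ≠ j → c i / c j ∉ K)
    (S : Set F)
    (hS : S = ⋃ i : Fin m, {x : F | ∃ k ∈ (K : Set F), k ≠ 0 ∧ x = c i * k})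
    (X : SimpleGraph F)
    (hX : ∀ x y : F, X.Adj x y ↔ x ≠ y ∧ x - y ∈ S)
    (C : Finset F) (hC : X.IsNClique q C) :
    ∃ a ∈ S, ∃ b : F, (C : Set F) = {x : F | ∃ k ∈ (K : Set F), x = a * k + b} := by
  have hjoin : ∀ x ∈ C, ∀ y ∈ C, x ≠ y → ∃ i, x ∈ kLine K (c i) y := by
    intro x hx y hy hxy
    have hxyS := ((hX x y).1 (hC.isClique hx hy hxy)).2
    rw [hS, Set.mem_iUnion] at hxyS
    obtain ⟨i, k, hk, -, hxk⟩ := hxyS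
    exact ⟨i, k, hk, by rw [← hxk]; ring⟩
  obtain ⟨p, hp⟩ : C.Nonempty := by rw [← card_pos, hC.card_eq]; omega
  by_cases hline : ∃ i, (C : Set F) ⊆ kLine K (c i) p
  · obtain ⟨i, hi⟩ := hline
    refine ⟨c i, hS ▸ Set.mem_iUnion.2 ⟨i, 1, K.one_mem, one_ne_zero, (mul_one _).symm⟩, p, ?_⟩
    change _ = kLine K (c i) p
    refine Set.eq_of_subset_of_ncard_le hi ?_ (Set.toFinite _)
    rw [ncard_kLine (hc i), Set.ncard_coe_finset, hC.card_eq, hK]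
  · push Not at hline
    -- `C` has `#K ≥ 2` points, and the direction of any two of them is some `c i`.
    have : Nonempty (Fin m) := by
      obtain ⟨x, hx, y, hy, hxy⟩ := one_lt_card.1 (hC.card_eq ▸ hK ▸ Finite.one_lt_card)
      exact ⟨(hjoin x hx y hy hxy).choose⟩
    have := card_le_sq_of_forall_not_subset_kLine hdistinct hjoin hp hline
    rw [Fintype.card_fin, hC.card_eq] at this
    exact absurd hbig this.not_gt

/-- If q > (m−1)², every clique of size q in a Peisert-type graph of type (m,q)
is a canonical clique (strict-EKR property). -/
theorem stmt_6
    (q m : ℕ) (hqodd : Odd q) (hqpp : IsPrimePow q) (hm : m ≤ q)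
    (hbig : (m - 1) ^ 2 < q)
    (F : Type) [Field F] [Fintype F] [DecidableEq F]
    (hF : Fintype.card F = q ^ 2)
    (K : Subfield F) (hK : Nat.card K = q)
    (c : Fin m → F) (hc : ∀ i, c i ≠ 0)
    (hdistinct : ∀ i j : Fin m, i ≠ j → c i / c j ∉ K)
    (S : Set F)
    (hS : S = ⋃ i : Fin m, {x : F | ∃ k ∈ (K : Set F), k ≠ 0 ∧ x = c i * k})
    (hKS : ∀ k : F, k ∈ K → k ≠ 0 → k ∈ S)
    (X : SimpleGraph F)
    (hX : ∀ x y : F, X.Adj x y ↔ x ≠ y ∧ x - y ∈ S)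
    (C : Finset F) (hC : X.IsNClique q C) :
    ∃ a ∈ S, ∃ b : F, (C : Set F) = {x : F | ∃ k ∈ (K : Set F), x = a * k + b} :=
  stmt_6_general q m hbig F K hK c hc hdistinct S hS X hX C hC
end

section
/- Let q be an odd prime power and let d be a positive divisor of q+1 such that (q + 1 − d)² < q·d² (equivalently d > (q+1)/(√q+1)). Then the d-Paley graph GP(q², d) has the strict-EKR property: every clique of size q in GP(q², d) is of the form aF_q + b for some nonzero d-th power a ∈ F_{q²}* and some b ∈ F_{q²}, where F_q is the subfield of order q in F_{q²}. -/
/-!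
Regard `F` as an affine plane over `K` and put `φ x = x ^ (q - 1)`. For `y ≠ 0`, `φ x = φ y` iff
`x ∈ K* y`, so `φ (u - v)` is the direction of the line `uv`. Differences of clique points are
`d`-th powers, whose images under `φ` are `m`-th roots of unity, `m = (q + 1) / d`; so a clique
spans at most `m` directions. If the points of `C` other than a fixed `c ∈ C` do not all lie on one
line through `c`, count them line by line: a point `v` off such a line sees its points in pairwise
distinct directions, none of them the direction of the line or that of `vc`. This gives
`q - 1 ≤ m (m - 2)`, against `(m - 1)² < q`. Hence `C` lies on a line `c + w K`, which it fills by
cardinality, and `w` is a difference of clique points, hence a `d`-th power.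
-/

open Finset Polynomial

theorem Polynomial.card_nthRootsFinset_le {R : Type*} [CommRing R] [IsDomain R] (n : ℕ) (a : R) :
    #(nthRootsFinset n a) ≤ n := by
  classical
  rw [nthRootsFinset_def]
  exact (Multiset.toFinset_card_le _).trans (card_nthRoots n a)

/-- `δ u v` behaves like the direction of the line `uv` in an affine plane: if `uv` and `uw` have
the same direction, then `u, v, w` are collinear and `vw` has that direction too. -/
structure IsDirectionMap {α β : Type*} (δ : α → α → β) : Prop where
  symm : ∀ u v, δ u v = δ v u
  collinear : ∀ {u v w}, u ≠ w → v ≠ w → δ u v = δ u w → δ v w = δ u w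

namespace IsDirectionMap

variable {α β : Type*} [DecidableEq α] [DecidableEq β] {δ : α → α → β} {C : Finset α}
  {Δ : Finset β}

/-- The points of `C` on the line through `c` with direction `b` are seen from a point `v` off
that line in pairwise distinct directions, none of which is `b` or the direction of `vc`. -/
theorem card_filter_eq_le_card_sub_two (hδ : IsDirectionMap δ)
    (hΔ : ∀ u ∈ C, ∀ v ∈ C, u ≠ v → δ u v ∈ Δ) {c v : α} (hc : c ∈ C) (hv : v ∈ C.erase c)
    {b : β} (hb : b ∈ Δ) (hvb : δ v c ≠ b) :
    #{u ∈ C.erase c | δ u c = b} ≤ #Δ - 2 := by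
  obtain ⟨hvc, hvC⟩ := mem_erase.1 hv
  have hmem : ∀ u ∈ ({u ∈ C.erase c | δ u c = b} : Finset α),
      u ≠ c ∧ u ∈ C ∧ δ u c = b ∧ u ≠ v := by
    intro u hu
    obtain ⟨⟨huc, huC⟩, hub⟩ := by simpa only [mem_filter, mem_erase] using hu
    exact ⟨huc, huC, hub, by rintro rfl; exact hvb hub⟩
  calc #{u ∈ C.erase c | δ u c = b}
      ≤ #((Δ.erase b).erase (δ v c)) := card_le_card_of_injOn (δ · v) ?_ ?_
    _ = #Δ - 2 := by
      rw [card_erase_of_mem (mem_erase.2 ⟨hvb, hΔ v hvC c hc hvc⟩), card_erase_of_mem hb]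
      rfl
  · intro u hu
    obtain ⟨huc, huC, hub, huv⟩ := hmem u hu
    refine mem_erase.2 ⟨fun h => hvb ?_, mem_erase.2 ⟨fun h => hvb ?_, hΔ u huC v hvC huv⟩⟩
    · rw [← hub, hδ.collinear hvc huc ((hδ.symm v u).trans h)]
    · exact (hδ.collinear huc hvc (h.trans hub.symm)).trans hub
  · intro x hx y hy hxy
    by_contra hne
    obtain ⟨hxc, -, hxb, -⟩ := hmem x hx
    obtain ⟨hyc, -, hyb, hyv⟩ := hmem y hy
    have hxy_v : δ x y = δ v y :=
      hδ.collinear hyv.symm hne (by simpa only [hδ.symm v] using hxy)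
    have hxy_c : δ x y = b :=
      (hδ.collinear hyc.symm hne (by rw [hδ.symm c, hδ.symm c, hxb, hyb])).trans
        ((hδ.symm c y).trans hyb)
    exact hvb ((hδ.collinear hyc hvc (by rw [hδ.symm, ← hxy_v, hxy_c, hyb])).trans hyb)

theorem card_erase_le_mul_of_ne (hδ : IsDirectionMap δ)
    (hΔ : ∀ u ∈ C, ∀ v ∈ C, u ≠ v → δ u v ∈ Δ) {c u v : α} (hc : c ∈ C) (hu : u ∈ C.erase c)
    (hv : v ∈ C.erase c) (huv : δ u c ≠ δ v c) :
    #(C.erase c) ≤ #Δ * (#Δ - 2) := by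
  calc #(C.erase c)
      = ∑ b ∈ Δ, #{w ∈ C.erase c | δ w c = b} := card_eq_sum_card_fiberwise fun w hw =>
        hΔ w (mem_of_mem_erase hw) c hc (ne_of_mem_erase hw)
    _ ≤ ∑ _b ∈ Δ, (#Δ - 2) := sum_le_sum fun b hb => ?_
    _ = #Δ * (#Δ - 2) := by rw [sum_const, smul_eq_mul]
  by_cases hub : δ u c = b
  · exact hδ.card_filter_eq_le_card_sub_two hΔ hc hv hb (hub ▸ huv.symm)
  · exact hδ.card_filter_eq_le_card_sub_two hΔ hc hu hb hub

end IsDirectionMap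

namespace Subfield

variable {F : Type*} [Field F] {K : Subfield F} [Finite K]

theorem pow_card_sub_one_eq_one {k : F} (hk : k ∈ K) (hk0 : k ≠ 0) :
    k ^ (Nat.card K - 1) = 1 := by
  have := Fintype.ofFinite K
  have h := FiniteField.pow_card_sub_one_eq_one (⟨k, hk⟩ : K) (Subtype.coe_ne_coe.1 hk0)
  rw [Fintype.card_eq_nat_card] at h
  simpa using congrArg K.subtype h

theorem pow_card_sub_one_mul {k : F} (hk : k ∈ K) (hk0 : k ≠ 0) (y : F) :
    (k * y) ^ (Nat.card K - 1) = y ^ (Nat.card K - 1) := by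
  rw [mul_pow, pow_card_sub_one_eq_one hk hk0, one_mul]

theorem mem_of_pow_card_sub_one_eq_one {t : F} (ht : t ^ (Nat.card K - 1) = 1) : t ∈ K := by
  have hq : 0 < Nat.card K - 1 := by have : 1 < Nat.card K := Finite.one_lt_card; omega
  let S := nthRootsFinset (Nat.card K - 1) (1 : F)
  have hsub : (K : Set F) \ {0} ⊆ S := fun k hk =>
    (mem_nthRootsFinset hq 1).2 (pow_card_sub_one_eq_one hk.1 hk.2)
  have hcard : (S : Set F).ncard ≤ ((K : Set F) \ {0}).ncard := by
    rw [Set.ncard_coe_finset, Set.ncard_sdiff_singleton_of_mem K.zero_mem,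
      ← Nat.card_coe_set_eq]
    exact card_nthRootsFinset_le _ _
  have hS : t ∈ (S : Set F) := (mem_nthRootsFinset hq 1).2 ht
  exact (Set.eq_of_subset_of_ncard_le hsub hcard ▸ hS).1

theorem exists_mem_eq_mul_of_pow_card_sub_one_eq {x y : F} (hy : y ≠ 0)
    (h : x ^ (Nat.card K - 1) = y ^ (Nat.card K - 1)) : ∃ k ∈ K, x = k * y :=
  ⟨x / y, mem_of_pow_card_sub_one_eq_one (by rw [div_pow, h, div_self (pow_ne_zero _ hy)]),
    (div_mul_cancel₀ x hy).symm⟩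

theorem coe_eq_setOf_mul_add_of_card_eq {C : Finset F} {a b : F} (ha : a ≠ 0)
    (hC : #C = Nat.card K) (hsub : ∀ u ∈ C, ∃ k ∈ K, u = a * k + b) :
    (C : Set F) = {x | ∃ k ∈ (K : Set F), x = a * k + b} := by
  have himage : {x | ∃ k ∈ (K : Set F), x = a * k + b} = (fun k => a * k + b) '' K := by
    ext x
    simp [eq_comm]
  rw [himage]
  refine Set.eq_of_subset_of_ncard_le (fun u hu => ?_) ?_ ((K : Set F).toFinite.image _)
  · obtain ⟨k, hk, rfl⟩ := hsub u hu
    exact ⟨k, hk, rfl⟩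
  · rw [Set.ncard_image_of_injective _ (fun k l h => by simpa [ha] using h),
      Set.ncard_coe_finset, hC, ← Nat.card_coe_set_eq]
    rfl

theorem coe_eq_setOf_mul_add_of_pow_card_sub_one_eq [DecidableEq F] {C : Finset F} {c w : F}
    (hC : #C = Nat.card K) (hw : w ≠ 0)
    (hdir : ∀ u ∈ C.erase c, (u - c) ^ (Nat.card K - 1) = w ^ (Nat.card K - 1)) :
    (C : Set F) = {x | ∃ k ∈ (K : Set F), x = w * k + c} := by
  refine coe_eq_setOf_mul_add_of_card_eq hw hC fun u hu => ?_
  by_cases huc : u = c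
  · exact ⟨0, K.zero_mem, by rw [huc, mul_zero, zero_add]⟩
  · obtain ⟨k, hk, hkuc⟩ :=
      exists_mem_eq_mul_of_pow_card_sub_one_eq hw (hdir u (mem_erase.2 ⟨huc, hu⟩))
    exact ⟨k, hk, by linear_combination hkuc⟩

theorem isDirectionMap_pow_card_sub_one (K : Subfield F) [Finite K] :
    IsDirectionMap fun u v : F => (u - v) ^ (Nat.card K - 1) where
  symm u v := by
    rw [← neg_sub, neg_eq_neg_one_mul,
      pow_card_sub_one_mul (K.neg_mem K.one_mem) (neg_ne_zero.2 one_ne_zero)]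
  collinear {u v w} huw hvw h := by
    obtain ⟨k, hk, hkuv⟩ := exists_mem_eq_mul_of_pow_card_sub_one_eq (sub_ne_zero.2 huw) h
    have hvw' : v - w = (1 - k) * (u - w) := by linear_combination -hkuv
    have hk1 : 1 - k ≠ 0 := by
      rintro h1
      rw [h1, zero_mul, sub_eq_zero] at hvw'
      exact hvw hvw'
    rw [hvw', pow_card_sub_one_mul (K.sub_mem K.one_mem hk) hk1]

end Subfield

theorem FiniteField.pow_pow_card_sub_one_mem_nthRootsFinset {F : Type*} [Field F] [Fintype F]
    {q d m : ℕ} (hF : Fintype.card F = q ^ 2) (hm : q + 1 = d * m) {z : F} (hz : z ≠ 0) :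
    (z ^ d) ^ (q - 1) ∈ nthRootsFinset m (1 : F) := by
  rw [mem_nthRootsFinset (Nat.pos_of_ne_zero (by rintro rfl; omega)), ← pow_mul, ← pow_mul,
    show d * ((q - 1) * m) = Fintype.card F - 1 by
      rw [hF, mul_left_comm, ← hm, ← one_pow 2, Nat.sq_sub_sq, one_pow, mul_comm]]
  exact pow_card_sub_one_eq_one z hz

theorem Nat.mul_sub_two_lt_sub_one_of_sub_sq_lt {q d m n : ℕ} (hm : q + 1 = d * m)
    (h : (q + 1 - d) ^ 2 < q * d ^ 2) (hq : 2 ≤ q) (hn : n ≤ m) :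
    n * (n - 2) < q - 1 := by
  have hm_sq : (m - 1) ^ 2 < q := by
    rw [show q + 1 - d = d * (m - 1) by rw [Nat.mul_sub_one]; omega, mul_pow,
      mul_comm (d ^ 2)] at h
    exact Nat.lt_of_mul_lt_mul_right h
  have hnm := Nat.mul_le_mul hn (Nat.sub_le_sub_right hn 2)
  obtain hm2 | ⟨j, rfl⟩ : m < 2 ∨ ∃ j, m = j + 2 := by
    rcases Nat.lt_or_ge m 2 with hm2 | hm2
    exacts [.inl hm2, .inr ⟨m - 2, by omega⟩]
  · rw [Nat.sub_eq_zero_of_le (by omega : m ≤ 2), mul_zero] at hnm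
    omega
  · have : (j + 2) * (j + 2 - 2) + 1 = (j + 2 - 1) ^ 2 := by
      rw [Nat.add_sub_cancel, show j + 2 - 1 = j + 1 from rfl]
      ring
    omega

theorem stmt_7_general
    (q d : ℕ) (hdvd : d ∣ q + 1)
    (hbig : (q + 1 - d) ^ 2 < q * d ^ 2)
    (F : Type) [Field F] [Fintype F] [DecidableEq F]
    (hF : Fintype.card F = q ^ 2)
    (K : Subfield F) (hK : Nat.card K = q)
    (X : SimpleGraph F)
    (hX : ∀ x y : F, X.Adj x y ↔ x ≠ y ∧ ∃ z : F, z ≠ 0 ∧ x - y = z ^ d)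
    (C : Finset F) (hC : X.IsNClique q C) :
    ∃ a b : F, (∃ z : F, z ≠ 0 ∧ a = z ^ d) ∧
      (C : Set F) = {x : F | ∃ k ∈ (K : Set F), x = a * k + b} := by
  obtain ⟨m, hm⟩ := hdvd
  subst hK
  have hq : 2 ≤ Nat.card K := Finite.one_lt_card
  have hdiff : ∀ u ∈ C, ∀ v ∈ C, u ≠ v → ∃ z : F, z ≠ 0 ∧ u - v = z ^ d :=
    fun u hu v hv huv => ((hX u v).1 (hC.1 hu hv huv)).2
  have hΔ : ∀ u ∈ C, ∀ v ∈ C, u ≠ v →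
      (u - v) ^ (Nat.card K - 1) ∈ nthRootsFinset m (1 : F) := by
    intro u hu v hv huv
    obtain ⟨z, hz, hzuv⟩ := hdiff u hu v hv huv
    exact hzuv ▸ FiniteField.pow_pow_card_sub_one_mem_nthRootsFinset hF hm hz
  obtain ⟨c, hc⟩ : C.Nonempty := card_pos.1 (by rw [hC.2]; omega)
  obtain ⟨u₀, hu₀⟩ : (C.erase c).Nonempty :=
    card_pos.1 (by rw [card_erase_of_mem hc, hC.2]; omega)
  obtain ⟨hu₀c, hu₀C⟩ := mem_erase.1 hu₀
  have hdir : ∀ u ∈ C.erase c, (u - c) ^ (Nat.card K - 1) = (u₀ - c) ^ (Nat.card K - 1) := by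
    by_contra! ⟨u, hu, hne⟩
    have hcard := K.isDirectionMap_pow_card_sub_one.card_erase_le_mul_of_ne hΔ hc hu hu₀ hne
    have := Nat.mul_sub_two_lt_sub_one_of_sub_sq_lt hm hbig hq (card_nthRootsFinset_le m (1 : F))
    rw [card_erase_of_mem hc, hC.2] at hcard
    omega
  exact ⟨u₀ - c, c, hdiff u₀ hu₀C c hc hu₀c,
    K.coe_eq_setOf_mul_add_of_pow_card_sub_one_eq hC.2 (sub_ne_zero.2 hu₀c) hdir⟩

/-- Strict-EKR property for d-Paley graphs GP(q²,d) with d ∣ q+1 and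
(q+1−d)² < q·d² (i.e. d > (q+1)/(√q+1)): every clique of size q is of the form
aF_q + b with a a nonzero d-th power. -/
theorem stmt_7
    (q d : ℕ) (hqodd : Odd q) (hqpp : IsPrimePow q)
    (hd : 0 < d) (hdvd : d ∣ q + 1)
    (hbig : (q + 1 - d) ^ 2 < q * d ^ 2)
    (F : Type) [Field F] [Fintype F] [DecidableEq F]
    (hF : Fintype.card F = q ^ 2)
    (K : Subfield F) (hK : Nat.card K = q)
    (X : SimpleGraph F)
    (hX : ∀ x y : F, X.Adj x y ↔ x ≠ y ∧ ∃ z : F, z ≠ 0 ∧ x - y = z ^ d)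
    (C : Finset F) (hC : X.IsNClique q C) :
    ∃ a b : F, (∃ z : F, z ≠ 0 ∧ a = z ^ d) ∧
      (C : Set F) = {x : F | ∃ k ∈ (K : Set F), x = a * k + b} :=
  stmt_7_general q d hdvd hbig F hF K hK X hX C hC
end

section
/- Let q be an odd prime power that is not prime. Then there exists a Peisert-type graph X of order q² that fails to have the strict-EKR property: there exist a connection set S ⊆ F_{q²}* that is a union of m ≤ q distinct cosets of F_q* with F_q* ⊆ S, and a clique C of size q in X = Cay(F_{q²}⁺, S) such that C is not equal to aF_q + b for any a ∈ S and b ∈ F_{q²}. -/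
/-!
Write `q = p ^ n` with `n ≥ 2` and pick `δ ∉ F_q`. An `F_p`-subspace `U` of `F_{q²}` of
dimension `n` containing `1` and `δ` is a clique of size `q` in the Cayley graph whose connection
set is `F_q* · (U \ {0})`, a union of at most `q - 1` cosets of `F_q*`. It is not canonical: a
canonical clique containing `0` and `1` is `F_q` itself, which does not contain `δ`.
-/

open Module

theorem Submodule.exists_le_finrank_eq {K V : Type*} [DivisionRing K] [AddCommGroup V]
    [Module K V] [FiniteDimensional K V] (W : Submodule K V) {d : ℕ}
    (hWd : finrank K W ≤ d) (hd : d ≤ finrank K V) :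
    ∃ U : Submodule K V, W ≤ U ∧ finrank K U = d := by
  induction d, hWd using Nat.le_induction with
  | base => exact ⟨W, le_rfl, rfl⟩
  | succ d _ ih =>
    obtain ⟨U, hWU, hU⟩ := ih (by omega)
    obtain ⟨v, hv⟩ : ∃ v, v ∉ U := by
      by_contra! h
      rw [U.eq_top_iff'.mpr h, finrank_top] at hU
      omega
    exact ⟨U ⊔ K ∙ v, hWU.trans le_sup_left, by rw [finrank_sup_span_singleton hv, hU]⟩

theorem FiniteField.exists_addSubgroup_superset_card_eq {F : Type*} [Field F] [Fintype F]
    {p N : ℕ} [Fact p.Prime] (hF : Fintype.card F = p ^ N) (s : Finset F) {n : ℕ}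
    (hs : s.card ≤ n) (hn : n ≤ N) :
    ∃ U : AddSubgroup F, ↑s ⊆ (U : Set F) ∧ Nat.card U = p ^ n := by
  have := charP_of_card_eq_prime_pow hF
  let := ZMod.algebra F p
  have hFN : finrank (ZMod p) F = N :=
    Nat.pow_right_injective (Fact.out : p.Prime).two_le
      (show p ^ _ = p ^ N by rw [pow_finrank_eq_card, hF])
  have hspan : finrank (ZMod p) (Submodule.span (ZMod p) (s : Set F)) ≤ n :=
    (finrank_span_finset_le_card s).trans hs
  obtain ⟨U, hsU, hU⟩ := Submodule.exists_le_finrank_eq _ hspan (hFN ▸ hn)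
  exact ⟨U.toAddSubgroup, Submodule.subset_span.trans hsU, by
    rw [← hU, pow_finrank_eq_natCard]; rfl⟩

theorem Subfield.exists_finset_ratio_representatives {F : Type*} [Field F] [DecidableEq F]
    (K : Subfield F) (T : Finset F) (hT : 0 ∉ T) :
    ∃ R ⊆ T, (∀ x ∈ R, ∀ y ∈ R, x / y ∈ K → x = y) ∧
      ∀ t ∈ T, ∃ r ∈ R, t / r ∈ K := by
  induction T using Finset.induction_on with
  | empty => exact ⟨∅, subset_rfl, by simp, by simp⟩
  | insert a T _ ih =>
    obtain ⟨ha0, hT0⟩ : a ≠ 0 ∧ 0 ∉ T := by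
      simpa [eq_comm] using hT
    obtain ⟨R, hRT, hR, hTR⟩ := ih hT0
    by_cases haR : ∃ r ∈ R, a / r ∈ K
    · refine ⟨R, hRT.trans (Finset.subset_insert _ _), hR, ?_⟩
      simpa [haR] using hTR
    push Not at haR
    refine ⟨insert a R, Finset.insert_subset_insert a hRT, ?_, ?_⟩
    · have hRa : ∀ r ∈ R, r / a ∉ K := fun r hr h =>
        haR r hr (by simpa using K.inv_mem h)
      simp only [Finset.mem_insert]
      rintro x (rfl | hx) y (rfl | hy) hxy
      exacts [rfl, (haR y hy hxy).elim, (hRa x hx hxy).elim, hR x hx y hy hxy]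
    · simp only [Finset.mem_insert, forall_eq_or_imp, exists_eq_or_imp]
      exact ⟨.inl (by simp [ha0, K.one_mem]), fun t ht => .inr (hTR t ht)⟩

theorem Subfield.exists_fin_coset_representatives {F : Type*} [Field F] [DecidableEq F]
    (K : Subfield F) (T : Finset F) (hT : 0 ∉ T) :
    ∃ (m : ℕ) (c : Fin m → F), m ≤ T.card ∧ (∀ i, c i ∈ T) ∧
      (∀ i j, i ≠ j → c i / c j ∉ K) ∧
      (T : Set F) ⊆ ⋃ i, {x | ∃ k ∈ (K : Set F), k ≠ 0 ∧ x = c i * k} := by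
  obtain ⟨R, hRT, hR, hTR⟩ := K.exists_finset_ratio_representatives T hT
  have hc0 : ∀ r ∈ R, r ≠ 0 := fun r hr h => hT (h ▸ hRT hr)
  refine ⟨R.card, fun i => R.equivFin.symm i, Finset.card_le_card hRT,
    fun i => hRT (R.equivFin.symm i).2, fun i j hij hK => hij ?_, fun t ht => ?_⟩
  · exact R.equivFin.symm.injective <|
      Subtype.ext (hR _ (Subtype.property _) _ (Subtype.property _) hK)
  · obtain ⟨r, hr, htr⟩ := hTR t ht
    refine Set.mem_iUnion.mpr ⟨R.equivFin ⟨r, hr⟩, t / r, htr, ?_, ?_⟩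
    · exact div_ne_zero (fun h => hT (h ▸ ht)) (hc0 r hr)
    · simp [mul_div_cancel₀ _ (hc0 r hr)]

theorem SetLike.exists_notMem_of_natCard_lt {A B : Type*} [SetLike A B] (K : A)
    (h : Nat.card K < Nat.card B) : ∃ x, x ∉ K := by
  by_contra! hK
  exact h.ne (Nat.card_congr (Equiv.subtypeUnivEquiv hK))

theorem Nat.exists_prime_two_le_pow_eq {q : ℕ} (hq : IsPrimePow q) (hnp : ¬ q.Prime) :
    ∃ p n : ℕ, p.Prime ∧ 2 ≤ n ∧ p ^ n = q := by
  obtain ⟨p, n, hp, hn, rfl⟩ := hq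
  refine ⟨p, n, hp.nat_prime, ?_, rfl⟩
  by_contra! h
  obtain rfl : n = 1 := by omega
  exact hnp (by simpa using hp.nat_prime)

theorem Subfield.mem_of_zero_one_mem_affine {F : Type*} [Field F] {K : Subfield F} {a b δ : F}
    (h₀ : ∃ k ∈ K, 0 = a * k + b) (h₁ : ∃ k ∈ K, 1 = a * k + b)
    (hδ : ∃ k ∈ K, δ = a * k + b) :
    δ ∈ K := by
  obtain ⟨k₀, hk₀, e₀⟩ := h₀
  obtain ⟨k₁, hk₁, e₁⟩ := h₁
  obtain ⟨k, hk, e⟩ := hδ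
  have ha : a * (k₁ - k₀) = 1 := by linear_combination e₀ - e₁
  have : δ = (k - k₀) / (k₁ - k₀) := by
    rw [eq_div_iff (right_ne_zero_of_mul_eq_one ha)]
    linear_combination (k₁ - k₀) * (e - e₀) + (k - k₀) * ha
  exact this ▸ K.div_mem (K.sub_mem hk hk₀) (K.sub_mem hk₁ hk₀)

theorem stmt_8_general
    (q : ℕ) (hqpp : IsPrimePow q) (hnotprime : ¬ q.Prime)
    (F : Type) [Field F] [Fintype F]
    (hF : Fintype.card F = q ^ 2)
    (K : Subfield F) (hK : Nat.card K = q) :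
    ∃ (m : ℕ) (c : Fin m → F) (S : Set F) (C : Finset F),
      m ≤ q ∧
      (∀ i, c i ≠ 0) ∧
      (∀ i j : Fin m, i ≠ j → c i / c j ∉ K) ∧
      S = (⋃ i : Fin m, {x : F | ∃ k ∈ (K : Set F), k ≠ 0 ∧ x = c i * k}) ∧
      (∀ k : F, k ∈ K → k ≠ 0 → k ∈ S) ∧
      C.card = q ∧
      (∀ x ∈ C, ∀ y ∈ C, x ≠ y → x - y ∈ S) ∧
      ¬ ∃ a ∈ S, ∃ b : F, (C : Set F) = {x : F | ∃ k ∈ (K : Set F), x = a * k + b} := by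
  classical
  obtain ⟨p, n, hp, hn, rfl⟩ := Nat.exists_prime_two_le_pow_eq hqpp hnotprime
  have := Fact.mk hp
  obtain ⟨δ, hδK⟩ := SetLike.exists_notMem_of_natCard_lt K <| by
    rw [hK, Nat.card_eq_fintype_card, hF]
    exact lt_self_pow₀ (Nat.one_lt_pow (by omega) hp.one_lt) one_lt_two
  obtain ⟨U, h1δU, hU⟩ := FiniteField.exists_addSubgroup_superset_card_eq
    (hF.trans (pow_mul p n 2).symm) {1, δ} (Finset.card_le_two.trans hn) (by omega)
  have h1U : (1 : F) ∈ U := h1δU (by simp)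
  have hδU : δ ∈ U := h1δU (by simp)
  set C := (U : Set F).toFinset with hC
  obtain ⟨m, c, hmC, hcC, hcK, hCS⟩ := K.exists_fin_coset_representatives (C.erase 0) (by simp)
  have hU_sub_S :
      ∀ x ∈ U, x ≠ 0 → x ∈ ⋃ i, {x | ∃ k ∈ (K : Set F), k ≠ 0 ∧ x = c i * k} :=
    fun x hx hx0 => hCS (by simpa [hC] using ⟨hx, hx0⟩)
  refine ⟨m, c, _, C, ?_, fun i h => by simpa [h] using hcC i, hcK, rfl, ?_, ?_, ?_, ?_⟩
  · exact hmC.trans (Finset.card_erase_le.trans_eq (by simpa [hC] using hU))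
  · intro k hk hk0
    obtain ⟨i, k₁, hk₁, hk₁0, e⟩ := Set.mem_iUnion.mp (hU_sub_S 1 h1U one_ne_zero)
    exact Set.mem_iUnion.mpr ⟨i, k₁ * k, K.mul_mem hk₁ hk, mul_ne_zero hk₁0 hk0,
      by rw [← mul_assoc, ← e, one_mul]⟩
  · simpa [hC] using hU
  · intro x hx y hy hxy
    simp only [hC, Set.mem_toFinset, SetLike.mem_coe] at hx hy
    exact hU_sub_S _ (U.sub_mem hx hy) (sub_ne_zero.mpr hxy)
  · rintro ⟨a, -, b, hCab⟩
    have hmem : ∀ x ∈ U, ∃ k ∈ K, x = a * k + b := fun x hx => by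
      have hxC : x ∈ (C : Set F) := by simpa [hC] using hx
      simpa [hCab] using hxC
    exact hδK (K.mem_of_zero_one_mem_affine (hmem 0 U.zero_mem) (hmem 1 h1U) (hmem δ hδU))

/-- For every odd prime power q that is not prime, there is a Peisert-type graph of
order q² failing the strict-EKR property: some connection set S (a union of m ≤ q
distinct cosets of F_q* containing F_q*) admits a clique C of size q in Cay(F_{q²},S)
that is not a canonical clique. -/
theorem stmt_8
    (q : ℕ) (hqodd : Odd q) (hqpp : IsPrimePow q) (hnotprime : ¬ q.Prime)
    (F : Type) [Field F] [Fintype F] [DecidableEq F]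
    (hF : Fintype.card F = q ^ 2)
    (K : Subfield F) (hK : Nat.card K = q) :
    ∃ (m : ℕ) (c : Fin m → F) (S : Set F) (C : Finset F),
      m ≤ q ∧
      (∀ i, c i ≠ 0) ∧
      (∀ i j : Fin m, i ≠ j → c i / c j ∉ K) ∧
      S = (⋃ i : Fin m, {x : F | ∃ k ∈ (K : Set F), k ≠ 0 ∧ x = c i * k}) ∧
      (∀ k : F, k ∈ K → k ≠ 0 → k ∈ S) ∧
      C.card = q ∧
      (∀ x ∈ C, ∀ y ∈ C, x ≠ y → x - y ∈ S) ∧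
      ¬ ∃ a ∈ S, ∃ b : F, (C : Set F) = {x : F | ∃ k ∈ (K : Set F), x = a * k + b} :=
  stmt_8_general q hqpp hnotprime F hF K hK
end

section
/- Let q₀ be an odd prime power and set q = q₀² (so q is an odd prime power that is a square). Then there exists a Peisert-type graph X of type (q₀ + 1, q) that fails to have the strict-EKR property: there exist a connection set S ⊆ F_{q²}* that is a union of exactly q₀ + 1 distinct cosets of F_q* with F_q* ⊆ S, and a clique C of size q in X = Cay(F_{q²}⁺, S) such that C is not equal to aF_q + b for any a ∈ S and b ∈ F_{q²}. (Hence the bound q > (m−1)² in the strict-EKR criterion is sharp when q is a square.) -/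
/-!
Let `K₀ ≤ K` be the subfields of `F` of orders `q₀` and `q = q₀²` (the first exists by the
Galois theory of finite fields) and pick `θ ∉ K`. The plane `C = K₀ + K₀ θ` has `q` points, and
the difference `s + t θ` of two of them lies in `Kˣ` if `t = 0` and in `(θ + s / t) Kˣ`
otherwise. So `C` is a clique for the union of the `q₀ + 1` cosets `Kˣ` and `(θ + w) Kˣ`,
`w ∈ K₀`, which are distinct because `θ ∉ K`. It is not canonical: a canonical clique through
`0` and `1` is `K` itself, which misses `θ ∈ C`.
-/

theorem FiniteField.exists_subfield_natCard_eq {L : Type*} [Field L] [Finite L] {q n : ℕ}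
    (hq : IsPrimePow q) (hL : Nat.card L = q ^ n) :
    ∃ K : Subfield L, Nat.card K = q := by
  obtain ⟨p, k, hp, hk, rfl⟩ := hq
  rw [← Nat.prime_iff] at hp
  have := Fact.mk hp
  have := Fintype.ofFinite L
  have : CharP L p := charP_of_card_eq_prime_pow (f := k * n) <| by
    rw [← Nat.card_eq_fintype_card, hL, pow_mul]
  let := ZMod.algebra L p
  have hdvd : Module.finrank (ZMod p) (GaloisField p k) ∣ Module.finrank (ZMod p) L := by
    have := FiniteField.pow_finrank_eq_natCard p L
    rw [hL, ← pow_mul] at this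
    exact ⟨n, by rw [GaloisField.finrank p hk.ne', Nat.pow_right_injective hp.two_le this]⟩
  obtain ⟨f⟩ := FiniteField.nonempty_algHom_of_finrank_dvd hdvd
  refine ⟨f.toRingHom.fieldRange, ?_⟩
  rw [← GaloisField.card p k hk.ne', ← Nat.card_range_of_injective f.injective]
  rfl

theorem Subfield.exists_le_natCard_eq {L : Type*} [Field L] (K : Subfield L) [Finite K]
    {q n : ℕ} (hq : IsPrimePow q) (hK : Nat.card K = q ^ n) :
    ∃ K₀ ≤ K, Nat.card K₀ = q := by
  obtain ⟨K₀, hK₀⟩ := FiniteField.exists_subfield_natCard_eq hq hK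
  refine ⟨K₀.map K.subtype, fun x hx => ?_, ?_⟩
  · obtain ⟨y, -, rfl⟩ := Subfield.mem_map.mp hx
    exact y.2
  · rw [← hK₀]
    exact Nat.card_image_of_injective K.subtype_injective _

namespace PeisertClique

variable {F : Type*} [Field F] {K₀ K : Subfield F} {θ : F}

def direction (K₀ : Subfield F) (θ : F) : Option K₀ → F
  | none => 1
  | some t => θ + t

lemma eq_of_add_div_add_mem (hθ : θ ∉ K) {a b : F} (ha : a ∈ K) (hb : b ∈ K)
    (h : (θ + a) / (θ + b) ∈ K) : a = b := by
  have hne : θ + b ≠ 0 := fun h0 => hθ <| by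
    rw [eq_neg_of_add_eq_zero_left h0]; exact K.neg_mem hb
  set r := (θ + a) / (θ + b)
  have hr : θ + a = r * (θ + b) := (div_mul_cancel₀ _ hne).symm
  by_cases hr1 : r = 1
  · simpa [hr1] using hr
  · refine absurd ?_ hθ
    have : θ = (r * b - a) / (1 - r) := by
      rw [eq_div_iff (sub_ne_zero.mpr (Ne.symm hr1))]; linear_combination hr
    rw [this]
    exact K.div_mem (K.sub_mem (K.mul_mem h hb) ha) (K.sub_mem K.one_mem h)

lemma direction_ne_zero (hK₀ : K₀ ≤ K) (hθ : θ ∉ K) : ∀ o, direction K₀ θ o ≠ 0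
  | none => one_ne_zero
  | some t => fun h => hθ <| by
    rw [direction, add_eq_zero_iff_eq_neg] at h
    exact h ▸ K.neg_mem (hK₀ t.2)

lemma div_direction_notMem (hK₀ : K₀ ≤ K) (hθ : θ ∉ K) :
    ∀ {o o' : Option K₀}, o ≠ o' → direction K₀ θ o / direction K₀ θ o' ∉ K
  | none, none, h, _ => h rfl
  | none, some t, _, hK => hθ <| by
    rw [direction, direction, one_div, inv_mem_iff, add_mem_cancel_right (hK₀ t.2)] at hK
    exact hK
  | some t, none, _, hK => hθ <| by
    rwa [direction, direction, div_one, add_mem_cancel_right (hK₀ t.2)] at hK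
  | some t, some t', h, hK =>
    h <| congrArg some <| Subtype.ext <| eq_of_add_div_add_mem hθ (hK₀ t.2) (hK₀ t'.2) hK

variable [Fintype K₀] [DecidableEq F]

def clique (K₀ : Subfield F) [Fintype K₀] (θ : F) : Finset F :=
  Finset.univ.image fun st : K₀ × K₀ => st.1 + st.2 * θ

lemma mem_clique {x : F} : x ∈ clique K₀ θ ↔ ∃ s t : K₀, s + t * θ = x := by
  simp [clique]

lemma card_clique (hθ : θ ∉ K₀) : (clique K₀ θ).card = Fintype.card K₀ ^ 2 := by
  rw [clique, Finset.card_image_of_injective, Finset.card_univ, Fintype.card_prod, sq]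
  rintro ⟨s, t⟩ ⟨s', t'⟩ h
  by_cases htt : t = t'
  · subst htt
    simp_all
  · refine absurd ?_ hθ
    have hne : (t' : F) - t ≠ 0 := sub_ne_zero.mpr fun h => htt (Subtype.ext h.symm)
    have : θ = (s - s') / (t' - t) := by
      rw [eq_div_iff hne]; linear_combination -h
    rw [this]
    exact K₀.div_mem (K₀.sub_mem s.2 s'.2) (K₀.sub_mem t'.2 t.2)

lemma exists_sub_eq_direction_mul (hK₀ : K₀ ≤ K) {x y : F} (hx : x ∈ clique K₀ θ)
    (hy : y ∈ clique K₀ θ) (hxy : x ≠ y) :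
    ∃ o, ∃ k ∈ K, k ≠ 0 ∧ x - y = direction K₀ θ o * k := by
  obtain ⟨s, t, rfl⟩ := mem_clique.mp hx
  obtain ⟨s', t', rfl⟩ := mem_clique.mp hy
  by_cases htt : t = t'
  · subst htt
    refine ⟨none, s - s', hK₀ (K₀.sub_mem s.2 s'.2), fun h => hxy ?_, by simp [direction]⟩
    linear_combination h
  · have hne : (t : F) - t' ≠ 0 := sub_ne_zero.mpr fun h => htt (Subtype.ext h)
    refine ⟨some ⟨(s - s') / (t - t'), K₀.div_mem (K₀.sub_mem s.2 s'.2) (K₀.sub_mem t.2 t'.2)⟩,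
      t - t', hK₀ (K₀.sub_mem t.2 t'.2), hne, ?_⟩
    simp only [direction]
    field_simp
    ring

lemma coe_clique_ne_affine (hθ : θ ∉ K) (a b : F) :
    (clique K₀ θ : Set F) ≠ {x | ∃ k ∈ K, x = a * k + b} := by
  intro h
  have mem : ∀ s t : K₀, ∃ k ∈ K, (s : F) + t * θ = a * k + b := fun s t =>
    (h ▸ Finset.mem_coe.mpr (mem_clique.mpr ⟨s, t, rfl⟩) : _ ∈ {x | ∃ k ∈ K, x = a * k + b})
  obtain ⟨k₀, hk₀, e₀⟩ := mem 0 0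
  obtain ⟨k₁, hk₁, e₁⟩ := mem 1 0
  obtain ⟨k₂, hk₂, e₂⟩ := mem 0 1
  simp only [ZeroMemClass.coe_zero, OneMemClass.coe_one, zero_mul, zero_add, one_mul,
    add_zero] at e₀ e₁ e₂
  have hk : k₁ - k₀ ≠ 0 := fun h0 => one_ne_zero (α := F) <| by
    linear_combination e₁ - e₀ + a * h0
  refine hθ ?_
  have : θ = (k₂ - k₀) / (k₁ - k₀) := by
    rw [eq_div_iff hk]; linear_combination (k₁ - k₀) * e₂ - (k₂ - k₀) * e₁ + (k₂ - k₁) * e₀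
  rw [this]
  exact K.div_mem (K.sub_mem hk₂ hk₀) (K.sub_mem hk₁ hk₀)

end PeisertClique

open PeisertClique in
theorem stmt_9_general
    (q₀ q : ℕ) (hq₀pp : IsPrimePow q₀) (hq : q = q₀ ^ 2)
    (F : Type) [Field F] [Fintype F] [DecidableEq F]
    (hF : Fintype.card F = q ^ 2)
    (K : Subfield F) (hK : Nat.card K = q) :
    ∃ (c : Fin (q₀ + 1) → F) (S : Set F) (C : Finset F),
      (∀ i, c i ≠ 0) ∧
      (∀ i j : Fin (q₀ + 1), i ≠ j → c i / c j ∉ K) ∧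
      S = (⋃ i : Fin (q₀ + 1), {x : F | ∃ k ∈ (K : Set F), k ≠ 0 ∧ x = c i * k}) ∧
      (∀ k : F, k ∈ K → k ≠ 0 → k ∈ S) ∧
      C.card = q ∧
      (∀ x ∈ C, ∀ y ∈ C, x ≠ y → x - y ∈ S) ∧
      ¬ ∃ a ∈ S, ∃ b : F, (C : Set F) = {x : F | ∃ k ∈ (K : Set F), x = a * k + b} := by
  subst hq
  obtain ⟨K₀, hK₀K, hK₀⟩ := K.exists_le_natCard_eq hq₀pp hK
  have : Fintype K₀ := Fintype.ofFinite K₀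
  obtain ⟨θ, hθ⟩ : ∃ θ, θ ∉ K := by
    have hlt : Nat.card K < Nat.card F := by
      rw [hK, Nat.card_eq_fintype_card, hF, ← pow_mul]
      exact Nat.pow_lt_pow_right hq₀pp.one_lt (by norm_num)
    exact not_forall.mp fun h => hlt.ne (Nat.card_congr (Equiv.subtypeUnivEquiv h))
  let e : Fin (q₀ + 1) ≃ Option K₀ := (finSuccEquiv q₀).trans
    (Fintype.equivFinOfCardEq (Nat.card_eq_fintype_card.symm.trans hK₀)).symm.optionCongr
  refine ⟨direction K₀ θ ∘ e, _, clique K₀ θ, fun i => direction_ne_zero hK₀K hθ (e i),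
    fun i j hij => div_direction_notMem hK₀K hθ (e.injective.ne hij), rfl,
    fun k hk hk0 => Set.mem_iUnion.mpr ⟨e.symm none, k, hk, hk0, by simp [direction]⟩, ?_,
    fun x hx y hy hxy => ?_, fun ⟨a, _, b, h⟩ => coe_clique_ne_affine hθ a b h⟩
  · rw [card_clique fun h => hθ (hK₀K h), Fintype.card_eq_nat_card, hK₀]
  · obtain ⟨o, k, hk, hk0, hxy⟩ := exists_sub_eq_direction_mul hK₀K hx hy hxy
    exact Set.mem_iUnion.mpr ⟨e.symm o, k, hk, hk0, by simpa using hxy⟩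

/-- If q = q₀² is a square odd prime power, there is a Peisert-type graph of type
(q₀+1, q) failing the strict-EKR property: some connection set S that is a union of
exactly q₀+1 distinct cosets of F_q* containing F_q* admits a clique C of size q in
Cay(F_{q²},S) that is not a canonical clique. -/
theorem stmt_9
    (q₀ q : ℕ) (hq₀odd : Odd q₀) (hq₀pp : IsPrimePow q₀) (hq : q = q₀ ^ 2)
    (F : Type) [Field F] [Fintype F] [DecidableEq F]
    (hF : Fintype.card F = q ^ 2)
    (K : Subfield F) (hK : Nat.card K = q) :
    ∃ (c : Fin (q₀ + 1) → F) (S : Set F) (C : Finset F),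
      (∀ i, c i ≠ 0) ∧
      (∀ i j : Fin (q₀ + 1), i ≠ j → c i / c j ∉ K) ∧
      S = (⋃ i : Fin (q₀ + 1), {x : F | ∃ k ∈ (K : Set F), k ≠ 0 ∧ x = c i * k}) ∧
      (∀ k : F, k ∈ K → k ≠ 0 → k ∈ S) ∧
      C.card = q ∧
      (∀ x ∈ C, ∀ y ∈ C, x ≠ y → x - y ∈ S) ∧
      ¬ ∃ a ∈ S, ∃ b : F, (C : Set F) = {x : F | ∃ k ∈ (K : Set F), x = a * k + b} :=
  stmt_9_general q₀ q hq₀pp hq F hF K hK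
end

section
/- Let A : Fin m × Fin (n²) → Fin n be an orthogonal array OA(m,n) with m ≥ 2, and let C be a clique in the block graph of A that is not contained in any canonical clique S_{r,i}. Then |C| ≤ (m − 1)². -/
/-!
Two distinct columns of an orthogonal array agree in at most one row. Fix a clique `C` of the
block graph that lies in no canonical clique. For a row `r` and a symbol `i`, choose `c ∈ C` with
`A (r, c) ≠ i`; every column of `C ∩ S_{r,i}` meets `c` in some row `s ≠ r`, and distinct such
columns meet `c` in distinct rows, so `|C ∩ S_{r,i}| ≤ m - 1`. Now fix `c₀ ∈ C`: every other
column of `C` lies in one of the `m` sets `C ∩ S_{r, A (r, c₀)}`, each of which contains `c₀`,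
whence `|C| ≤ 1 + m (m - 2) = (m - 1)²`.
-/

open Finset

section

variable {ι κ α : Type*} [Fintype ι] [DecidableEq ι] {A : ι × κ → α}

theorem card_filter_eq_le_card_sub_one [DecidableEq α]
    (hA : ∀ r s, r ≠ s → Function.Injective fun c => (A (r, c), A (s, c)))
    {C : Finset κ} (hC : (C : Set κ).Pairwise fun c c' => ∃ r, A (r, c) = A (r, c'))
    {r : ι} {i : α} {c : κ} (hc : c ∈ C) (hci : A (r, c) ≠ i) :
    #{b ∈ C | A (r, b) = i} ≤ Fintype.card ι - 1 := by
  rw [← card_univ, ← card_erase_of_mem (mem_univ r)]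
  refine card_le_card_of_forall_subsingleton (fun b s => A (s, b) = A (s, c)) ?_ ?_
  · intro b hb
    obtain ⟨hbC, hbi⟩ := mem_filter.1 hb
    have hbc : b ≠ c := by rintro rfl; exact hci hbi
    obtain ⟨s, hs⟩ := hC hbC hc hbc
    refine ⟨s, mem_erase.2 ⟨?_, mem_univ s⟩, hs⟩
    rintro rfl
    exact hci (hs ▸ hbi)
  · intro s hs b hb b' hb'
    have hrow : A (r, b) = A (r, b') := (mem_filter.1 hb.1).2.trans (mem_filter.1 hb'.1).2.symm
    exact hA r s (ne_of_mem_erase hs).symm (Prod.ext hrow (hb.2.trans hb'.2.symm))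

theorem card_le_card_sub_one_sq [Nonempty ι]
    (hA : ∀ r s, r ≠ s → Function.Injective fun c => (A (r, c), A (s, c)))
    {C : Finset κ} (hC : (C : Set κ).Pairwise fun c c' => ∃ r, A (r, c) = A (r, c'))
    (hnc : ∀ r i, ∃ c ∈ C, A (r, c) ≠ i) :
    #C ≤ (Fintype.card ι - 1) ^ 2 := by
  classical
  obtain rfl | ⟨c₀, hc₀⟩ := C.eq_empty_or_nonempty
  · simp
  set F : ι → Finset κ := fun r => {c ∈ C | A (r, c) = A (r, c₀)}
  have hF : ∀ r, #(F r) ≤ Fintype.card ι - 1 := fun r => by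
    obtain ⟨c, hc, hci⟩ := hnc r (A (r, c₀))
    exact card_filter_eq_le_card_sub_one hA hC hc hci
  have hc₀F : ∀ r, c₀ ∈ F r := fun r => mem_filter.2 ⟨hc₀, rfl⟩
  have hm : 2 ≤ Fintype.card ι := by
    have := card_pos.2 ⟨c₀, hc₀F (Classical.arbitrary ι)⟩
    have := hF (Classical.arbitrary ι)
    omega
  have hcover : C ⊆ insert c₀ (univ.biUnion fun r => (F r).erase c₀) := by
    intro c hc
    rcases eq_or_ne c c₀ with rfl | hne
    · exact mem_insert_self _ _
    obtain ⟨r, hr⟩ := hC hc hc₀ hne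
    exact mem_insert_of_mem <|
      mem_biUnion.2 ⟨r, mem_univ r, mem_erase.2 ⟨hne, mem_filter.2 ⟨hc, hr⟩⟩⟩
  calc #C ≤ #(univ.biUnion fun r => (F r).erase c₀) + 1 :=
        (card_le_card hcover).trans (card_insert_le _ _)
    _ ≤ ∑ r, #((F r).erase c₀) + 1 := by gcongr; exact card_biUnion_le
    _ ≤ ∑ _r : ι, (Fintype.card ι - 2) + 1 := by
        gcongr with r
        rw [card_erase_of_mem (hc₀F r)]
        have := hF r
        omega
    _ = (Fintype.card ι - 1) ^ 2 := by
        obtain ⟨k, hk⟩ : ∃ k, Fintype.card ι = k + 2 := ⟨_, (Nat.sub_add_cancel hm).symm⟩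
        rw [sum_const, card_univ, smul_eq_mul, hk, Nat.add_sub_cancel,
          show k + 2 - 1 = k + 1 from rfl]
        ring

end

theorem IsOrthogonalArray.injective {m n : ℕ} {A : Fin m × Fin (n ^ 2) → Fin n}
    (hA : IsOrthogonalArray m n A) (r s : Fin m) (hrs : r ≠ s) :
    Function.Injective fun c => (A (r, c), A (s, c)) :=
  (hA r s hrs).injective

theorem blockGraph_adj_iff {m n : ℕ} {A : Fin m × Fin (n ^ 2) → Fin n} {c c' : Fin (n ^ 2)} :
    (blockGraph A).Adj c c' ↔ c ≠ c' ∧ ∃ r, A (r, c) = A (r, c') := by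
  simp only [blockGraph, SimpleGraph.fromRel_adj, eq_comm (a := A (_, c')), or_self]

/-- A clique in the block graph of an OA(m,n) (m ≥ 2) that is not contained in any
canonical clique has size at most (m−1)². -/
theorem stmt_11
    (m n : ℕ) (A : Fin m × Fin (n ^ 2) → Fin n) (hA : IsOrthogonalArray m n A)
    (hm : 2 ≤ m)
    (C : Finset (Fin (n ^ 2))) (hC : (blockGraph A).IsClique (C : Set (Fin (n ^ 2))))
    (hnc : ¬ ∃ (r : Fin m) (i : Fin n), (C : Set (Fin (n ^ 2))) ⊆ {col | A (r, col) = i}) :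
    C.card ≤ (m - 1) ^ 2 := by
  have : Nonempty (Fin m) := ⟨⟨0, by omega⟩⟩
  have hC' : (C : Set (Fin (n ^ 2))).Pairwise fun c c' => ∃ r, A (r, c) = A (r, c') :=
    Set.Pairwise.mono' (fun _ _ h => (blockGraph_adj_iff.1 h).2) hC
  have hnc' : ∀ r i, ∃ c ∈ C, A (r, c) ≠ i := by
    simpa [Set.subset_def] using hnc
  simpa using card_le_card_sub_one_sq hA.injective hC' hnc'
end

section
/- Let q be an odd prime power, let X be a Peisert-type graph of type (m,q), and let C be a maximum clique of X (equivalently, a clique of size q). Then the balanced characteristic vector v_C = 1_C − (q/q²)·𝟙 = 1_C − (1/q)·𝟙 ∈ ℚ^(F_{q²}) is an eigenvector of the adjacency matrix M of X with eigenvalue q − m, i.e., M v_C = (q − m) v_C. -/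
/-!
Write `q = |K|`. As `S` is a union of cosets of `K*` and `C - C ⊆ S ∪ {0}`, for every
direction `d ∉ S ∪ {0}` the `q` lines `y + d K` (`y ∈ C`) are pairwise disjoint, so they tile
`F`. Hence for `x ∉ C` the map `(y, k) ↦ (x - y) k` is a bijection from
`{y ∈ C | x - y ∉ S} × K*` onto `F* \ S`, so `x` has `q + 1 - m` non-neighbours and `m - 1`
neighbours in `C`. A vertex of `C` has `q - 1` neighbours in `C` and `X` is `m (q - 1)`-regular,
which gives the eigenvalue equation.
-/

open Finset Matrix

namespace SimpleGraph

variable {V : Type*} [DecidableEq V] {G : SimpleGraph V} [DecidableRel G.Adj]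

theorem IsClique.filter_adj_eq_erase {C : Finset V} (hC : G.IsClique (C : Set V)) {x : V}
    (hx : x ∈ C) : C.filter (G.Adj x) = C.erase x := by
  rw [← filter_ne']
  exact filter_congr fun y hy => ⟨fun h => h.ne.symm, fun h => hC hx hy h.symm⟩

theorem adjMatrix_mulVec_ite_mem_sub_apply [Fintype V] {α : Type*} [Ring α] (C : Finset V)
    (a : α) (x : V) :
    (G.adjMatrix α *ᵥ fun y => (if y ∈ C then 1 else 0) - a) x =
      #(C.filter (G.Adj x)) - G.degree x * a := by
  have hfilter : (G.neighborFinset x).filter (· ∈ C) = C.filter (G.Adj x) := by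
    ext y
    simp only [mem_filter, mem_neighborFinset]
    exact and_comm
  rw [adjMatrix_mulVec_apply, sum_sub_distrib, sum_boole, hfilter, sum_const,
    card_neighborFinset_eq_degree, nsmul_eq_mul]

theorem degree_eq_card_of_adj_iff_sub_mem {A : Type*} [AddCommGroup A] [Fintype A] [DecidableEq A]
    {X : SimpleGraph A} [DecidableRel X.Adj] {S : Finset A}
    (hX : ∀ x y, X.Adj x y ↔ x - y ∈ S) (x : A) : X.degree x = #S := by
  rw [← card_neighborFinset_eq_degree]
  exact card_nbij' (x - ·) (x - ·) (fun y hy => by simpa [hX] using hy)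
    (fun z hz => by simpa [hX] using hz) (fun y _ => sub_sub_cancel x y)
    (fun z _ => sub_sub_cancel x z)

end SimpleGraph

section CosetUnion

variable {F : Type*} [Field F] {K : Subfield F} {S : Finset F}

theorem mul_notMem_of_notMem (hSK : ∀ s ∈ S, ∀ k ∈ K, k ≠ 0 → s * k ∈ S) {d k : F}
    (hd : d ∉ S) (hk : k ∈ K) (hk0 : k ≠ 0) : d * k ∉ S := fun h => hd <| by
  simpa [mul_inv_cancel_right₀ hk0] using hSK _ h _ (K.inv_mem hk) (inv_ne_zero hk0)

variable {C : Finset F}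

theorem injective_add_mul_of_notMem (hSK : ∀ s ∈ S, ∀ k ∈ K, k ≠ 0 → s * k ∈ S)
    (hC : (C : Set F).Pairwise fun y y' => y - y' ∈ S) {d : F} (hd0 : d ≠ 0) (hd : d ∉ S) :
    Function.Injective fun p : C × K => (p.1 : F) + d * p.2 := by
  rintro ⟨⟨y, hy⟩, ⟨k, hk⟩⟩ ⟨⟨y', hy'⟩, ⟨k', hk'⟩⟩ h
  simp only at h
  obtain rfl | hkk := eq_or_ne k k'
  · obtain rfl : y = y' := by simpa using h
    rfl
  have hkk' : k' - k ≠ 0 := sub_ne_zero.2 hkk.symm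
  have hyy : y - y' = d * (k' - k) := by linear_combination h
  have hne : y ≠ y' := fun h' => mul_ne_zero hd0 hkk' (by rw [← hyy, h', sub_self])
  exact absurd (hyy ▸ hC hy hy' hne) (mul_notMem_of_notMem hSK hd (K.sub_mem hk' hk) hkk')

theorem exists_eq_add_mul_of_notMem [Fintype F]
    (hSK : ∀ s ∈ S, ∀ k ∈ K, k ≠ 0 → s * k ∈ S)
    (hC : (C : Set F).Pairwise fun y y' => y - y' ∈ S) (hcard : #C * Nat.card K = Fintype.card F)
    {d : F} (hd0 : d ≠ 0) (hd : d ∉ S) (x : F) : ∃ y ∈ C, ∃ k ∈ K, x = y + d * k := by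
  have hbij := (injective_add_mul_of_notMem hSK hC hd0 hd).bijective_of_nat_card_le
    (by simp [Nat.card_prod, hcard])
  obtain ⟨⟨⟨y, hy⟩, ⟨k, hk⟩⟩, h⟩ := hbij.2 x
  exact ⟨y, hy, k, hk, h.symm⟩

theorem card_filter_sub_notMem_mul_card_units [Fintype F] [DecidableEq F]
    (hSK : ∀ s ∈ S, ∀ k ∈ K, k ≠ 0 → s * k ∈ S)
    (hC : (C : Set F).Pairwise fun y y' => y - y' ∈ S) (hcard : #C * Nat.card K = Fintype.card F)
    {x : F} (hx : x ∉ C) : #(C.filter fun y => x - y ∉ S) * Nat.card Kˣ = #(Sᶜ.erase 0) := by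
  have hxy : ∀ y ∈ C, x - y ≠ 0 := fun y hy h => hx (sub_eq_zero.1 h ▸ hy)
  let f : (C.filter fun y => x - y ∉ S) × Kˣ → Sᶜ.erase 0 := fun p =>
    ⟨(x - p.1) * (p.2 : K), by
      obtain ⟨⟨y, hy⟩, u⟩ := p
      rw [mem_filter] at hy
      simp only [mem_erase, mem_compl]
      exact ⟨mul_ne_zero (hxy y hy.1) (by simp),
        mul_notMem_of_notMem hSK hy.2 (u : K).2 (by simp)⟩⟩
  have hinj : Function.Injective f := by
    rintro ⟨⟨y, hy⟩, u⟩ ⟨⟨y', hy'⟩, u'⟩ h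
    rw [mem_filter] at hy hy'
    have h' : (x - y) * (u : K) = (x - y') * (u' : K) := congrArg Subtype.val h
    obtain rfl : y = y' := by
      by_contra hne
      have hyy : y' - y = (x - y') * ((u' : K) / (u : K) - 1) := by
        field_simp
        linear_combination h'
      refine mul_notMem_of_notMem hSK hy'.2 (K.sub_mem (K.div_mem (u' : K).2 (u : K).2) K.one_mem)
        ?_ (hyy ▸ hC hy'.1 hy.1 (Ne.symm hne))
      exact right_ne_zero_of_mul (hyy ▸ sub_ne_zero.2 (Ne.symm hne))
    have hu : u = u' := Units.ext <| Subtype.ext <| mul_left_cancel₀ (hxy y hy.1) h'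
    rw [hu]
  have hsurj : Function.Surjective f := by
    rintro ⟨d, hd⟩
    simp only [mem_erase, mem_compl] at hd
    obtain ⟨y, hy, k, hk, rfl⟩ := exists_eq_add_mul_of_notMem hSK hC hcard hd.1 hd.2 x
    have hk0 : k ≠ 0 := by
      rintro rfl
      simp [hy] at hx
    have hkK : (⟨k, hk⟩ : K) ≠ 0 := fun h => hk0 (congrArg Subtype.val h)
    refine ⟨(⟨y, mem_filter.2 ⟨hy, ?_⟩⟩, (Units.mk0 _ hkK)⁻¹), Subtype.ext ?_⟩
    · simpa using mul_notMem_of_notMem hSK hd.2 hk hk0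
    · simp [f, hk0]
  simpa only [Nat.card_prod, Nat.card_eq_finsetCard] using
    Nat.card_eq_of_bijective f ⟨hinj, hsurj⟩

end CosetUnion

section PeisertConnectionSet

variable {F : Type*} [Field F] {K : Subfield F} {S : Finset F} {ι : Type*} {c : ι → F}

def cosetUnion (K : Subfield F) (c : ι → F) : Set F :=
  ⋃ i, {x : F | ∃ k ∈ (K : Set F), k ≠ 0 ∧ x = c i * k}

theorem mem_iff_of_coe_eq_cosetUnion (hS : (S : Set F) = cosetUnion K c) (x : F) :
    x ∈ S ↔ ∃ i, ∃ k ∈ K, k ≠ 0 ∧ x = c i * k := by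
  rw [← mem_coe, hS, cosetUnion]
  simp

theorem zero_notMem_of_coe_eq_cosetUnion (hc : ∀ i, c i ≠ 0)
    (hS : (S : Set F) = cosetUnion K c) : (0 : F) ∉ S := by
  rw [mem_iff_of_coe_eq_cosetUnion hS]
  rintro ⟨i, k, -, hk0, h⟩
  exact mul_ne_zero (hc i) hk0 h.symm

theorem mul_mem_of_coe_eq_cosetUnion (hS : (S : Set F) = cosetUnion K c) :
    ∀ s ∈ S, ∀ k ∈ K, k ≠ 0 → s * k ∈ S := by
  simp only [mem_iff_of_coe_eq_cosetUnion hS]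
  rintro _ ⟨i, k, hk, hk0, rfl⟩ k' hk' hk0'
  exact ⟨i, k * k', K.mul_mem hk hk', mul_ne_zero hk0 hk0', mul_assoc _ _ _⟩

theorem card_eq_of_coe_eq_cosetUnion [Fintype ι] (hc : ∀ i, c i ≠ 0)
    (hdistinct : ∀ i j, i ≠ j → c i / c j ∉ K) (hS : (S : Set F) = cosetUnion K c) :
    #S = Fintype.card ι * Nat.card Kˣ := by
  let f : ι × Kˣ → S := fun p => ⟨c p.1 * (p.2 : K),
    (mem_iff_of_coe_eq_cosetUnion hS _).2 ⟨p.1, _, (p.2 : K).2, by simp, rfl⟩⟩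
  have hinj : Function.Injective f := by
    rintro ⟨i, u⟩ ⟨j, u'⟩ h
    have h' : c i * (u : K) = c j * (u' : K) := congrArg Subtype.val h
    obtain rfl : i = j := by
      by_contra hij
      refine hdistinct i j hij ?_
      have : c i / c j = (u' : K) / (u : K) := by
        rw [div_eq_div_iff (hc j) (by simp)]
        linear_combination h'
      exact this ▸ K.div_mem (u' : K).2 (u : K).2
    have hu : u = u' := Units.ext <| Subtype.ext <| mul_left_cancel₀ (hc i) h'
    rw [hu]
  have hsurj : Function.Surjective f := by
    rintro ⟨x, hx⟩
    obtain ⟨i, k, hk, hk0, rfl⟩ := (mem_iff_of_coe_eq_cosetUnion hS x).1 hx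
    have hkK : (⟨k, hk⟩ : K) ≠ 0 := fun h => hk0 (congrArg Subtype.val h)
    exact ⟨(i, Units.mk0 _ hkK), rfl⟩
  rw [← Nat.card_eq_finsetCard, ← Nat.card_eq_of_bijective f ⟨hinj, hsurj⟩, Nat.card_prod,
    Nat.card_eq_fintype_card (α := ι)]

theorem card_filter_sub_mem_add_one [Fintype F] [DecidableEq F] [Fintype ι] {C : Finset F}
    (hc : ∀ i, c i ≠ 0) (hdistinct : ∀ i j, i ≠ j → c i / c j ∉ K)
    (hS : (S : Set F) = cosetUnion K c)
    (hC : (C : Set F).Pairwise fun y y' => y - y' ∈ S) (hCcard : #C = Nat.card K)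
    (hF : Fintype.card F = Nat.card K ^ 2) {x : F} (hx : x ∉ C) :
    #(C.filter fun y => x - y ∈ S) + 1 = Fintype.card ι := by
  have hnon := card_filter_sub_notMem_mul_card_units (mul_mem_of_coe_eq_cosetUnion hS) hC
    (by rw [hCcard, hF, sq]) hx
  have hsplit := C.card_filter_add_card_filter_not (fun y => x - y ∈ S)
  have hcompl : #(Sᶜ.erase 0) + 1 + #S = Fintype.card F := by
    rw [card_erase_add_one (mem_compl.2 (zero_notMem_of_coe_eq_cosetUnion hc hS)),
      card_compl_add_card]
  rw [card_eq_of_coe_eq_cosetUnion hc hdistinct hS, hF, Nat.card_eq_card_units_add_one K] at hcompl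
  rw [hCcard, Nat.card_eq_card_units_add_one K] at hsplit
  refine Nat.eq_of_mul_eq_mul_right (Nat.card_pos (α := Kˣ)) ?_
  qify at hnon hsplit hcompl ⊢
  linear_combination (Nat.card Kˣ : ℚ) * hsplit - hnon - hcompl

end PeisertConnectionSet

theorem stmt_14_general
    (q m : ℕ)
    (F : Type) [Field F] [Fintype F] [DecidableEq F]
    (hF : Fintype.card F = q ^ 2)
    (K : Subfield F) (hK : Nat.card K = q)
    (c : Fin m → F) (hc : ∀ i, c i ≠ 0)
    (hdistinct : ∀ i j : Fin m, i ≠ j → c i / c j ∉ K)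
    (S : Set F)
    (hS : S = ⋃ i : Fin m, {x : F | ∃ k ∈ (K : Set F), k ≠ 0 ∧ x = c i * k})
    (X : SimpleGraph F) [DecidableRel X.Adj]
    (hX : ∀ x y : F, X.Adj x y ↔ x ≠ y ∧ x - y ∈ S)
    (C : Finset F) (hC : X.IsNClique q C)
    (M : Matrix F F ℚ)
    (hM : ∀ x y : F, M x y = if X.Adj x y then 1 else 0)
    (v : F → ℚ)
    (hv : v = fun x => (if x ∈ C then (1 : ℚ) else 0) - 1 / (q : ℚ)) :
    M.mulVec v = ((q : ℚ) - (m : ℚ)) • v := by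
  lift S to Finset F using S.toFinite
  have hS0 := zero_notMem_of_coe_eq_cosetUnion hc hS
  have hadj (x y : F) : X.Adj x y ↔ x - y ∈ S :=
    (hX x y).trans <| and_iff_right_of_imp fun h hxy => hS0 (by rwa [hxy, sub_self] at h)
  have hdeg (x : F) : X.degree x = m * Nat.card Kˣ := by
    rw [X.degree_eq_card_of_adj_iff_sub_mem hadj, card_eq_of_coe_eq_cosetUnion hc hdistinct hS,
      Fintype.card_fin]
  have hq : q = Nat.card Kˣ + 1 := hK ▸ Nat.card_eq_card_units_add_one K
  obtain rfl : M = X.adjMatrix ℚ := Matrix.ext fun x y => by rw [hM, SimpleGraph.adjMatrix_apply]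
  subst hv
  funext x
  rw [SimpleGraph.adjMatrix_mulVec_ite_mem_sub_apply, hdeg, Pi.smul_apply, smul_eq_mul]
  by_cases hx : x ∈ C
  · rw [hC.isClique.filter_adj_eq_erase hx, card_erase_of_mem hx, hC.card_eq, if_pos hx, hq]
    push_cast
    field_simp
    ring
  · have hCS : (C : Set F).Pairwise fun y y' => y - y' ∈ S :=
      hC.isClique.mono' fun y y' => (hadj y y').1
    have hb := card_filter_sub_mem_add_one hc hdistinct hS hCS (hC.card_eq.trans hK.symm)
      (hK ▸ hF) hx
    rw [Fintype.card_fin] at hb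
    qify at hb
    rw [filter_congr fun y _ => hadj x y, if_neg hx, hq]
    push_cast
    field_simp
    linear_combination (Nat.card Kˣ + 1 : ℚ) * hb

/-- The balanced characteristic vector of a maximum clique (a clique of size q) in a
Peisert-type graph of type (m,q) is an eigenvector of the adjacency matrix with
eigenvalue q − m. -/
theorem stmt_14
    (q m : ℕ) (hqodd : Odd q) (hqpp : IsPrimePow q) (hm : m ≤ q)
    (F : Type) [Field F] [Fintype F] [DecidableEq F]
    (hF : Fintype.card F = q ^ 2)
    (K : Subfield F) (hK : Nat.card K = q)
    (c : Fin m → F) (hc : ∀ i, c i ≠ 0)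
    (hdistinct : ∀ i j : Fin m, i ≠ j → c i / c j ∉ K)
    (S : Set F)
    (hS : S = ⋃ i : Fin m, {x : F | ∃ k ∈ (K : Set F), k ≠ 0 ∧ x = c i * k})
    (hKS : ∀ k : F, k ∈ K → k ≠ 0 → k ∈ S)
    (X : SimpleGraph F) [DecidableRel X.Adj]
    (hX : ∀ x y : F, X.Adj x y ↔ x ≠ y ∧ x - y ∈ S)
    (C : Finset F) (hC : X.IsNClique q C)
    (M : Matrix F F ℚ)
    (hM : ∀ x y : F, M x y = if X.Adj x y then 1 else 0)
    (v : F → ℚ)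
    (hv : v = fun x => (if x ∈ C then (1 : ℚ) else 0) - 1 / (q : ℚ)) :
    M.mulVec v = ((q : ℚ) - (m : ℚ)) • v :=
  stmt_14_general q m F hF K hK c hc hdistinct S hS X hX C hC M hM v hv
end
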